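/- arXiv:2303.16879 — 10 statements merged into one kernel-verified Lean document; each statement's English description precedes it below -/
import Mathlib

section
/- Let q ≥ 2, let C ⊆ ℤ_qⁿ be a nonzero q-ary linear code, and let 1 ≤ P < ∞ be a real number. Then there exist x, y ∈ C such that ‖σ(x) − σ(y)‖_P = d_P(C), i.e., the L_P norm in ℤⁿ of the difference of the standard representative lifts of x and y equals the P-Lee minimum distance of C. -/
lemma double_val_abs (q : ℕ) (hq : 2 ≤ q) (a : ZMod q) :
    |(((a + a).val : ℝ)) - ((a.val : ℝ))| = ((min a.val (q - a.val) : ℕ) : ℝ) := by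
  haveI : NeZero q := ⟨by omega⟩
  have hv : a.val < q := ZMod.val_lt a
  have hadd : (a + a).val = (a.val + a.val) % q := ZMod.val_add a a
  rcases lt_or_ge (a.val + a.val) q with h | h
  · rw [hadd, Nat.mod_eq_of_lt h]
    have hmin : min a.val (q - a.val) = a.val := by omega
    rw [hmin]
    push_cast
    rw [abs_of_nonneg] <;> ring_nf
    positivity
  · have hmod : (a.val + a.val) % q = a.val + a.val - q := by
      rw [Nat.mod_eq_sub_mod h, Nat.mod_eq_of_lt (by omega)]
    have hmin : min a.val (q - a.val) = q - a.val := by omega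
    rw [hadd, hmod, hmin, Nat.cast_sub h, Nat.cast_sub hv.le]
    push_cast
    rw [abs_of_nonpos (by linarith [(Nat.cast_le (α := ℝ)).2 h, (Nat.cast_lt (α := ℝ)).2 hv])]
    ring

/-- For a nonzero `q`-ary linear code `C` and `1 ≤ P < ∞`, there exist
codewords `x, y ∈ C` whose standard representative lifts realize, in the `L_P` norm of
`ℤⁿ`, the `P`-Lee minimum distance of `C`. -/
theorem exists_codewords_lift_realizing_lee_min_distance
    (n q : ℕ) (hq : 2 ≤ q) (C : Submodule (ZMod q) (Fin n → ZMod q)) (hC : C ≠ ⊥)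
    (P : ℝ) (hP : 1 ≤ P) :
    ∃ x ∈ C, ∃ y ∈ C,
      (∑ i, |(((x i).val : ℝ)) - (((y i).val : ℝ))| ^ P) ^ (1 / P)
        = sInf {d : ℝ | ∃ u ∈ C, ∃ w ∈ C, u ≠ w ∧
            d = (∑ i, ((min ((u i - w i).val) (q - (u i - w i).val) : ℕ) : ℝ) ^ P) ^ (1 / P)} := by
  haveI : NeZero q := ⟨by omega⟩
  set S : Set ℝ := {d : ℝ | ∃ u ∈ C, ∃ w ∈ C, u ≠ w ∧
      d = (∑ i, ((min ((u i - w i).val) (q - (u i - w i).val) : ℕ) : ℝ) ^ P) ^ (1 / P)} with hS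
  -- S is nonempty
  obtain ⟨c, hcC, hc0⟩ := Submodule.exists_mem_ne_zero_of_ne_bot hC
  have hne : S.Nonempty := ⟨_, c, hcC, 0, C.zero_mem, hc0, rfl⟩
  -- S is finite
  have hfin : S.Finite := by
    have : S ⊆ Set.range (fun p : (Fin n → ZMod q) × (Fin n → ZMod q) =>
        (∑ i, ((min ((p.1 i - p.2 i).val) (q - (p.1 i - p.2 i).val) : ℕ) : ℝ) ^ P) ^ (1 / P)) := by
      rintro d ⟨u, -, w, -, -, rfl⟩
      exact ⟨(u, w), rfl⟩
    exact (Set.finite_range _).subset this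
  obtain ⟨u, huC, w, hwC, -, hval⟩ := hne.csInf_mem hfin
  refine ⟨(u - w) + (u - w), C.add_mem (C.sub_mem huC hwC) (C.sub_mem huC hwC),
    u - w, C.sub_mem huC hwC, ?_⟩
  rw [hval]
  congr 1
  refine Finset.sum_congr rfl fun i _ => ?_
  have := double_val_abs q hq (u i - w i)
  have hpi : ((u - w) + (u - w)) i = (u i - w i) + (u i - w i) := rfl
  have hpi2 : (u - w) i = u i - w i := rfl
  rw [hpi, hpi2, this]
end

section
/- Let q ≥ 2, a ≥ 1, and let {0} ⊊ C_a ⊆ C_{a−1} ⊆ … ⊆ C_1 ⊆ ℤ_qⁿ be a chain of nested q-ary linear codes with C_a nonzero. Let Γ = q^aℤⁿ + q^{a−1}σ(C_1) + q^{a−2}σ(C_2) + … + q·σ(C_{a−1}) + σ(C_a) ⊆ ℤⁿ be the Construction D̄ set. Then for every real 1 ≤ P < ∞, the L_P minimum distance of Γ satisfies d_P(Γ) = min{q^a, q^{a−1}·d_P(C_1), q^{a−2}·d_P(C_2), …, d_P(C_a)}, where d_P(C_ℓ) is the P-Lee minimum distance of C_ℓ. -/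
/-- The `P`-Lee minimum distance of a code `C ⊆ (ℤ/q)ⁿ`. -/
noncomputable def codeDistP (q n : ℕ) (P : ℝ) (C : Set (Fin n → ZMod q)) : ℝ :=
  sInf {d : ℝ | ∃ x ∈ C, ∃ y ∈ C, x ≠ y ∧
    d = (∑ i, ((min ((x i - y i).val) (q - (x i - y i).val) : ℕ) : ℝ) ^ P) ^ (1 / P)}

/-- The `L_P` minimum distance of a subset of `ℤⁿ`. -/
noncomputable def lpDistInt (n : ℕ) (P : ℝ) (S : Set (Fin n → ℤ)) : ℝ :=
  sInf {d : ℝ | ∃ x ∈ S, ∃ y ∈ S, x ≠ y ∧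
    d = (∑ i, |((x i - y i : ℤ) : ℝ)| ^ P) ^ (1 / P)}

/-- The Construction D̄ set `Γ = q^a ℤⁿ + q^{a-1} σ(C 1) + ⋯ + σ(C a)`. -/
def gammaDbar (q a n : ℕ) (C : ℕ → Submodule (ZMod q) (Fin n → ZMod q)) :
    Set (Fin n → ℤ) :=
  {v | ∃ z : Fin n → ℤ, ∃ c : ℕ → Fin n → ZMod q,
    (∀ ℓ, 1 ≤ ℓ → ℓ ≤ a → c ℓ ∈ C ℓ) ∧
    v = fun t => (q : ℤ) ^ a * z t
      + ∑ ℓ ∈ Finset.Icc 1 a, (q : ℤ) ^ (a - ℓ) * (((c ℓ) t).val : ℤ)}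

lemma lee_le_abs (q : ℕ) (hq : 0 < q) (v : ZMod q) (e : ℤ)
    (he : (q:ℤ) ∣ e - v.val) : ((min v.val (q - v.val) : ℕ) : ℤ) ≤ |e| := by
  haveI : NeZero q := ⟨hq.ne'⟩
  have hv : v.val < q := ZMod.val_lt v
  by_contra h
  push_neg at h
  have hm1 : ((min v.val (q - v.val) : ℕ) : ℤ) ≤ (v.val : ℤ) := by
    have := Nat.min_le_left v.val (q - v.val); omega
  have hm2 : ((min v.val (q - v.val) : ℕ) : ℤ) ≤ (q : ℤ) - v.val := by
    have := Nat.min_le_right v.val (q - v.val); omega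
  have h1 : e < (v.val : ℤ) := lt_of_le_of_lt (le_abs_self e) (lt_of_lt_of_le h hm1)
  have h2 : (v.val : ℤ) - q < e := by
    have h3 : -((q:ℤ) - v.val) < e := by
      have := lt_of_lt_of_le h hm2
      linarith [neg_abs_le e]
    linarith
  have h0 : e - (v.val:ℤ) = 0 :=
    Int.eq_zero_of_abs_lt_dvd he (abs_lt.mpr ⟨by omega, by omega⟩)
  have he' : e = (v.val : ℤ) := by omega
  rw [he', abs_of_nonneg (by positivity)] at h
  omega

lemma abs_val_two_sub (q : ℕ) (hq : 0 < q) (v : ZMod q) :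
    |((v+v).val : ℤ) - (v.val : ℤ)| = ((min v.val (q - v.val) : ℕ) : ℤ) := by
  haveI : NeZero q := ⟨hq.ne'⟩
  have hv : v.val < q := ZMod.val_lt v
  have hadd : (v+v).val = (v.val + v.val) % q := ZMod.val_add v v
  rcases Nat.lt_or_ge (v.val + v.val) q with h | h
  · rw [hadd, Nat.mod_eq_of_lt h]
    have hmin : min v.val (q - v.val) = v.val := by omega
    rw [hmin, abs_of_nonneg (by push_cast; omega)]
    push_cast; ring
  · have h2 : (v.val + v.val) % q = v.val + v.val - q := by
      rw [Nat.mod_eq_sub_mod h, Nat.mod_eq_of_lt (by omega)]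
    rw [hadd, h2]
    have hmin : min v.val (q - v.val) = q - v.val := by omega
    rw [hmin, abs_of_nonpos (by push_cast [Nat.cast_sub h]; omega)]
    push_cast [Nat.cast_sub h, Nat.cast_sub hv.le]; ring

lemma rpow_rpow_inv {P : ℝ} (hP : P ≠ 0) (X : ℝ) (hX : 0 ≤ X) : (X ^ P) ^ (1/P) = X := by
  rw [← Real.rpow_mul hX, mul_one_div_cancel hP, Real.rpow_one]

lemma rpow_sum_scale {n : ℕ} {P : ℝ} (hP : P ≠ 0) (c : ℝ) (hc : 0 ≤ c)
    (w : Fin n → ℝ) (hw : ∀ i, 0 ≤ w i) :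
    (∑ i, (c * w i) ^ P) ^ (1/P) = c * (∑ i, w i ^ P) ^ (1/P) := by
  have h1 : ∀ i ∈ Finset.univ, (c * w i) ^ P = c ^ P * (w i) ^ P := fun i _ =>
    Real.mul_rpow hc (hw i)
  rw [Finset.sum_congr rfl h1, ← Finset.mul_sum,
    Real.mul_rpow (Real.rpow_nonneg hc P) (Finset.sum_nonneg fun i _ => Real.rpow_nonneg (hw i) P),
    rpow_rpow_inv hP c hc]

lemma rpow_sum_mono {n : ℕ} {P : ℝ} (hP : 1 ≤ P) (u v : Fin n → ℝ)
    (hu : ∀ i, 0 ≤ u i) (huv : ∀ i, u i ≤ v i) :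
    (∑ i, u i ^ P) ^ (1/P) ≤ (∑ i, v i ^ P) ^ (1/P) := by
  apply Real.rpow_le_rpow (Finset.sum_nonneg fun i _ => Real.rpow_nonneg (hu i) P)
    (Finset.sum_le_sum fun i _ => Real.rpow_le_rpow (hu i) (huv i) (by linarith))
    (by positivity)

lemma rpow_sum_single_le {n : ℕ} {P : ℝ} (hP : 1 ≤ P) (v : Fin n → ℝ)
    (hv : ∀ i, 0 ≤ v i) (i₀ : Fin n) (b : ℝ) (hb : 0 ≤ b) (h : b ≤ v i₀) :
    b ≤ (∑ i, v i ^ P) ^ (1/P) := by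
  have hPne : P ≠ 0 := by positivity
  calc b = (b ^ P) ^ (1/P) := (rpow_rpow_inv hPne b hb).symm
    _ ≤ ((v i₀) ^ P) ^ (1/P) :=
        Real.rpow_le_rpow (Real.rpow_nonneg hb P) (Real.rpow_le_rpow hb h (by linarith)) (by positivity)
    _ ≤ _ := Real.rpow_le_rpow (Real.rpow_nonneg (hv i₀) P)
        (Finset.single_le_sum (fun i _ => Real.rpow_nonneg (hv i) P) (Finset.mem_univ i₀))
        (by positivity)

noncomputable def leeW (q n : ℕ) (P : ℝ) (m : Fin n → ZMod q) : ℝ :=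
  (∑ i, ((min ((m i).val) (q - (m i).val) : ℕ) : ℝ) ^ P) ^ (1 / P)

lemma leeW_nonneg (q n : ℕ) (P : ℝ) (m : Fin n → ZMod q) : 0 ≤ leeW q n P m :=
  Real.rpow_nonneg (Finset.sum_nonneg fun i _ => Real.rpow_nonneg (by positivity) P) _

lemma codeDist_set_bdd (q n : ℕ) (P : ℝ) (C : Set (Fin n → ZMod q)) :
    BddBelow {d : ℝ | ∃ x ∈ C, ∃ y ∈ C, x ≠ y ∧
      d = (∑ i, ((min ((x i - y i).val) (q - (x i - y i).val) : ℕ) : ℝ) ^ P) ^ (1 / P)} := by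
  refine ⟨0, fun d hd => ?_⟩
  obtain ⟨x, _, y, _, _, rfl⟩ := hd
  exact Real.rpow_nonneg (Finset.sum_nonneg fun i _ => Real.rpow_nonneg (by positivity) P) _

lemma codeDistP_le (q n : ℕ) (P : ℝ) (C : Submodule (ZMod q) (Fin n → ZMod q))
    {m : Fin n → ZMod q} (hm : m ∈ C) (hm0 : m ≠ 0) :
    codeDistP q n P (C : Set (Fin n → ZMod q)) ≤ leeW q n P m := by
  apply csInf_le (codeDist_set_bdd q n P _)
  exact ⟨m, hm, 0, C.zero_mem, hm0, by simp [leeW]⟩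

lemma codeDistP_exists (q n : ℕ) [NeZero q] (P : ℝ)
    (C : Submodule (ZMod q) (Fin n → ZMod q)) (hC : C ≠ ⊥) :
    ∃ m ∈ C, m ≠ 0 ∧ codeDistP q n P (C : Set (Fin n → ZMod q)) = leeW q n P m := by
  set S := {d : ℝ | ∃ x ∈ (C : Set (Fin n → ZMod q)), ∃ y ∈ (C : Set (Fin n → ZMod q)), x ≠ y ∧
      d = (∑ i, ((min ((x i - y i).val) (q - (x i - y i).val) : ℕ) : ℝ) ^ P) ^ (1 / P)} with hS
  obtain ⟨m₀, hm₀C, hm₀⟩ := (Submodule.ne_bot_iff C).mp hC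
  have hSne : S.Nonempty := ⟨_, m₀, hm₀C, 0, C.zero_mem, hm₀, rfl⟩
  have hSfin : S.Finite := by
    apply Set.Finite.subset (Set.finite_range
      (fun p : (Fin n → ZMod q) × (Fin n → ZMod q) =>
        (∑ i, ((min ((p.1 i - p.2 i).val) (q - (p.1 i - p.2 i).val) : ℕ) : ℝ) ^ P) ^ (1 / P)))
    rintro d ⟨x, _, y, _, _, rfl⟩
    exact ⟨(x, y), rfl⟩
  obtain ⟨x, hx, y, hy, hxy, hval⟩ := hSne.csInf_mem hSfin
  refine ⟨x - y, C.sub_mem hx hy, sub_ne_zero.mpr hxy, ?_⟩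
  rw [codeDistP, ← hS, hval, leeW]
  rfl

/-- For a chain of nested `q`-ary codes `{0} ⊊ C_a ⊆ ⋯ ⊆ C_1 ⊆ ℤ_qⁿ`
and `1 ≤ P < ∞`, the `L_P` minimum distance of the Construction D̄ set is
`min {q^a, q^{a-1} d_P(C_1), …, d_P(C_a)}`. -/
theorem lpDist_gammaDbar (q a n : ℕ) (hq : 2 ≤ q) (ha : 1 ≤ a)
    (C : ℕ → Submodule (ZMod q) (Fin n → ZMod q))
    (hnested : ∀ ℓ, 1 ≤ ℓ → ℓ < a → C (ℓ + 1) ≤ C ℓ)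
    (hCa : C a ≠ ⊥) (P : ℝ) (hP : 1 ≤ P) :
    lpDistInt n P (gammaDbar q a n C)
      = sInf (insert ((q : ℝ) ^ a)
          {d : ℝ | ∃ ℓ ∈ Finset.Icc 1 a,
            d = (q : ℝ) ^ (a - ℓ) * codeDistP q n P (C ℓ : Set (Fin n → ZMod q))}) := by
  haveI : NeZero q := ⟨by omega⟩
  have hq0 : 0 < q := by omega
  have hP0 : (0:ℝ) < P := by linarith
  have hPne : P ≠ 0 := ne_of_gt hP0
  -- the chain
  have hchain : ∀ ℓ, 1 ≤ ℓ → ℓ ≤ a → C a ≤ C ℓ := by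
    have key : ∀ k ℓ, 1 ≤ ℓ → ℓ + k = a → C a ≤ C ℓ := by
      intro k
      induction k with
      | zero => intro ℓ h1 h2; simp only [Nat.add_zero] at h2; subst h2; exact le_rfl
      | succ k ih =>
        intro ℓ h1 h2
        exact le_trans (ih (ℓ+1) (by omega) (by omega)) (hnested ℓ h1 (by omega))
    intro ℓ h1 h2
    exact key (a - ℓ) ℓ h1 (by omega)
  obtain ⟨m₀, hm₀C, hm₀⟩ := (Submodule.ne_bot_iff (C a)).mp hCa
  obtain ⟨i₀, hi₀⟩ : ∃ i, m₀ i ≠ 0 := by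
    by_contra h
    push_neg at h
    exact hm₀ (funext h)
  -- notation
  set Γ := gammaDbar q a n C with hΓdef
  set A := {d : ℝ | ∃ x ∈ Γ, ∃ y ∈ Γ, x ≠ y ∧
    d = (∑ i, |((x i - y i : ℤ) : ℝ)| ^ P) ^ (1 / P)} with hAdef
  set B := insert ((q : ℝ) ^ a) {d : ℝ | ∃ ℓ ∈ Finset.Icc 1 a,
    d = (q : ℝ) ^ (a - ℓ) * codeDistP q n P (C ℓ : Set (Fin n → ZMod q))} with hBdef
  show sInf A = sInf B
  -- basic facts about A and B
  have hAnonneg : ∀ d ∈ A, (0:ℝ) ≤ d := by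
    rintro d ⟨x, _, y, _, _, rfl⟩
    exact Real.rpow_nonneg (Finset.sum_nonneg fun i _ => Real.rpow_nonneg (abs_nonneg _) P) _
  have hAbdd : BddBelow A := ⟨0, hAnonneg⟩
  have hBfin : B.Finite := by
    apply Set.Finite.insert
    apply Set.Finite.subset ((Finset.Icc 1 a).finite_toSet.image
      (fun ℓ => (q : ℝ) ^ (a - ℓ) * codeDistP q n P (C ℓ : Set (Fin n → ZMod q))))
    rintro d ⟨ℓ, hℓ, rfl⟩
    exact ⟨ℓ, hℓ, rfl⟩
  have hBne : B.Nonempty := ⟨_, Set.mem_insert _ _⟩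
  have hBbdd : BddBelow B := hBfin.bddBelow
  -- membership lemmas for Γ
  have hzeroΓ : (0 : Fin n → ℤ) ∈ Γ :=
    ⟨0, 0, fun ℓ _ _ => Submodule.zero_mem _, by funext t; simp⟩
  have hqaΓ : (fun t => if t = i₀ then (q:ℤ)^a else 0) ∈ Γ := by
    refine ⟨fun t => if t = i₀ then 1 else 0, 0, fun ℓ _ _ => Submodule.zero_mem _, ?_⟩
    funext t; by_cases h : t = i₀ <;> simp [h]
  have hpointΓ : ∀ ℓ ∈ Finset.Icc 1 a, ∀ w : Fin n → ZMod q, w ∈ C ℓ →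
      (fun t => (q:ℤ)^(a-ℓ) * ((w t).val : ℤ)) ∈ Γ := by
    intro ℓ hℓ w hw
    refine ⟨0, fun j => if j = ℓ then w else 0, ?_, ?_⟩
    · intro j h1 h2
      by_cases hj : j = ℓ
      · subst hj; simpa using hw
      · simp [hj]
    · funext t
      rw [Finset.sum_eq_single_of_mem ℓ hℓ (fun j _ hne => by simp [hne])]
      simp
  -- the element q^a of A
  have hqaA : ((q:ℝ)^a) ∈ A := by
    refine ⟨_, hqaΓ, 0, hzeroΓ, ?_, ?_⟩
    · intro h
      have h2 := congrFun h i₀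
      simp only [if_pos rfl, Pi.zero_apply] at h2
      exact (by positivity : ((q:ℤ))^a ≠ 0) h2
    · rw [Finset.sum_eq_single i₀ (fun i _ hne => by
        simp [hne, Real.zero_rpow hPne]) (fun h => absurd (Finset.mem_univ i₀) h)]
      simp only [Pi.zero_apply, if_pos rfl, sub_zero]
      rw [abs_of_nonneg (by positivity)]
      push_cast
      rw [rpow_rpow_inv hPne _ (by positivity)]
  have hAne : A.Nonempty := ⟨_, hqaA⟩
  -- for each level, the value q^(a-ℓ) * codeDistP is in A
  have hlevelA : ∀ ℓ ∈ Finset.Icc 1 a,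
      ((q : ℝ) ^ (a - ℓ) * codeDistP q n P (C ℓ : Set (Fin n → ZMod q))) ∈ A := by
    intro ℓ hℓ
    obtain ⟨h1ℓ, hℓa⟩ := Finset.mem_Icc.mp hℓ
    have hCℓ : C ℓ ≠ ⊥ := by
      intro hbot
      exact hCa (le_bot_iff.mp (hbot ▸ hchain ℓ h1ℓ hℓa))
    obtain ⟨m, hmC, hm0, hcd⟩ := codeDistP_exists q n P (C ℓ) hCℓ
    obtain ⟨t₀, ht₀⟩ : ∃ t, m t ≠ 0 := by
      by_contra h; push_neg at h; exact hm0 (funext h)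
    refine ⟨_, hpointΓ ℓ hℓ (m + m) ((C ℓ).add_mem hmC hmC), _, hpointΓ ℓ hℓ m hmC, ?_, ?_⟩
    · intro h
      have h2 := congrFun h t₀
      simp only [Pi.add_apply] at h2
      have hqpow : ((q:ℤ))^(a-ℓ) ≠ 0 := by positivity
      have h3 : (((m t₀ + m t₀ : ZMod q)).val : ℤ) = ((m t₀).val : ℤ) :=
        mul_left_cancel₀ hqpow h2
      have h4 : (m t₀ + m t₀ : ZMod q) = m t₀ := ZMod.val_injective q (by exact_mod_cast h3)
      exact ht₀ (by rwa [add_eq_left] at h4)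
    · have hcoord : ∀ i : Fin n,
          |((((q:ℤ)^(a-ℓ) * (((m+m) i).val : ℤ)) - ((q:ℤ)^(a-ℓ) * ((m i).val : ℤ)) : ℤ) : ℝ)|
            = (q:ℝ)^(a-ℓ) * ((min ((m i).val) (q - (m i).val) : ℕ) : ℝ) := by
        intro i
        rw [← mul_sub, ← Int.cast_abs, abs_mul, abs_of_nonneg (a := ((q:ℤ))^(a-ℓ)) (by positivity)]
        simp only [Pi.add_apply]
        rw [abs_val_two_sub q hq0 (m i)]
        push_cast
        ring
      calc (q : ℝ) ^ (a - ℓ) * codeDistP q n P (C ℓ : Set (Fin n → ZMod q))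
          = (q : ℝ) ^ (a - ℓ) * leeW q n P m := by rw [hcd]
        _ = (∑ i, ((q:ℝ)^(a-ℓ) * ((min ((m i).val) (q - (m i).val) : ℕ) : ℝ)) ^ P) ^ (1/P) := by
            rw [rpow_sum_scale hPne _ (by positivity) _ (fun i => by positivity), leeW]
        _ = _ := by
            congr 1
            apply Finset.sum_congr rfl
            intro i _
            rw [← hcoord i]
  -- direction 1 : sInf A ≤ sInf B
  have hd1 : sInf A ≤ sInf B := by
    rcases hBne.csInf_mem hBfin with hmem | ⟨ℓ, hℓ, hval⟩
    · rw [hmem] at *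
      exact csInf_le hAbdd hqaA
    · rw [hval]
      exact csInf_le hAbdd (hlevelA ℓ hℓ)
  -- direction 2 : sInf B ≤ sInf A
  have hd2 : sInf B ≤ sInf A := by
    apply le_csInf hAne
    rintro d ⟨x, ⟨z, c, hc, rfl⟩, y, ⟨z', c', hc', rfl⟩, hxy, rfl⟩
    set D := (Finset.Icc 1 a).filter (fun ℓ => c ℓ ≠ c' ℓ) with hDdef
    rcases D.eq_empty_or_nonempty with hD | hD
    · -- all codewords equal: difference is in q^a ℤⁿ
      have hceq : ∀ j ∈ Finset.Icc 1 a, c j = c' j := by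
        intro j hj
        by_contra hne
        exact absurd (hDdef ▸ Finset.mem_filter.mpr ⟨hj, hne⟩) (hD ▸ Finset.notMem_empty j)
      have hdiff : ∀ t, (fun t => (q : ℤ) ^ a * z t
            + ∑ ℓ ∈ Finset.Icc 1 a, (q : ℤ) ^ (a - ℓ) * (((c ℓ) t).val : ℤ)) t
          - (fun t => (q : ℤ) ^ a * z' t
            + ∑ ℓ ∈ Finset.Icc 1 a, (q : ℤ) ^ (a - ℓ) * (((c' ℓ) t).val : ℤ)) t
          = (q:ℤ)^a * (z t - z' t) := by
        intro t
        simp only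
        have : ∑ ℓ ∈ Finset.Icc 1 a, (q : ℤ) ^ (a - ℓ) * (((c ℓ) t).val : ℤ)
            = ∑ ℓ ∈ Finset.Icc 1 a, (q : ℤ) ^ (a - ℓ) * (((c' ℓ) t).val : ℤ) :=
          Finset.sum_congr rfl (fun j hj => by rw [hceq j hj])
        rw [this]; ring
      obtain ⟨t₀, ht₀⟩ : ∃ t, z t ≠ z' t := by
        by_contra h
        push_neg at h
        apply hxy
        funext t
        have h2 := hdiff t
        rw [h t, sub_self, mul_zero, sub_eq_zero] at h2
        exact h2
      have hbig : (q:ℝ)^a ≤ |(((fun t => (q : ℤ) ^ a * z t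
            + ∑ ℓ ∈ Finset.Icc 1 a, (q : ℤ) ^ (a - ℓ) * (((c ℓ) t).val : ℤ)) t₀
          - (fun t => (q : ℤ) ^ a * z' t
            + ∑ ℓ ∈ Finset.Icc 1 a, (q : ℤ) ^ (a - ℓ) * (((c' ℓ) t).val : ℤ)) t₀ : ℤ) : ℝ)| := by
        rw [hdiff t₀, ← Int.cast_abs, abs_mul]
        have h1 : (1:ℤ) ≤ |z t₀ - z' t₀| := Int.one_le_abs (sub_ne_zero.mpr ht₀)
        have : ((q:ℤ)^a : ℤ) * 1 ≤ |(q:ℤ)^a| * |z t₀ - z' t₀| := by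
          rw [abs_of_nonneg (by positivity : (0:ℤ) ≤ (q:ℤ)^a)]
          exact mul_le_mul_of_nonneg_left h1 (by positivity)
        calc (q:ℝ)^a = (((q:ℤ)^a * 1 : ℤ) : ℝ) := by push_cast; ring
          _ ≤ _ := by exact_mod_cast this
      have : (q:ℝ)^a ≤ (∑ i, |(((fun t => (q : ℤ) ^ a * z t
            + ∑ ℓ ∈ Finset.Icc 1 a, (q : ℤ) ^ (a - ℓ) * (((c ℓ) t).val : ℤ)) i
          - (fun t => (q : ℤ) ^ a * z' t
            + ∑ ℓ ∈ Finset.Icc 1 a, (q : ℤ) ^ (a - ℓ) * (((c' ℓ) t).val : ℤ)) i : ℤ) : ℝ)| ^ P) ^ (1/P) :=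
        rpow_sum_single_le hP _ (fun i => abs_nonneg _) t₀ _ (by positivity) hbig
      exact le_trans (csInf_le hBbdd (Set.mem_insert _ _)) this
    · -- some codewords differ: use the largest differing level L
      set L := D.max' hD with hLdef
      have hLD : L ∈ D := D.max'_mem hD
      have hLIcc : L ∈ Finset.Icc 1 a := (Finset.mem_filter.mp hLD).1
      obtain ⟨h1L, hLa⟩ := Finset.mem_Icc.mp hLIcc
      have hLne : c L ≠ c' L := (Finset.mem_filter.mp hLD).2
      set m := c L - c' L with hmdef
      have hmC : m ∈ C L := (C L).sub_mem (hc L h1L hLa) (hc' L h1L hLa)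
      have hm0 : m ≠ 0 := sub_ne_zero.mpr hLne
      -- key : per-coordinate divisibility
      have hkey : ∀ t, ∃ e : ℤ, ((fun t => (q : ℤ) ^ a * z t
            + ∑ ℓ ∈ Finset.Icc 1 a, (q : ℤ) ^ (a - ℓ) * (((c ℓ) t).val : ℤ)) t
          - (fun t => (q : ℤ) ^ a * z' t
            + ∑ ℓ ∈ Finset.Icc 1 a, (q : ℤ) ^ (a - ℓ) * (((c' ℓ) t).val : ℤ)) t)
          = (q:ℤ)^(a-L) * e ∧ (q:ℤ) ∣ e - ((m t).val : ℤ) := by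
        intro t
        refine ⟨(q:ℤ)^L * (z t - z' t)
          + ∑ j ∈ Finset.Icc 1 L, (q:ℤ)^(L-j) * ((((c j) t).val : ℤ) - (((c' j) t).val : ℤ)), ?_, ?_⟩
        · simp only
          have hsum1 : ∑ ℓ ∈ Finset.Icc 1 a, (q : ℤ) ^ (a - ℓ) * (((c ℓ) t).val : ℤ)
              - ∑ ℓ ∈ Finset.Icc 1 a, (q : ℤ) ^ (a - ℓ) * (((c' ℓ) t).val : ℤ)
              = ∑ j ∈ Finset.Icc 1 a, (q : ℤ) ^ (a - j) * ((((c j) t).val : ℤ) - (((c' j) t).val : ℤ)) := by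
            rw [← Finset.sum_sub_distrib]
            exact Finset.sum_congr rfl (fun j _ => by ring)
          have hsum2 : ∑ j ∈ Finset.Icc 1 a, (q : ℤ) ^ (a - j) * ((((c j) t).val : ℤ) - (((c' j) t).val : ℤ))
              = ∑ j ∈ Finset.Icc 1 L, (q : ℤ) ^ (a - j) * ((((c j) t).val : ℤ) - (((c' j) t).val : ℤ)) := by
            symm
            apply Finset.sum_subset (Finset.Icc_subset_Icc_right hLa)
            intro j hj hnot
            have hjL : L < j := by
              have hj1 := (Finset.mem_Icc.mp hj).1
              have := Finset.mem_Icc.not.mp hnot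
              omega
            have : c j = c' j := by
              by_contra hne
              have : j ∈ D := Finset.mem_filter.mpr ⟨hj, hne⟩
              exact absurd (D.le_max' j this) (by omega)
            rw [this, sub_self, mul_zero]
          have hsum3 : ∑ j ∈ Finset.Icc 1 L, (q : ℤ) ^ (a - j) * ((((c j) t).val : ℤ) - (((c' j) t).val : ℤ))
              = (q:ℤ)^(a-L) * ∑ j ∈ Finset.Icc 1 L, (q:ℤ)^(L-j) * ((((c j) t).val : ℤ) - (((c' j) t).val : ℤ)) := by
            rw [Finset.mul_sum]
            apply Finset.sum_congr rfl
            intro j hj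
            have hjL := (Finset.mem_Icc.mp hj).2
            rw [← mul_assoc, ← pow_add]
            congr 2
            omega
          have hqa : (q:ℤ)^a = (q:ℤ)^(a-L) * (q:ℤ)^L := by
            rw [← pow_add]; congr 1; omega
          calc ((q : ℤ) ^ a * z t + ∑ ℓ ∈ Finset.Icc 1 a, (q : ℤ) ^ (a - ℓ) * (((c ℓ) t).val : ℤ))
              - ((q : ℤ) ^ a * z' t + ∑ ℓ ∈ Finset.Icc 1 a, (q : ℤ) ^ (a - ℓ) * (((c' ℓ) t).val : ℤ))
              = (q:ℤ)^a * (z t - z' t)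
                + (∑ ℓ ∈ Finset.Icc 1 a, (q : ℤ) ^ (a - ℓ) * (((c ℓ) t).val : ℤ)
                  - ∑ ℓ ∈ Finset.Icc 1 a, (q : ℤ) ^ (a - ℓ) * (((c' ℓ) t).val : ℤ)) := by ring
            _ = (q:ℤ)^a * (z t - z' t)
                + (q:ℤ)^(a-L) * ∑ j ∈ Finset.Icc 1 L, (q:ℤ)^(L-j) * ((((c j) t).val : ℤ) - (((c' j) t).val : ℤ)) := by
                rw [hsum1, hsum2, hsum3]
            _ = _ := by rw [hqa]; ring
        · -- divisibility
          have hvaldvd : ∀ x y : ZMod q, (q:ℤ) ∣ ((x.val:ℤ) - (y.val:ℤ) - (((x - y).val : ℤ))) := by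
            intro x y
            rw [← ZMod.intCast_zmod_eq_zero_iff_dvd]
            push_cast [ZMod.natCast_val, ZMod.cast_id]
            ring
          have hIcc : Finset.Icc 1 L = insert L (Finset.Icc 1 (L-1)) := by
            ext j; simp only [Finset.mem_Icc, Finset.mem_insert]; omega
          have hnotmem : L ∉ Finset.Icc 1 (L-1) := by
            simp only [Finset.mem_Icc]; omega
          have hrw : (q:ℤ)^L * (z t - z' t)
              + ∑ j ∈ Finset.Icc 1 L, (q:ℤ)^(L-j) * ((((c j) t).val : ℤ) - (((c' j) t).val : ℤ))
              - ((m t).val : ℤ)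
              = ((q:ℤ)^L * (z t - z' t)
              + ∑ j ∈ Finset.Icc 1 (L-1), (q:ℤ)^(L-j) * ((((c j) t).val : ℤ) - (((c' j) t).val : ℤ)))
              + ((((c L) t).val : ℤ) - (((c' L) t).val : ℤ) - ((m t).val : ℤ)) := by
            rw [hIcc, Finset.sum_insert hnotmem, Nat.sub_self, pow_zero, one_mul]
            ring
          rw [hrw]
          apply dvd_add
          · apply dvd_add
            · exact dvd_mul_of_dvd_left (dvd_pow_self _ (by omega : L ≠ 0)) _
            · refine Finset.dvd_sum fun j hj => dvd_mul_of_dvd_left (dvd_pow_self _ ?_) _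
              have := Finset.mem_Icc.mp hj; omega
          · have h := hvaldvd ((c L) t) ((c' L) t)
            have hmt : m t = (c L) t - (c' L) t := rfl
            rw [hmt]
            exact h
      -- bound each coordinate from below
      have hbound : ∀ t, (q:ℝ)^(a-L) * ((min ((m t).val) (q - (m t).val) : ℕ) : ℝ)
          ≤ |(((fun t => (q : ℤ) ^ a * z t
            + ∑ ℓ ∈ Finset.Icc 1 a, (q : ℤ) ^ (a - ℓ) * (((c ℓ) t).val : ℤ)) t
          - (fun t => (q : ℤ) ^ a * z' t
            + ∑ ℓ ∈ Finset.Icc 1 a, (q : ℤ) ^ (a - ℓ) * (((c' ℓ) t).val : ℤ)) t : ℤ) : ℝ)| := by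
        intro t
        obtain ⟨e, heq, hdvd⟩ := hkey t
        rw [heq, ← Int.cast_abs]
        have hle : ((q:ℤ))^(a-L) * ((min ((m t).val) (q - (m t).val) : ℕ) : ℤ)
            ≤ |(q:ℤ)^(a-L) * e| := by
          rw [abs_mul, abs_of_nonneg (by positivity : (0:ℤ) ≤ (q:ℤ)^(a-L))]
          exact mul_le_mul_of_nonneg_left (lee_le_abs q hq0 (m t) e hdvd) (by positivity)
        exact_mod_cast hle
      -- conclude
      have hstep : (q:ℝ)^(a-L) * codeDistP q n P (C L : Set (Fin n → ZMod q))
          ≤ (∑ i, |(((fun t => (q : ℤ) ^ a * z t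
            + ∑ ℓ ∈ Finset.Icc 1 a, (q : ℤ) ^ (a - ℓ) * (((c ℓ) t).val : ℤ)) i
          - (fun t => (q : ℤ) ^ a * z' t
            + ∑ ℓ ∈ Finset.Icc 1 a, (q : ℤ) ^ (a - ℓ) * (((c' ℓ) t).val : ℤ)) i : ℤ) : ℝ)| ^ P) ^ (1/P) := by
        calc (q:ℝ)^(a-L) * codeDistP q n P (C L : Set (Fin n → ZMod q))
            ≤ (q:ℝ)^(a-L) * leeW q n P m :=
              mul_le_mul_of_nonneg_left (codeDistP_le q n P (C L) hmC hm0) (by positivity)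
          _ = (∑ i, ((q:ℝ)^(a-L) * ((min ((m i).val) (q - (m i).val) : ℕ) : ℝ)) ^ P) ^ (1/P) := by
              rw [rpow_sum_scale hPne _ (by positivity) _ (fun i => by positivity), leeW]
          _ ≤ _ := rpow_sum_mono hP _ _ (fun i => by positivity) (fun i => hbound i)
      refine le_trans (csInf_le hBbdd ?_) hstep
      exact Set.mem_insert_iff.mpr (Or.inr ⟨L, hLIcc, rfl⟩)
  exact le_antisymm hd1 hd2
end

section
/- Let q ≥ 2, a ≥ 1, and let {0} ⊊ C_a ⊆ C_{a−1} ⊆ … ⊆ C_1 ⊆ ℤ_qⁿ be a chain of nested q-ary linear codes with C_a nonzero. Let Γ = q^aℤⁿ + q^{a−1}σ(C_1) + … + q·σ(C_{a−1}) + σ(C_a) ⊆ ℤⁿ. Then the L_∞ minimum distance of Γ satisfies d_∞(Γ) = min{q^a, q^{a−1}·d_∞(C_1), q^{a−2}·d_∞(C_2), …, d_∞(C_a)}, where d_∞(C_ℓ) is the ∞-Lee minimum distance of C_ℓ. -/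
/-!
Write a point of `Γ` as `q^a z + ∑_{ℓ ≤ a} q^{a-ℓ} σ(c_ℓ)`. For two distinct points let `m` be the
deepest level at which their codewords differ (`m = 0` if all agree). Their difference is `q^{a-m}`
times an integer vector which is congruent to `c_m - c'_m` modulo `q` (and is the nonzero vector
`z - z'` when `m = 0`); since an integer congruent to `r` has absolute value at least the Lee weight
of `r`, every distance in `Γ` is at least `q^a` or some `q^{a-m} d_∞(C_m)`. Conversely, for
`e ∈ C_ℓ` both `q^{a-ℓ} σ(e)` and `q^{a-ℓ} σ(2e)` lie in `Γ`, and `|σ(e_i) - σ(2e_i)|` is exactly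
the Lee weight of `e_i`, so each value `q^{a-ℓ} d_∞(C_ℓ)` is attained (here the nesting makes every
`C_ℓ` nonzero).
-/

/-- The `∞`-Lee minimum distance of a code `C ⊆ (ℤ/q)ⁿ`. -/
noncomputable def codeDistInf (q n : ℕ) (C : Set (Fin n → ZMod q)) : ℕ :=
  sInf {d : ℕ | ∃ x ∈ C, ∃ y ∈ C, x ≠ y ∧
    d = Finset.univ.sup fun i => min ((x i - y i).val) (q - (x i - y i).val)}

/-- The `L_∞` minimum distance of a subset of `ℤⁿ`. -/
noncomputable def linfDistInt (n : ℕ) (S : Set (Fin n → ℤ)) : ℕ :=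
  sInf {d : ℕ | ∃ x ∈ S, ∃ y ∈ S, x ≠ y ∧
    d = Finset.univ.sup fun i => (x i - y i).natAbs}

lemma le_of_forall_succ_le_of_mem_Icc {α : Type*} [Preorder α] {a : ℕ} {C : ℕ → α}
    (hC : ∀ ℓ, 1 ≤ ℓ → ℓ < a → C (ℓ + 1) ≤ C ℓ) {ℓ : ℕ} (hℓ : ℓ ∈ Finset.Icc 1 a) :
    C a ≤ C ℓ := by
  obtain ⟨h1ℓ, hℓa⟩ := Finset.mem_Icc.mp hℓ
  induction a, hℓa using Nat.le_induction with
  | base => exact le_rfl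
  | succ m hℓm ih =>
    exact (hC m (h1ℓ.trans hℓm) m.lt_succ_self).trans
      (ih (fun k hk hkm => hC k hk (hkm.trans m.lt_succ_self)) (Finset.mem_Icc.mpr ⟨h1ℓ, hℓm⟩))

lemma le_sup_natAbs_of_dvd {n N : ℕ} {v : Fin n → ℤ} (hv : v ≠ 0) (hN : ∀ t, (N : ℤ) ∣ v t) :
    N ≤ Finset.univ.sup fun t => (v t).natAbs := by
  obtain ⟨t, ht⟩ := Function.ne_iff.mp hv
  exact (Int.natAbs_le_of_dvd_ne_zero (hN t) ht).trans (Finset.le_sup (f := fun t => (v t).natAbs)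
    (Finset.mem_univ t))

namespace ZMod

variable {q : ℕ} [NeZero q]

lemma min_val_le_natAbs (w : ℤ) : min (w : ZMod q).val (q - (w : ZMod q).val) ≤ w.natAbs := by
  rw [← valMinAbs_natAbs_eq_min]
  exact natAbs_min_of_le_div_two q _ _ (by simp [coe_valMinAbs]) (natAbs_valMinAbs_le _)

lemma natAbs_val_sub_val_add_self (e : ZMod q) :
    ((e.val : ℤ) - (e + e).val).natAbs = min e.val (q - e.val) := by
  rcases lt_or_ge (e.val + e.val) q with h | h
  · rw [val_add_of_lt h]
    omega
  · rw [val_add_of_le h]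
    have := e.val_lt
    omega

lemma min_val_pos {e : ZMod q} (he : e ≠ 0) : 0 < min e.val (q - e.val) := by
  rw [← valMinAbs_natAbs_eq_min]
  simpa [valMinAbs_eq_zero]

end ZMod

def dbarExpansion (q a : ℕ) (z : ℤ) (c : ℕ → ZMod q) : ℤ :=
  (q : ℤ) ^ a * z + ∑ ℓ ∈ Finset.Icc 1 a, (q : ℤ) ^ (a - ℓ) * ((c ℓ).val : ℤ)

section dbarExpansion

variable {q a m : ℕ} {z : ℤ} {c : ℕ → ZMod q}

@[simp]
lemma dbarExpansion_zero : dbarExpansion q 0 z c = z := by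
  simp [dbarExpansion]

lemma dbarExpansion_eq_pow_mul_add (hm : m ≤ a) :
    dbarExpansion q a z c = (q : ℤ) ^ (a - m) * dbarExpansion q m z c
      + ∑ ℓ ∈ Finset.Ioc m a, (q : ℤ) ^ (a - ℓ) * ((c ℓ).val : ℤ) := by
  have hIcc : ∀ k, Finset.Icc 1 k = Finset.Ioc 0 k := fun k => Finset.Icc_add_one_left_eq_Ioc 0 k
  rw [dbarExpansion, dbarExpansion, hIcc, hIcc, ← Finset.sum_Ioc_consecutive _ (Nat.zero_le m) hm,
    mul_add, Finset.mul_sum, ← add_assoc]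
  congr 2
  · rw [← mul_assoc, ← pow_add, Nat.sub_add_cancel hm]
  · refine Finset.sum_congr rfl fun ℓ hℓ => ?_
    rw [← mul_assoc, ← pow_add]
    congr 2
    have := (Finset.mem_Ioc.mp hℓ).2
    omega

lemma intCast_dbarExpansion [NeZero q] (hm : m ≠ 0) : (dbarExpansion q m z c : ZMod q) = c m := by
  have hmem : m ∈ Finset.Icc 1 m := Finset.mem_Icc.mpr ⟨Nat.one_le_iff_ne_zero.mpr hm, le_rfl⟩
  push_cast [dbarExpansion, ZMod.natCast_self, zero_pow hm]
  rw [Finset.sum_eq_single_of_mem m hmem fun ℓ hℓ hne => by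
    simp [zero_pow (by have := (Finset.mem_Icc.mp hℓ).2; omega : m - ℓ ≠ 0)]]
  simp

lemma dbarExpansion_sub_dbarExpansion {z' : ℤ} {c' : ℕ → ZMod q} (hm : m ≤ a)
    (hc : ∀ ℓ ∈ Finset.Ioc m a, c ℓ = c' ℓ) :
    dbarExpansion q a z c - dbarExpansion q a z' c'
      = (q : ℤ) ^ (a - m) * (dbarExpansion q m z c - dbarExpansion q m z' c') := by
  rw [dbarExpansion_eq_pow_mul_add hm, dbarExpansion_eq_pow_mul_add (c := c') hm,
    Finset.sum_congr rfl fun ℓ hℓ => by rw [hc ℓ hℓ]]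
  ring

end dbarExpansion

-- The sets whose infima are, by definition, `linfDistInt n S` and `codeDistInf q n C`.
def linfDistances (n : ℕ) (S : Set (Fin n → ℤ)) : Set ℕ :=
  {d : ℕ | ∃ x ∈ S, ∃ y ∈ S, x ≠ y ∧ d = Finset.univ.sup fun i => (x i - y i).natAbs}

def codeDistances (q n : ℕ) (C : Set (Fin n → ZMod q)) : Set ℕ :=
  {d : ℕ | ∃ x ∈ C, ∃ y ∈ C, x ≠ y ∧
    d = Finset.univ.sup fun i => min ((x i - y i).val) (q - (x i - y i).val)}

lemma codeDistInf_mem_codeDistances {q n : ℕ} {C : Submodule (ZMod q) (Fin n → ZMod q)}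
    (hC : C ≠ ⊥) : codeDistInf q n C ∈ codeDistances q n C := by
  obtain ⟨e, he, he0⟩ := (Submodule.ne_bot_iff C).mp hC
  exact Nat.sInf_mem ⟨_, e, he, 0, zero_mem _, he0, rfl⟩

section gammaDbar

variable {q a n : ℕ} {C : ℕ → Submodule (ZMod q) (Fin n → ZMod q)}

lemma mem_gammaDbar_iff {v : Fin n → ℤ} : v ∈ gammaDbar q a n C ↔
    ∃ z : Fin n → ℤ, ∃ c : ℕ → Fin n → ZMod q, (∀ ℓ, 1 ≤ ℓ → ℓ ≤ a → c ℓ ∈ C ℓ) ∧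
      v = fun t => dbarExpansion q a (z t) (c · t) :=
  Iff.rfl

lemma pow_mul_mem_gammaDbar (z : Fin n → ℤ) : (fun t => (q : ℤ) ^ a * z t) ∈ gammaDbar q a n C :=
  ⟨z, 0, fun ℓ _ _ => zero_mem _, by simp⟩

lemma pow_mul_val_mem_gammaDbar {ℓ : ℕ} (hℓ : ℓ ∈ Finset.Icc 1 a) {e : Fin n → ZMod q}
    (he : e ∈ C ℓ) : (fun t => (q : ℤ) ^ (a - ℓ) * ((e t).val : ℤ)) ∈ gammaDbar q a n C := by
  refine ⟨0, Pi.single ℓ e, fun k _ _ => ?_, ?_⟩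
  · rcases eq_or_ne k ℓ with rfl | hk
    · simpa using he
    · simp [hk]
  · ext t
    rw [Finset.sum_eq_single_of_mem ℓ hℓ fun k _ hk => by simp [hk]]
    simp

lemma pow_mem_linfDistances [NeZero q] [Nonempty (Fin n)] :
    q ^ a ∈ linfDistances n (gammaDbar q a n C) := by
  refine ⟨_, pow_mul_mem_gammaDbar 1, _, pow_mul_mem_gammaDbar 0, fun h => ?_, ?_⟩
  · have := congrFun h (Classical.arbitrary _)
    simp [NeZero.ne q] at this
  · simp [Int.natAbs_pow, Finset.sup_const Finset.univ_nonempty]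

lemma pow_mul_mem_linfDistances [NeZero q] {ℓ : ℕ} (hℓ : ℓ ∈ Finset.Icc 1 a) {d : ℕ}
    (hd : d ∈ codeDistances q n (C ℓ)) :
    q ^ (a - ℓ) * d ∈ linfDistances n (gammaDbar q a n C) := by
  obtain ⟨x, hx, y, hy, hxy, rfl⟩ := hd
  have he := sub_mem hx hy
  have hdist : ∀ i, ((q : ℤ) ^ (a - ℓ) * ((x - y) i).val
      - (q : ℤ) ^ (a - ℓ) * ((x - y + (x - y)) i).val).natAbs
      = q ^ (a - ℓ) * min ((x i - y i).val) (q - (x i - y i).val) := fun i => by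
    rw [← mul_sub, Int.natAbs_mul, Int.natAbs_pow, Int.natAbs_natCast, Pi.add_apply,
      ZMod.natAbs_val_sub_val_add_self, Pi.sub_apply]
  refine ⟨_, pow_mul_val_mem_gammaDbar hℓ he, _, pow_mul_val_mem_gammaDbar hℓ (add_mem he he),
    fun h => ?_, ?_⟩
  · obtain ⟨i, hi⟩ := Function.ne_iff.mp hxy
    have := hdist i
    rw [congrFun h i, sub_self, Int.natAbs_zero] at this
    exact (Nat.mul_pos (pow_pos (Nat.pos_of_ne_zero (NeZero.ne q)) _)
      (ZMod.min_val_pos (sub_ne_zero.mpr hi))).ne this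
  · simp only [hdist, Finset.mul_sup₀]

lemma exists_le_of_mem_linfDistances [NeZero q] {d : ℕ}
    (hd : d ∈ linfDistances n (gammaDbar q a n C)) :
    q ^ a ≤ d ∨ ∃ ℓ ∈ Finset.Icc 1 a, q ^ (a - ℓ) * codeDistInf q n (C ℓ) ≤ d := by
  obtain ⟨u, hu, w, hw, hne, rfl⟩ := hd
  obtain ⟨z, c, hc, rfl⟩ := mem_gammaDbar_iff.mp hu
  obtain ⟨z', c', hc', rfl⟩ := mem_gammaDbar_iff.mp hw
  set D := (Finset.Icc 1 a).filter fun ℓ => c ℓ ≠ c' ℓ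
  -- `m` is the deepest level at which the codewords differ, or `0` if they all agree
  set m := D.sup id with hm_def
  have hma : m ≤ a := Finset.sup_le fun ℓ hℓ => (Finset.mem_Icc.mp (Finset.mem_filter.mp hℓ).1).2
  have hagree : ∀ ℓ ∈ Finset.Ioc m a, c ℓ = c' ℓ := fun ℓ hℓ => by
    obtain ⟨hmℓ, hℓa⟩ := Finset.mem_Ioc.mp hℓ
    by_contra h
    exact hmℓ.not_ge (Finset.le_sup (f := id) (Finset.mem_filter.mpr
      ⟨Finset.mem_Icc.mpr ⟨by omega, hℓa⟩, h⟩))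
  have hsub : ∀ t, dbarExpansion q a (z t) (c · t) - dbarExpansion q a (z' t) (c' · t)
      = (q : ℤ) ^ (a - m) * (dbarExpansion q m (z t) (c · t) - dbarExpansion q m (z' t) (c' · t)) :=
    fun t => dbarExpansion_sub_dbarExpansion hma fun ℓ hℓ => by rw [hagree ℓ hℓ]
  rcases eq_or_ne m 0 with hm0 | hm0
  · left
    refine le_sup_natAbs_of_dvd (v := fun t => _ - _) (sub_ne_zero.mpr hne ∘ funext ∘ congrFun)
      fun t => ⟨z t - z' t, ?_⟩
    simpa [hm0] using hsub t
  · right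
    obtain ⟨ℓ, hℓD, hℓm⟩ := Finset.exists_mem_eq_sup D
      (Finset.nonempty_iff_ne_empty.mpr fun h => hm0 (by simp [hm_def, h])) id
    obtain ⟨hℓ, hcℓ⟩ := Finset.mem_filter.mp hℓD
    obtain ⟨h1ℓ, hℓa⟩ := Finset.mem_Icc.mp hℓ
    rw [hm_def, hℓm, id] at hsub
    refine ⟨ℓ, hℓ, ?_⟩
    calc q ^ (a - ℓ) * codeDistInf q n (C ℓ)
        ≤ q ^ (a - ℓ) * Finset.univ.sup fun t =>
            min ((c ℓ t - c' ℓ t).val) (q - (c ℓ t - c' ℓ t).val) :=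
          Nat.mul_le_mul_left _ (Nat.sInf_le ⟨c ℓ, hc ℓ h1ℓ hℓa, c' ℓ, hc' ℓ h1ℓ hℓa, hcℓ, rfl⟩)
      _ = Finset.univ.sup fun t =>
            q ^ (a - ℓ) * min ((c ℓ t - c' ℓ t).val) (q - (c ℓ t - c' ℓ t).val) :=
          Finset.mul_sup₀ _ _ _
      _ ≤ _ := Finset.sup_mono_fun fun t _ => by
          have hlee := ZMod.min_val_le_natAbs (q := q)
            (dbarExpansion q ℓ (z t) (c · t) - dbarExpansion q ℓ (z' t) (c' · t))
          rw [Int.cast_sub, intCast_dbarExpansion (by omega), intCast_dbarExpansion (by omega)]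
            at hlee
          rw [hsub t, Int.natAbs_mul, Int.natAbs_pow, Int.natAbs_natCast]
          exact Nat.mul_le_mul_left _ hlee

end gammaDbar

theorem linfDist_gammaDbar_general (q a n : ℕ) (hq : 2 ≤ q)
    (C : ℕ → Submodule (ZMod q) (Fin n → ZMod q))
    (hnested : ∀ ℓ, 1 ≤ ℓ → ℓ < a → C (ℓ + 1) ≤ C ℓ)
    (hCa : C a ≠ ⊥) :
    linfDistInt n (gammaDbar q a n C)
      = sInf (insert (q ^ a)
          {d : ℕ | ∃ ℓ ∈ Finset.Icc 1 a,
            d = q ^ (a - ℓ) * codeDistInf q n (C ℓ : Set (Fin n → ZMod q))}) := by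
  have : NeZero q := ⟨by omega⟩
  obtain ⟨e, -, he0⟩ := (Submodule.ne_bot_iff (C a)).mp hCa
  obtain ⟨t, -⟩ := Function.ne_iff.mp he0
  have : Nonempty (Fin n) := ⟨t⟩
  refine csInf_eq_csInf_of_forall_exists_le (s := linfDistances n _) (fun d hd => ?_) ?_
  · rcases exists_le_of_mem_linfDistances hd with hqa | ⟨ℓ, hℓ, hℓd⟩
    · exact ⟨_, Set.mem_insert _ _, hqa⟩
    · exact ⟨_, Set.mem_insert_of_mem _ ⟨ℓ, hℓ, rfl⟩, hℓd⟩
  · rintro _ (rfl | ⟨ℓ, hℓ, rfl⟩)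
    · exact ⟨_, pow_mem_linfDistances, le_rfl⟩
    · have hCℓ : C ℓ ≠ ⊥ := ne_bot_of_le_ne_bot hCa (le_of_forall_succ_le_of_mem_Icc hnested hℓ)
      exact ⟨_, pow_mul_mem_linfDistances hℓ (codeDistInf_mem_codeDistances hCℓ), le_rfl⟩

/-- For a chain of nested `q`-ary codes `{0} ⊊ C_a ⊆ ⋯ ⊆ C_1 ⊆ ℤ_qⁿ`,
the `L_∞` minimum distance of the Construction D̄ set is
`min {q^a, q^{a-1} d_∞(C_1), …, d_∞(C_a)}`. -/
theorem linfDist_gammaDbar (q a n : ℕ) (hq : 2 ≤ q) (ha : 1 ≤ a)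
    (C : ℕ → Submodule (ZMod q) (Fin n → ZMod q))
    (hnested : ∀ ℓ, 1 ≤ ℓ → ℓ < a → C (ℓ + 1) ≤ C ℓ)
    (hCa : C a ≠ ⊥) :
    linfDistInt n (gammaDbar q a n C)
      = sInf (insert (q ^ a)
          {d : ℕ | ∃ ℓ ∈ Finset.Icc 1 a,
            d = q ^ (a - ℓ) * codeDistInf q n (C ℓ : Set (Fin n → ZMod q))}) :=
  linfDist_gammaDbar_general q a n hq C hnested hCa
end

section
/- Let q ≥ 2, a ≥ 1, let {0} ⊊ C_a ⊆ … ⊆ C_1 ⊆ ℤ_qⁿ be nested q-ary linear codes, Γ = q^aℤⁿ + q^{a−1}σ(C_1) + … + σ(C_a), and let Λ be the additive subgroup of ℤⁿ generated by Γ (the smallest lattice containing Γ). Then for every real 1 ≤ P < ∞: (i) d_P(Λ) ≤ min{q^a, q^{a−1}d_P(C_1), …, d_P(C_a)}; (ii) if the chain C_a ⊆ … ⊆ C_1 is closed under zero-one addition, then d_P(Λ) = min{q^a, q^{a−1}d_P(C_1), …, d_P(C_a)}; and (iii) under the hypothesis of (ii), if in addition d_P(C_ℓ) ≥ q^ℓ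 for every 1 ≤ ℓ ≤ a, then d_P(Λ) = q^a. -/
/-- The zero-one addition on `ℤ_qⁿ`. -/
def zeroOne (q n : ℕ) (x y : Fin n → ZMod q) : Fin n → ZMod q :=
  fun i => if (x i).val + (y i).val < q then 0 else 1

/-- The chain `C_a ⊆ ⋯ ⊆ C_1` is closed under the zero-one addition. -/
def chainClosed (q a n : ℕ) (C : ℕ → Submodule (ZMod q) (Fin n → ZMod q)) : Prop :=
  ∀ ℓ, 2 ≤ ℓ → ℓ ≤ a → ∀ c ∈ C ℓ, ∀ c' ∈ C ℓ, zeroOne q n c c' ∈ C (ℓ - 1)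

section helpers
variable {q n : ℕ}

lemma carry_eq (hq : 2 ≤ q) (x y : ZMod q) :
    (x.val : ℤ) + (y.val : ℤ)
      = ((x + y).val : ℤ) + q * (if x.val + y.val < q then 0 else 1) := by
  haveI : NeZero q := ⟨by omega⟩
  have hx := ZMod.val_lt x
  have hy := ZMod.val_lt y
  rw [ZMod.val_add]
  by_cases h : x.val + y.val < q
  · rw [Nat.mod_eq_of_lt h, if_pos h]; push_cast; ring
  · rw [if_neg h]
    have h2 : (x.val + y.val) % q = x.val + y.val - q := by
      rw [Nat.mod_eq_sub_mod (by omega), Nat.mod_eq_of_lt (by omega)]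
    rw [h2]
    have : q ≤ x.val + y.val := by omega
    push_cast [Nat.cast_sub this]
    ring

lemma zeroOne_val (hq : 2 ≤ q) (x y : Fin n → ZMod q) (t : Fin n) :
    ((zeroOne q n x y t).val : ℤ)
      = (if (x t).val + (y t).val < q then 0 else 1) := by
  haveI : NeZero q := ⟨by omega⟩
  haveI : Fact (1 < q) := ⟨by omega⟩
  unfold zeroOne
  split <;> simp [ZMod.val_one]

lemma sig_add (hq : 2 ≤ q) (x y : Fin n → ZMod q) (t : Fin n) :
    ((x t).val : ℤ) + ((y t).val : ℤ)
      = (((x + y) t).val : ℤ) + q * ((zeroOne q n x y t).val : ℤ) := by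
  rw [zeroOne_val hq, Pi.add_apply]
  exact carry_eq hq (x t) (y t)

lemma gamma_zero_mem (hq : 2 ≤ q) (a : ℕ) (C : ℕ → Submodule (ZMod q) (Fin n → ZMod q)) :
    (0 : Fin n → ℤ) ∈ gammaDbar q a n C := by
  haveI : NeZero q := ⟨by omega⟩
  refine ⟨0, 0, fun ℓ _ _ => zero_mem _, ?_⟩
  funext t
  simp

lemma pow_sig_mem (hq : 2 ≤ q) (a : ℕ) (C : ℕ → Submodule (ZMod q) (Fin n → ZMod q))
    {ℓ : ℕ} (h1 : 1 ≤ ℓ) (h2 : ℓ ≤ a) {c : Fin n → ZMod q} (hc : c ∈ C ℓ) :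
    (fun t => (q : ℤ) ^ (a - ℓ) * ((c t).val : ℤ)) ∈ gammaDbar q a n C := by
  haveI : NeZero q := ⟨by omega⟩
  refine ⟨0, fun m => if m = ℓ then c else 0, ?_, ?_⟩
  · intro m hm1 hm2
    by_cases h : m = ℓ
    · subst h; simpa using hc
    · simp [h]
  · funext t
    rw [Finset.sum_eq_single ℓ]
    · simp
    · intro m hm hne
      simp [hne]
    · intro h
      exact absurd (Finset.mem_Icc.2 ⟨h1, h2⟩) h

lemma gamma_zero_all (hq : 2 ≤ q) (C : ℕ → Submodule (ZMod q) (Fin n → ZMod q))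
    (v : Fin n → ℤ) : v ∈ gammaDbar q 0 n C := by
  refine ⟨v, 0, fun ℓ h1 h2 => by omega, ?_⟩
  funext t
  simp

end helpers


section group
variable {q n : ℕ}

lemma gamma_succ (q a n : ℕ) (C : ℕ → Submodule (ZMod q) (Fin n → ZMod q)) :
    gammaDbar q (a+1) n C =
      {v | ∃ γ ∈ gammaDbar q a n C, ∃ c ∈ C (a+1),
        v = fun t => q * γ t + ((c t).val : ℤ)} := by
  ext v
  constructor
  · rintro ⟨z, c, hc, rfl⟩
    refine ⟨fun t => (q:ℤ)^a * z t + ∑ ℓ ∈ Finset.Icc 1 a, (q:ℤ)^(a-ℓ) * ((c ℓ t).val : ℤ),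
      ⟨z, c, fun ℓ h1 h2 => hc ℓ h1 (by omega), rfl⟩,
      c (a+1), hc (a+1) (by omega) le_rfl, ?_⟩
    funext t
    rw [Finset.sum_Icc_succ_top (by omega)]
    have hterm : ∀ ℓ ∈ Finset.Icc 1 a,
        (q:ℤ)^(a+1-ℓ) * ((c ℓ t).val : ℤ) = q * ((q:ℤ)^(a-ℓ) * ((c ℓ t).val : ℤ)) := by
      intro ℓ hℓ
      rw [Finset.mem_Icc] at hℓ
      have h2 : a + 1 - ℓ = (a - ℓ) + 1 := by omega
      rw [h2, pow_succ]; ring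
    rw [Finset.sum_congr rfl hterm]
    simp only [Nat.sub_self, pow_zero, one_mul, mul_add, Finset.mul_sum, pow_succ]
    ring
  · rintro ⟨γ, ⟨z, c, hc, rfl⟩, cnew, hcnew, rfl⟩
    refine ⟨z, Function.update c (a+1) cnew, ?_, ?_⟩
    · intro ℓ h1 h2
      by_cases h : ℓ = a + 1
      · subst h; rw [Function.update_self]; exact hcnew
      · rw [Function.update_of_ne h]; exact hc ℓ h1 (by omega)
    · funext t
      rw [Finset.sum_Icc_succ_top (by omega), Function.update_self]
      have hterm : ∀ ℓ ∈ Finset.Icc 1 a,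
          (q:ℤ)^(a+1-ℓ) * (((Function.update c (a+1) cnew ℓ) t).val : ℤ)
            = q * ((q:ℤ)^(a-ℓ) * ((c ℓ t).val : ℤ)) := by
        intro ℓ hℓ
        rw [Finset.mem_Icc] at hℓ
        have h1 : ℓ ≠ a + 1 := by omega
        have h2 : a + 1 - ℓ = (a - ℓ) + 1 := by omega
        rw [Function.update_of_ne h1, h2, pow_succ]; ring
      rw [Finset.sum_congr rfl hterm]
      simp only [Nat.sub_self, pow_zero, one_mul, mul_add, Finset.mul_sum, pow_succ]
      ring
  
lemma carry_mem (hq : 2 ≤ q) (a : ℕ) (C : ℕ → Submodule (ZMod q) (Fin n → ZMod q))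
    (hch : ∀ c ∈ C (a+1), ∀ c' ∈ C (a+1), 2 ≤ a + 1 → zeroOne q n c c' ∈ C a)
    {c c' : Fin n → ZMod q} (hc : c ∈ C (a+1)) (hc' : c' ∈ C (a+1)) :
    (fun t => ((zeroOne q n c c' t).val : ℤ)) ∈ gammaDbar q a n C := by
  rcases Nat.eq_zero_or_pos a with rfl | hpos
  · exact gamma_zero_all hq C _
  · have hmem := hch c hc c' hc' (by omega)
    have := pow_sig_mem hq a C (ℓ := a) hpos le_rfl hmem
    simpa using this

lemma gamma_add_neg (hq : 2 ≤ q) (A : ℕ) (C : ℕ → Submodule (ZMod q) (Fin n → ZMod q))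
    (hch : chainClosed q A n C) :
    ∀ a, a ≤ A →
      (∀ x ∈ gammaDbar q a n C, ∀ y ∈ gammaDbar q a n C, x + y ∈ gammaDbar q a n C) ∧
      (∀ x ∈ gammaDbar q a n C, -x ∈ gammaDbar q a n C) := by
  haveI : NeZero q := ⟨by omega⟩
  intro a
  induction a with
  | zero => intro _; exact ⟨fun x _ y _ => gamma_zero_all hq C _, fun x _ => gamma_zero_all hq C _⟩
  | succ a ih =>
    intro hA
    obtain ⟨ihadd, ihneg⟩ := ih (by omega)
    have hch' : ∀ c ∈ C (a+1), ∀ c' ∈ C (a+1), 2 ≤ a + 1 → zeroOne q n c c' ∈ C a := by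
      intro c hc c' hc' h2
      have := hch (a+1) h2 hA c hc c' hc'
      simpa using this
    constructor
    · intro x hx y hy
      rw [gamma_succ] at hx hy ⊢
      obtain ⟨γ, hγ, c, hc, rfl⟩ := hx
      obtain ⟨γ', hγ', c', hc', rfl⟩ := hy
      refine ⟨γ + γ' + (fun t => ((zeroOne q n c c' t).val : ℤ)),
        ihadd _ (ihadd _ hγ _ hγ') _ (carry_mem hq a C hch' hc hc'),
        c + c', add_mem hc hc', ?_⟩
      funext t
      have hs := sig_add hq c c' t
      simp only [Pi.add_apply] at hs ⊢
      linear_combination hs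
    · intro x hx
      rw [gamma_succ] at hx ⊢
      obtain ⟨γ, hγ, c, hc, rfl⟩ := hx
      have hnegc : -c ∈ C (a+1) := neg_mem hc
      refine ⟨-(γ + (fun t => ((zeroOne q n c (-c) t).val : ℤ))),
        ihneg _ (ihadd _ hγ _ (carry_mem hq a C hch' hc hnegc)),
        -c, hnegc, ?_⟩
      funext t
      have hs := sig_add hq c (-c) t
      have hz : ((c + -c) t).val = 0 := by simp
      rw [hz] at hs
      simp only [Pi.neg_apply, Pi.add_apply] at hs ⊢
      linear_combination -hs

lemma closure_gamma_eq (hq : 2 ≤ q) (a : ℕ) (C : ℕ → Submodule (ZMod q) (Fin n → ZMod q))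
    (hch : chainClosed q a n C) :
    (AddSubgroup.closure (gammaDbar q a n C) : Set (Fin n → ℤ)) = gammaDbar q a n C := by
  obtain ⟨hadd, hneg⟩ := gamma_add_neg hq a C hch a le_rfl
  let G : AddSubgroup (Fin n → ℤ) :=
    { carrier := gammaDbar q a n C
      add_mem' := fun hx hy => hadd _ hx _ hy
      zero_mem' := gamma_zero_mem hq a C
      neg_mem' := fun hx => hneg _ hx }
  have h : gammaDbar q a n C = (G : Set (Fin n → ℤ)) := rfl
  rw [h, AddSubgroup.closure_eq]

end group

section analytic
variable {q n : ℕ}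

lemma rpow_PinvP {P : ℝ} (hP : 1 ≤ P) {x : ℝ} (hx : 0 ≤ x) : (x ^ P) ^ (1/P) = x := by
  have hP0 : P ≠ 0 := by linarith
  rw [← Real.rpow_mul hx, mul_one_div_cancel hP0, Real.rpow_one]

lemma codeSet_bddBelow (P : ℝ) (Cs : Set (Fin n → ZMod q)) :
    BddBelow {d : ℝ | ∃ x ∈ Cs, ∃ y ∈ Cs, x ≠ y ∧
      d = (∑ i, ((min ((x i - y i).val) (q - (x i - y i).val) : ℕ) : ℝ) ^ P) ^ (1 / P)} := by
  refine ⟨0, ?_⟩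
  rintro d ⟨x, hx, y, hy, hxy, rfl⟩
  exact Real.rpow_nonneg (Finset.sum_nonneg fun i _ => Real.rpow_nonneg (Nat.cast_nonneg _) _) _

lemma lpSet_bddBelow (P : ℝ) (S : Set (Fin n → ℤ)) :
    BddBelow {d : ℝ | ∃ x ∈ S, ∃ y ∈ S, x ≠ y ∧
      d = (∑ i, |((x i - y i : ℤ) : ℝ)| ^ P) ^ (1 / P)} := by
  refine ⟨0, ?_⟩
  rintro d ⟨x, hx, y, hy, hxy, rfl⟩
  exact Real.rpow_nonneg (Finset.sum_nonneg fun i _ => Real.rpow_nonneg (abs_nonneg _) _) _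

lemma codeDist_nonneg (P : ℝ) (Cs : Set (Fin n → ZMod q)) : 0 ≤ codeDistP q n P Cs := by
  apply Real.sInf_nonneg
  rintro d ⟨x, hx, y, hy, hxy, rfl⟩
  exact Real.rpow_nonneg (Finset.sum_nonneg fun i _ => Real.rpow_nonneg (Nat.cast_nonneg _) _) _

lemma codeDist_exists (hq : 2 ≤ q) (P : ℝ) (Cs : Set (Fin n → ZMod q))
    (hne : ∃ x ∈ Cs, ∃ y ∈ Cs, x ≠ y) :
    ∃ x ∈ Cs, ∃ y ∈ Cs, x ≠ y ∧ codeDistP q n P Cs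
      = (∑ i, ((min ((x i - y i).val) (q - (x i - y i).val) : ℕ) : ℝ) ^ P) ^ (1 / P) := by
  haveI : NeZero q := ⟨by omega⟩
  set D := {d : ℝ | ∃ x ∈ Cs, ∃ y ∈ Cs, x ≠ y ∧
    d = (∑ i, ((min ((x i - y i).val) (q - (x i - y i).val) : ℕ) : ℝ) ^ P) ^ (1 / P)} with hD
  have hDne : D.Nonempty := by
    obtain ⟨x, hx, y, hy, hxy⟩ := hne
    exact ⟨_, x, hx, y, hy, hxy, rfl⟩
  have hDfin : D.Finite := by
    have hsub : D ⊆ Set.range (fun p : (Fin n → ZMod q) × (Fin n → ZMod q) =>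
        (∑ i, ((min ((p.1 i - p.2 i).val) (q - (p.1 i - p.2 i).val) : ℕ) : ℝ) ^ P) ^ (1 / P)) := by
      rintro d ⟨x, hx, y, hy, hxy, rfl⟩
      exact ⟨(x, y), rfl⟩
    exact (Set.finite_range _).subset hsub
  have hmem := hDne.csInf_mem hDfin
  obtain ⟨x, hx, y, hy, hxy, hd⟩ := hmem
  exact ⟨x, hx, y, hy, hxy, hd⟩

lemma norm_scale (P : ℝ) (hP : 1 ≤ P) (A : ℝ) (hA : 0 ≤ A) (f : Fin n → ℝ)
    (hf : ∀ i, 0 ≤ f i) :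
    (∑ i, (A * f i) ^ P) ^ (1/P) = A * (∑ i, f i ^ P) ^ (1/P) := by
  have h1 : ∀ i ∈ Finset.univ, (A * f i) ^ P = A ^ P * (f i) ^ P :=
    fun i _ => Real.mul_rpow hA (hf i)
  rw [Finset.sum_congr rfl h1, ← Finset.mul_sum,
    Real.mul_rpow (Real.rpow_nonneg hA _)
      (Finset.sum_nonneg fun i _ => Real.rpow_nonneg (hf i) _),
    rpow_PinvP hP hA]

lemma norm_mono (P : ℝ) (hP : 1 ≤ P) (f g : Fin n → ℝ) (h0 : ∀ i, 0 ≤ f i)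
    (h : ∀ i, f i ≤ g i) :
    (∑ i, f i ^ P) ^ (1/P) ≤ (∑ i, g i ^ P) ^ (1/P) := by
  apply Real.rpow_le_rpow
    (Finset.sum_nonneg fun i _ => Real.rpow_nonneg (h0 i) _)
    (Finset.sum_le_sum fun i _ => Real.rpow_le_rpow (h0 i) (h i) (by linarith))
  positivity

/-- any integer congruent to `d*m` mod `d*q` has `|w| ≥ d * min(m, q-m)`. -/
lemma intLee_lb (hq : 2 ≤ q) {d : ℤ} (hd : 0 < d) {m : ℕ} (hm : m < q) {w : ℤ}
    (hdvd : d * q ∣ (w - d * m)) :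
    d * ((min m (q - m) : ℕ) : ℤ) ≤ |w| := by
  obtain ⟨k, hk⟩ := hdvd
  have hw : w = d * ((m : ℤ) + q * k) := by linarith [hk]
  rw [hw, abs_mul, abs_of_pos hd]
  have hqpos : (0:ℤ) < q := by exact_mod_cast (by omega : 0 < q)
  have hmin1 : ((min m (q - m) : ℕ) : ℤ) ≤ m := by push_cast; omega
  have hmin2 : ((min m (q - m) : ℕ) : ℤ) ≤ (q : ℤ) - m := by push_cast; omega
  have key : ((min m (q - m) : ℕ) : ℤ) ≤ |(m : ℤ) + q * k| := by
    rcases lt_trichotomy k 0 with hk0 | hk0 | hk0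
    · have h1 : (q:ℤ) * k ≤ q * (-1) := by
        apply mul_le_mul_of_nonneg_left (by omega) hqpos.le
      have h2 : -((m:ℤ) + q * k) ≤ |(m:ℤ) + q * k| := neg_le_abs _
      have hm0 : (0:ℤ) ≤ m := Int.natCast_nonneg m
      nlinarith
    · subst hk0
      simp only [mul_zero, add_zero]
      rw [abs_of_nonneg (Int.natCast_nonneg m)]
      exact hmin1
    · have h1 : (q:ℤ) * 1 ≤ q * k := by
        apply mul_le_mul_of_nonneg_left (by omega) hqpos.le
      have h2 : ((m:ℤ) + q * k) ≤ |(m:ℤ) + q * k| := le_abs_self _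
      have hm0 : (0:ℤ) ≤ m := Int.natCast_nonneg m
      nlinarith
  exact mul_le_mul_of_nonneg_left key hd.le

/-- the key coordinate identity for the upper-bound witness. -/
lemma coord_abs (hq : 2 ≤ q) (x : ZMod q) :
    |(((x + x).val : ℤ)) - (x.val : ℤ)| = ((min x.val (q - x.val) : ℕ) : ℤ) := by
  haveI : NeZero q := ⟨by omega⟩
  have hx := ZMod.val_lt x
  rw [ZMod.val_add]
  by_cases h : x.val + x.val < q
  · rw [Nat.mod_eq_of_lt h]
    rcases abs_cases (((x.val + x.val : ℕ) : ℤ) - (x.val : ℤ)) with ⟨he, _⟩ | ⟨he, _⟩ <;>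
      rw [he] <;> push_cast <;> omega
  · have h2 : (x.val + x.val) % q = x.val + x.val - q := by
      rw [Nat.mod_eq_sub_mod (by omega), Nat.mod_eq_of_lt (by omega)]
    rw [h2]
    rcases abs_cases (((x.val + x.val - q : ℕ) : ℤ) - (x.val : ℤ)) with ⟨he, _⟩ | ⟨he, _⟩ <;>
      rw [he] <;> push_cast [Nat.cast_sub (by omega : q ≤ x.val + x.val)] <;> omega

end analytic

section main
variable {q a n : ℕ}

lemma T_bddBelow (q a n : ℕ) (P : ℝ) (C : ℕ → Submodule (ZMod q) (Fin n → ZMod q)) :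
    BddBelow (insert ((q : ℝ) ^ a)
      {d : ℝ | ∃ ℓ ∈ Finset.Icc 1 a,
        d = (q : ℝ) ^ (a - ℓ) * codeDistP q n P (C ℓ : Set (Fin n → ZMod q))}) := by
  refine ⟨0, ?_⟩
  rintro b hb
  rcases Set.mem_insert_iff.1 hb with rfl | ⟨ℓ, hℓ, rfl⟩
  · positivity
  · exact mul_nonneg (by positivity) (codeDist_nonneg _ _)

lemma gamma_norm_lb (hq : 2 ≤ q)
    (C : ℕ → Submodule (ZMod q) (Fin n → ZMod q)) (P : ℝ) (hP : 1 ≤ P)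
    {w : Fin n → ℤ} (hw : w ∈ gammaDbar q a n C) (hw0 : w ≠ 0) :
    sInf (insert ((q : ℝ) ^ a)
      {d : ℝ | ∃ ℓ ∈ Finset.Icc 1 a,
        d = (q : ℝ) ^ (a - ℓ) * codeDistP q n P (C ℓ : Set (Fin n → ZMod q))})
      ≤ (∑ i, |((w i : ℤ) : ℝ)| ^ P) ^ (1 / P) := by
  haveI : NeZero q := ⟨by omega⟩
  have hTbdd := T_bddBelow q a n P C
  obtain ⟨z, c, hc, rfl⟩ := hw
  set w : Fin n → ℤ := fun t => (q : ℤ) ^ a * z t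
      + ∑ ℓ ∈ Finset.Icc 1 a, (q : ℤ) ^ (a - ℓ) * (((c ℓ) t).val : ℤ) with hwdef
  rcases Finset.eq_empty_or_nonempty ((Finset.Icc 1 a).filter (fun ℓ => c ℓ ≠ 0)) with hSe | hSne
  · -- all codewords zero: w = q^a z
    have hcz : ∀ ℓ ∈ Finset.Icc 1 a, c ℓ = 0 := by
      intro ℓ hℓ
      by_contra h
      have hmem : ℓ ∈ (Finset.Icc 1 a).filter (fun ℓ => c ℓ ≠ 0) := Finset.mem_filter.2 ⟨hℓ, h⟩
      rw [hSe] at hmem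
      exact absurd hmem (Finset.notMem_empty ℓ)
    have hwt : ∀ t, w t = (q : ℤ) ^ a * z t := by
      intro t
      have : ∑ ℓ ∈ Finset.Icc 1 a, (q : ℤ) ^ (a - ℓ) * (((c ℓ) t).val : ℤ) = 0 := by
        apply Finset.sum_eq_zero
        intro ℓ hℓ
        rw [hcz ℓ hℓ]
        simp
      rw [hwdef]; dsimp only; rw [this, add_zero]
    obtain ⟨t0, ht0⟩ : ∃ t0, w t0 ≠ 0 := Function.ne_iff.1 hw0
    have hz0 : z t0 ≠ 0 := by
      intro h; apply ht0; rw [hwt t0, h, mul_zero]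
    have habsZ : (q : ℤ) ^ a ≤ |w t0| := by
      rw [hwt t0, abs_mul, abs_of_nonneg (by positivity : (0:ℤ) ≤ (q:ℤ)^a)]
      have : (1 : ℤ) ≤ |z t0| := Int.one_le_abs (by omega)
      nlinarith [pow_pos (by omega : (0:ℤ) < q) a]
    have habs : (q : ℝ) ^ a ≤ |((w t0 : ℤ) : ℝ)| := by
      have := habsZ
      rw [← Int.cast_abs]
      exact_mod_cast this
    have h1 : ((q : ℝ) ^ a) ^ P ≤ ∑ i, |((w i : ℤ) : ℝ)| ^ P := by
      refine le_trans (Real.rpow_le_rpow (by positivity) habs (by linarith)) ?_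
      exact Finset.single_le_sum (f := fun i => |((w i : ℤ) : ℝ)| ^ P)
        (fun i _ => Real.rpow_nonneg (abs_nonneg _) _) (Finset.mem_univ t0)
    have h2 : (q : ℝ) ^ a ≤ (∑ i, |((w i : ℤ) : ℝ)| ^ P) ^ (1 / P) := by
      calc (q : ℝ) ^ a = (((q : ℝ) ^ a) ^ P) ^ (1/P) := (rpow_PinvP hP (by positivity)).symm
        _ ≤ _ := Real.rpow_le_rpow (by positivity) h1 (by positivity)
    exact le_trans (csInf_le hTbdd (Set.mem_insert _ _)) h2
  · -- top nonzero level ℓ*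
    set L := ((Finset.Icc 1 a).filter (fun ℓ => c ℓ ≠ 0)).max' hSne with hL
    have hLmem := ((Finset.Icc 1 a).filter (fun ℓ => c ℓ ≠ 0)).max'_mem hSne
    rw [Finset.mem_filter, Finset.mem_Icc] at hLmem
    obtain ⟨⟨hL1, hLa⟩, hcL⟩ := hLmem
    have htop : ∀ ℓ ∈ Finset.Icc 1 a, L < ℓ → c ℓ = 0 := by
      intro ℓ hℓ hgt
      by_contra h
      exact absurd (Finset.le_max' _ ℓ (Finset.mem_filter.2 ⟨hℓ, h⟩)) (not_le.2 hgt)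
    have hdvd : ∀ t, (q : ℤ) ^ (a - L + 1) ∣ (w t - (q : ℤ) ^ (a - L) * ((c L t).val : ℤ)) := by
      intro t
      have hsplit : w t - (q : ℤ) ^ (a - L) * ((c L t).val : ℤ)
          = (q : ℤ) ^ a * z t
            + ∑ ℓ ∈ (Finset.Icc 1 a).erase L, (q : ℤ) ^ (a - ℓ) * (((c ℓ) t).val : ℤ) := by
        rw [hwdef]; dsimp only
        rw [← Finset.add_sum_erase _ _ (Finset.mem_Icc.2 ⟨hL1, hLa⟩)]
        ring
      rw [hsplit]
      refine dvd_add (Dvd.dvd.mul_right (pow_dvd_pow _ (by omega)) _) (Finset.dvd_sum ?_)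
      intro ℓ hℓ
      have hℓne := Finset.ne_of_mem_erase hℓ
      have hℓIcc := Finset.mem_of_mem_erase hℓ
      have hIcc' := Finset.mem_Icc.1 hℓIcc
      rcases lt_or_gt_of_ne hℓne with hlt | hgt
      · exact Dvd.dvd.mul_right (pow_dvd_pow _ (by omega)) _
      · rw [htop ℓ hℓIcc (by omega)]
        simp
    have hcoordZ : ∀ t, (q : ℤ) ^ (a - L) * ((min ((c L t).val) (q - (c L t).val) : ℕ) : ℤ)
        ≤ |w t| := by
      intro t
      refine intLee_lb hq (pow_pos (by omega) _) (ZMod.val_lt _) ?_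
      rw [← pow_succ]
      exact hdvd t
    have hcoord : ∀ t, (q : ℝ) ^ (a - L) * ((min ((c L t).val) (q - (c L t).val) : ℕ) : ℝ)
        ≤ |((w t : ℤ) : ℝ)| := by
      intro t
      rw [← Int.cast_abs]
      exact_mod_cast hcoordZ t
    have hpair : codeDistP q n P (C L : Set (Fin n → ZMod q))
        ≤ (∑ i, ((min ((c L i).val) (q - (c L i).val) : ℕ) : ℝ) ^ P) ^ (1 / P) := by
      have hmem : (∑ i, ((min ((c L i).val) (q - (c L i).val) : ℕ) : ℝ) ^ P) ^ (1 / P)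
          ∈ {d : ℝ | ∃ x ∈ (C L : Set (Fin n → ZMod q)), ∃ y ∈ (C L : Set (Fin n → ZMod q)),
              x ≠ y ∧ d = (∑ i, ((min ((x i - y i).val) (q - (x i - y i).val) : ℕ) : ℝ) ^ P) ^ (1 / P)} := by
        refine ⟨c L, hc L hL1 hLa, 0, zero_mem _, hcL, ?_⟩
        simp only [Pi.zero_apply, sub_zero]
      exact csInf_le (codeSet_bddBelow P _) hmem
    calc sInf _ ≤ (q : ℝ) ^ (a - L) * codeDistP q n P (C L : Set (Fin n → ZMod q)) := by
          refine csInf_le hTbdd (Set.mem_insert_iff.2 (Or.inr ⟨L, Finset.mem_Icc.2 ⟨hL1, hLa⟩, rfl⟩))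
      _ ≤ (q : ℝ) ^ (a - L) * (∑ i, ((min ((c L i).val) (q - (c L i).val) : ℕ) : ℝ) ^ P) ^ (1 / P) :=
          mul_le_mul_of_nonneg_left hpair (by positivity)
      _ = (∑ i, ((q : ℝ) ^ (a - L) * ((min ((c L i).val) (q - (c L i).val) : ℕ) : ℝ)) ^ P) ^ (1 / P) :=
          (norm_scale P hP _ (by positivity) _ (fun i => Nat.cast_nonneg _)).symm
      _ ≤ (∑ i, |((w i : ℤ) : ℝ)| ^ P) ^ (1 / P) :=
          norm_mono P hP _ _ (fun i => by positivity) hcoord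

end main

section final
variable {q a n : ℕ}

lemma chain_le (C : ℕ → Submodule (ZMod q) (Fin n → ZMod q))
    (hnested : ∀ ℓ, 1 ≤ ℓ → ℓ < a → C (ℓ + 1) ≤ C ℓ)
    {ℓ : ℕ} (h1 : 1 ≤ ℓ) (h2 : ℓ ≤ a) : C a ≤ C ℓ := by
  have key : ∀ j, ℓ + j ≤ a → C (ℓ + j) ≤ C ℓ := by
    intro j
    induction j with
    | zero => intro _; exact le_rfl
    | succ j ih =>
      intro h
      have hstep : C (ℓ + j + 1) ≤ C (ℓ + j) := hnested (ℓ + j) (by omega) (by omega)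
      exact le_trans hstep (ih (by omega))
  have := key (a - ℓ) (by omega)
  rwa [show ℓ + (a - ℓ) = a by omega] at this

/-- For the smallest lattice `Λ` containing the Construction D̄ set:
(i) `d_P(Λ) ≤ min{q^a, q^{a-1}d_P(C_1), …, d_P(C_a)}`; (ii) equality if the chain is
closed under zero-one addition; (iii) under (ii), if moreover `d_P(C_ℓ) ≥ q^ℓ` for all
`ℓ`, then `d_P(Λ) = q^a`. -/
theorem lpDist_lambdaDbar (q a n : ℕ) (hq : 2 ≤ q) (ha : 1 ≤ a)
    (C : ℕ → Submodule (ZMod q) (Fin n → ZMod q))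
    (hnested : ∀ ℓ, 1 ≤ ℓ → ℓ < a → C (ℓ + 1) ≤ C ℓ)
    (hCa : C a ≠ ⊥) (P : ℝ) (hP : 1 ≤ P) :
    (lpDistInt n P (AddSubgroup.closure (gammaDbar q a n C) : Set (Fin n → ℤ))
        ≤ sInf (insert ((q : ℝ) ^ a)
            {d : ℝ | ∃ ℓ ∈ Finset.Icc 1 a,
              d = (q : ℝ) ^ (a - ℓ) * codeDistP q n P (C ℓ : Set (Fin n → ZMod q))})) ∧
    (chainClosed q a n C →
      lpDistInt n P (AddSubgroup.closure (gammaDbar q a n C) : Set (Fin n → ℤ))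
        = sInf (insert ((q : ℝ) ^ a)
            {d : ℝ | ∃ ℓ ∈ Finset.Icc 1 a,
              d = (q : ℝ) ^ (a - ℓ) * codeDistP q n P (C ℓ : Set (Fin n → ZMod q))})) ∧
    (chainClosed q a n C →
      (∀ ℓ, 1 ≤ ℓ → ℓ ≤ a → (q : ℝ) ^ ℓ ≤ codeDistP q n P (C ℓ : Set (Fin n → ZMod q))) →
      lpDistInt n P (AddSubgroup.closure (gammaDbar q a n C) : Set (Fin n → ℤ))
        = (q : ℝ) ^ a) := by
  haveI : NeZero q := ⟨by omega⟩
  have hP0 : P ≠ 0 := by linarith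
  set Λ : Set (Fin n → ℤ) := (AddSubgroup.closure (gammaDbar q a n C) : Set (Fin n → ℤ)) with hΛ
  set T : Set ℝ := insert ((q : ℝ) ^ a)
      {d : ℝ | ∃ ℓ ∈ Finset.Icc 1 a,
        d = (q : ℝ) ^ (a - ℓ) * codeDistP q n P (C ℓ : Set (Fin n → ZMod q))} with hT
  set D : Set ℝ := {d : ℝ | ∃ x ∈ Λ, ∃ y ∈ Λ, x ≠ y ∧
      d = (∑ i, |((x i - y i : ℤ) : ℝ)| ^ P) ^ (1 / P)} with hD
  have hTbdd := T_bddBelow q a n P C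
  have hTne : T.Nonempty := ⟨(q : ℝ) ^ a, Set.mem_insert _ _⟩
  have hDbdd := lpSet_bddBelow (n := n) P Λ
  -- a nonzero codeword
  obtain ⟨c0, hc0mem, hc0ne⟩ := Submodule.exists_mem_ne_zero_of_ne_bot hCa
  obtain ⟨t0, ht0⟩ := Function.ne_iff.1 hc0ne
  -- witness A : the vector (q^a, 0, …)
  set xA : Fin n → ℤ := fun t => (q : ℤ) ^ a * (if t = t0 then 1 else 0) with hxA
  have hxAmem : xA ∈ gammaDbar q a n C := by
    refine ⟨fun t => if t = t0 then 1 else 0, 0, fun _ _ _ => zero_mem _, ?_⟩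
    funext t
    show (q : ℤ) ^ a * (if t = t0 then 1 else 0) = _
    have hsum : ∑ ℓ ∈ Finset.Icc 1 a,
        (q : ℤ) ^ (a - ℓ) * ((((0 : ℕ → Fin n → ZMod q) ℓ) t).val : ℤ) = 0 :=
      Finset.sum_eq_zero fun ℓ _ => by simp
    rw [hsum, add_zero]
  have hqZ : (q : ℤ) ≠ 0 := by exact_mod_cast (by omega : q ≠ 0)
  have hxAne : xA ≠ 0 := by
    rw [Function.ne_iff]
    refine ⟨t0, ?_⟩
    show (q : ℤ) ^ a * (if t0 = t0 then 1 else 0) ≠ (0 : Fin n → ℤ) t0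
    rw [if_pos rfl, mul_one]
    exact pow_ne_zero _ hqZ
  have hAval : (∑ i, |((xA i - (0 : Fin n → ℤ) i : ℤ) : ℝ)| ^ P) ^ (1 / P) = (q : ℝ) ^ a := by
    have hterm : ∀ i ∈ Finset.univ, |((xA i - (0 : Fin n → ℤ) i : ℤ) : ℝ)| ^ P
        = if i = t0 then ((q : ℝ) ^ a) ^ P else 0 := by
      intro i _
      by_cases hi : i = t0
      · have he : xA i - (0 : Fin n → ℤ) i = (q : ℤ) ^ a := by
          show (q : ℤ) ^ a * (if i = t0 then 1 else 0) - 0 = _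
          rw [if_pos hi]; ring
        rw [he, if_pos hi]
        norm_num
      · have he : xA i - (0 : Fin n → ℤ) i = 0 := by
          show (q : ℤ) ^ a * (if i = t0 then 1 else 0) - 0 = 0
          rw [if_neg hi]; ring
        rw [he, if_neg hi]
        simp [Real.zero_rpow hP0]
    rw [Finset.sum_congr rfl hterm, Finset.sum_ite_eq' Finset.univ t0 (fun _ => ((q : ℝ) ^ a) ^ P),
      if_pos (Finset.mem_univ t0), rpow_PinvP hP (by positivity)]
  have hAmemD : (q : ℝ) ^ a ∈ D := by
    refine ⟨xA, AddSubgroup.subset_closure hxAmem, 0,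
      AddSubgroup.subset_closure (gamma_zero_mem hq a C), hxAne, hAval.symm⟩
  have hDne : D.Nonempty := ⟨_, hAmemD⟩
  -- part (i)
  have part1 : lpDistInt n P Λ ≤ sInf T := by
    refine le_csInf hTne ?_
    rintro b hb
    rcases Set.mem_insert_iff.1 hb with rfl | ⟨ℓ, hℓIcc, rfl⟩
    · exact csInf_le hDbdd hAmemD
    · rw [Finset.mem_Icc] at hℓIcc
      obtain ⟨hℓ1, hℓa⟩ := hℓIcc
      -- minimizing pair in C ℓ
      have hsub := chain_le C hnested hℓ1 hℓa
      obtain ⟨x₀, hx₀, y₀, hy₀, hxy₀, hd⟩ := codeDist_exists hq P (C ℓ : Set (Fin n → ZMod q))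
        ⟨c0, hsub hc0mem, 0, zero_mem _, hc0ne⟩
      set v : Fin n → ZMod q := x₀ - y₀ with hv
      have hd' : codeDistP q n P (C ℓ : Set (Fin n → ZMod q))
          = (∑ i, ((min ((v i).val) (q - (v i).val) : ℕ) : ℝ) ^ P) ^ (1 / P) := hd
      have hvmem : v ∈ C ℓ := sub_mem hx₀ hy₀
      have hvne : v ≠ 0 := sub_ne_zero.2 hxy₀
      set X : Fin n → ℤ := fun t => (q : ℤ) ^ (a - ℓ) * (((v + v) t).val : ℤ) with hX
      set Y : Fin n → ℤ := fun t => (q : ℤ) ^ (a - ℓ) * ((v t).val : ℤ) with hY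
      have hXmem := pow_sig_mem hq a C hℓ1 hℓa (add_mem hvmem hvmem)
      have hYmem := pow_sig_mem hq a C hℓ1 hℓa hvmem
      have hcoord : ∀ t, |((X t - Y t : ℤ) : ℝ)|
          = (q : ℝ) ^ (a - ℓ) * ((min ((v t).val) (q - (v t).val) : ℕ) : ℝ) := by
        intro t
        have hint : |X t - Y t| = (q : ℤ) ^ (a - ℓ) * ((min ((v t).val) (q - (v t).val) : ℕ) : ℤ) := by
          rw [hX, hY]
          dsimp only
          rw [← mul_sub, abs_mul, abs_of_nonneg (by positivity : (0:ℤ) ≤ (q:ℤ) ^ (a - ℓ))]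
          congr 1
          have := coord_abs hq (v t)
          rw [← this]
          congr 1
        rw [← Int.cast_abs]
        exact_mod_cast hint
      have hXYne : X ≠ Y := by
        obtain ⟨t1, hvt1⟩ := Function.ne_iff.1 hvne
        intro h
        have h0 := hcoord t1
        rw [h, sub_self] at h0
        simp only [Int.cast_zero, abs_zero] at h0
        have hval : (v t1).val ≠ 0 := fun hc => hvt1 ((ZMod.val_eq_zero _).1 hc)
        have hvlt := ZMod.val_lt (v t1)
        have hminpos : 0 < (min ((v t1).val) (q - (v t1).val) : ℕ) := by omega
        have : (0:ℝ) < (q : ℝ) ^ (a - ℓ) * ((min ((v t1).val) (q - (v t1).val) : ℕ) : ℝ) := by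
          apply mul_pos (by positivity)
          exact_mod_cast hminpos
        linarith
      have hBval : (∑ i, |((X i - Y i : ℤ) : ℝ)| ^ P) ^ (1 / P)
          = (q : ℝ) ^ (a - ℓ) * codeDistP q n P (C ℓ : Set (Fin n → ZMod q)) := by
        have hterm : ∀ i ∈ Finset.univ, |((X i - Y i : ℤ) : ℝ)| ^ P
            = ((q : ℝ) ^ (a - ℓ) * ((min ((v i).val) (q - (v i).val) : ℕ) : ℝ)) ^ P := by
          intro i _
          rw [hcoord i]
        rw [Finset.sum_congr rfl hterm,
          norm_scale P hP _ (by positivity) _ (fun i => Nat.cast_nonneg _), hd']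
      have hmemD : (q : ℝ) ^ (a - ℓ) * codeDistP q n P (C ℓ : Set (Fin n → ZMod q)) ∈ D :=
        ⟨X, AddSubgroup.subset_closure hXmem, Y, AddSubgroup.subset_closure hYmem, hXYne,
          hBval.symm⟩
      exact csInf_le hDbdd hmemD
  refine ⟨part1, ?_, ?_⟩
  · -- part (ii)
    intro hch
    refine le_antisymm part1 (le_csInf hDne ?_)
    rintro d ⟨x, hx, y, hy, hxy, rfl⟩
    rw [hΛ, closure_gamma_eq hq a C hch] at hx hy
    obtain ⟨hadd, hneg⟩ := gamma_add_neg hq a C hch a le_rfl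
    have hwmem : x - y ∈ gammaDbar q a n C := by
      rw [sub_eq_add_neg]
      exact hadd _ hx _ (hneg _ hy)
    have hwne : x - y ≠ 0 := sub_ne_zero.2 hxy
    have := gamma_norm_lb hq C P hP hwmem hwne
    simpa only [Pi.sub_apply] using this
  · -- part (iii)
    intro hch hge
    have part2 : lpDistInt n P Λ = sInf T := by
      refine le_antisymm part1 (le_csInf hDne ?_)
      rintro d ⟨x, hx, y, hy, hxy, rfl⟩
      rw [hΛ, closure_gamma_eq hq a C hch] at hx hy
      obtain ⟨hadd, hneg⟩ := gamma_add_neg hq a C hch a le_rfl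
      have hwmem : x - y ∈ gammaDbar q a n C := by
        rw [sub_eq_add_neg]
        exact hadd _ hx _ (hneg _ hy)
      have hwne : x - y ≠ 0 := sub_ne_zero.2 hxy
      have := gamma_norm_lb hq C P hP hwmem hwne
      simpa only [Pi.sub_apply] using this
    rw [part2]
    refine le_antisymm (csInf_le hTbdd (Set.mem_insert _ _)) (le_csInf hTne ?_)
    rintro b hb
    rcases Set.mem_insert_iff.1 hb with rfl | ⟨ℓ, hℓIcc, rfl⟩
    · exact le_rfl
    · rw [Finset.mem_Icc] at hℓIcc
      obtain ⟨hℓ1, hℓa⟩ := hℓIcc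
      calc (q : ℝ) ^ a = (q : ℝ) ^ (a - ℓ) * (q : ℝ) ^ ℓ := by
            rw [← pow_add]
            congr 1
            omega
        _ ≤ (q : ℝ) ^ (a - ℓ) * codeDistP q n P (C ℓ : Set (Fin n → ZMod q)) :=
            mul_le_mul_of_nonneg_left (hge ℓ hℓ1 hℓa) (by positivity)


end final
end

section
/- Let Λ ⊆ ℝⁿ be a full-rank lattice with dual lattice Λ*. Then for every real P with 2 ≤ P < ∞, and also for P = ∞, the L_P minimum distances satisfy d_P(Λ) · d_P(Λ*) ≤ n. -/
/-- The `L_P` minimum distance of a subset of `ℝⁿ`. -/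
noncomputable def lpDistR (n : ℕ) (P : ℝ) (S : Set (Fin n → ℝ)) : ℝ :=
  sInf {d : ℝ | ∃ x ∈ S, ∃ y ∈ S, x ≠ y ∧ d = (∑ i, |x i - y i| ^ P) ^ (1 / P)}

/-- The `L_∞` minimum distance of a subset of `ℝⁿ`. -/
noncomputable def linfDistR (n : ℕ) (S : Set (Fin n → ℝ)) : ℝ :=
  sInf {d : ℝ | ∃ x ∈ S, ∃ y ∈ S, x ≠ y ∧ d = ⨆ i, |x i - y i|}

/-- The dual lattice of a subset of `ℝⁿ`. -/
def dualLattice (n : ℕ) (L : Set (Fin n → ℝ)) : Set (Fin n → ℝ) :=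
  {y | ∀ x ∈ L, ∃ k : ℤ, ∑ i, y i * x i = (k : ℝ)}

/-!
Minkowski's theorem for the cube `[-r, r]ⁿ`, whose volume is `(2r)ⁿ`, gives a nonzero point of
`Λ` of sup-norm at most `|det b|^(1/n)`. The dual lattice is spanned by the rows of `(bᵀ)⁻¹`
(`Λ* = {y | b y ∈ ℤⁿ}`), whose determinant is `|det b|⁻¹`, so it has a nonzero point of sup-norm
at most `|det b|^(-1/n)`. Hence `d_∞(Λ) d_∞(Λ*) ≤ 1 ≤ n`, and since `‖v‖_P ≤ n^(1/P) ‖v‖_∞`,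
`d_P(Λ) d_P(Λ*) ≤ n^(2/P) ≤ n` for `P ≥ 2`.
-/

open Matrix MeasureTheory Submodule

section MinimumDistance

variable {n : ℕ} {P r : ℝ} {S : Set (Fin n → ℝ)} {x : Fin n → ℝ}

theorem lpDistR_nonneg : 0 ≤ lpDistR n P S :=
  Real.sInf_nonneg <| by
    rintro d ⟨u, -, v, -, -, rfl⟩
    positivity

theorem linfDistR_nonneg : 0 ≤ linfDistR n S :=
  Real.sInf_nonneg <| by
    rintro d ⟨u, -, v, -, -, rfl⟩
    exact Real.iSup_nonneg fun i => abs_nonneg _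

theorem lpDistR_zero_dim (P : ℝ) (S : Set (Fin 0 → ℝ)) : lpDistR 0 P S = 0 := by
  refine (congrArg sInf (Set.eq_empty_of_forall_notMem ?_)).trans Real.sInf_empty
  rintro d ⟨x, -, y, -, hxy, -⟩
  exact hxy (Subsingleton.elim x y)

theorem linfDistR_zero_dim (S : Set (Fin 0 → ℝ)) : linfDistR 0 S = 0 := by
  refine (congrArg sInf (Set.eq_empty_of_forall_notMem ?_)).trans Real.sInf_empty
  rintro d ⟨x, -, y, -, hxy, -⟩
  exact hxy (Subsingleton.elim x y)

theorem lpDistR_le_of_abs_le (hP : 0 < P) (h0 : 0 ∈ S) (hx : x ∈ S) (hx0 : x ≠ 0)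
    (hxr : ∀ i, |x i| ≤ r) : lpDistR n P S ≤ (n : ℝ) ^ (1 / P) * r := by
  obtain ⟨j, -⟩ := Function.ne_iff.mp hx0
  have hr : 0 ≤ r := (abs_nonneg _).trans (hxr j)
  have hbdd : BddBelow {d : ℝ | ∃ x ∈ S, ∃ y ∈ S, x ≠ y ∧
      d = (∑ i, |x i - y i| ^ P) ^ (1 / P)} := by
    refine ⟨0, ?_⟩
    rintro d ⟨u, -, v, -, -, rfl⟩
    positivity
  calc lpDistR n P S ≤ (∑ i, |x i - (0 : Fin n → ℝ) i| ^ P) ^ (1 / P) :=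
        csInf_le hbdd ⟨x, hx, 0, h0, hx0, rfl⟩
    _ ≤ (∑ _i : Fin n, r ^ P) ^ (1 / P) := by
      refine Real.rpow_le_rpow (by positivity) (Finset.sum_le_sum fun i _ => ?_) (by positivity)
      exact Real.rpow_le_rpow (abs_nonneg _) (by simpa using hxr i) hP.le
    _ = (n : ℝ) ^ (1 / P) * r := by
      rw [Finset.sum_const, Finset.card_univ, Fintype.card_fin, nsmul_eq_mul,
        Real.mul_rpow (Nat.cast_nonneg n) (by positivity), one_div, Real.rpow_rpow_inv hr hP.ne']
    
theorem lpDistR_mul_lpDistR_le_of_abs_le {T : Set (Fin n → ℝ)} {y : Fin n → ℝ} (hP : 2 ≤ P)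
    (hS : 0 ∈ S) (hx : x ∈ S) (hx0 : x ≠ 0) (hxr : ∀ i, |x i| ≤ r)
    (hT : 0 ∈ T) (hy : y ∈ T) (hy0 : y ≠ 0) (hyr : ∀ i, |y i| ≤ r⁻¹) :
    lpDistR n P S * lpDistR n P T ≤ n := by
  have hP0 : 0 < P := by linarith
  obtain ⟨j, -⟩ := Function.ne_iff.mp hx0
  have hn : (1 : ℝ) ≤ n := by exact_mod_cast Fin.pos j
  have hr : 0 < r := by
    obtain ⟨k, hk⟩ := Function.ne_iff.mp hy0
    exact inv_pos.mp ((abs_pos.mpr hk).trans_le (hyr k))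
  have hexp : 1 / P + 1 / P ≤ 1 := by
    rw [← two_mul, mul_one_div]
    exact (div_le_one hP0).mpr hP
  calc _ ≤ ((n : ℝ) ^ (1 / P) * r) * ((n : ℝ) ^ (1 / P) * r⁻¹) :=
        mul_le_mul (lpDistR_le_of_abs_le hP0 hS hx hx0 hxr)
          (lpDistR_le_of_abs_le hP0 hT hy hy0 hyr) lpDistR_nonneg (by positivity)
    _ = (n : ℝ) ^ (1 / P + 1 / P) := by
      rw [Real.rpow_add (by positivity)]
      field_simp
    _ ≤ (n : ℝ) ^ (1 : ℝ) := Real.rpow_le_rpow_of_exponent_le hn hexp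
    _ = n := Real.rpow_one _

theorem linfDistR_le_of_abs_le (h0 : 0 ∈ S) (hx : x ∈ S) (hx0 : x ≠ 0)
    (hxr : ∀ i, |x i| ≤ r) : linfDistR n S ≤ r := by
  obtain ⟨j, -⟩ := Function.ne_iff.mp hx0
  have : Nonempty (Fin n) := ⟨j⟩
  have hbdd : BddBelow {d : ℝ | ∃ x ∈ S, ∃ y ∈ S, x ≠ y ∧ d = ⨆ i, |x i - y i|} := by
    refine ⟨0, ?_⟩
    rintro d ⟨u, -, v, -, -, rfl⟩
    exact Real.iSup_nonneg fun i => abs_nonneg _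
  calc linfDistR n S ≤ ⨆ i, |x i - (0 : Fin n → ℝ) i| :=
        csInf_le hbdd ⟨x, hx, 0, h0, hx0, rfl⟩
    _ ≤ r := ciSup_le fun i => by simpa using hxr i

theorem linfDistR_mul_linfDistR_le_of_abs_le {T : Set (Fin n → ℝ)} {y : Fin n → ℝ}
    (hS : 0 ∈ S) (hx : x ∈ S) (hx0 : x ≠ 0) (hxr : ∀ i, |x i| ≤ r)
    (hT : 0 ∈ T) (hy : y ∈ T) (hy0 : y ≠ 0) (hyr : ∀ i, |y i| ≤ r⁻¹) :
    linfDistR n S * linfDistR n T ≤ 1 := by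
  obtain ⟨k, hk⟩ := Function.ne_iff.mp hy0
  have hr : 0 < r := inv_pos.mp ((abs_pos.mpr hk).trans_le (hyr k))
  calc _ ≤ r * r⁻¹ :=
        mul_le_mul (linfDistR_le_of_abs_le hS hx hx0 hxr)
          (linfDistR_le_of_abs_le hT hy hy0 hyr) linfDistR_nonneg hr.le
    _ = 1 := mul_inv_cancel₀ hr.ne'

end MinimumDistance

theorem exists_ne_zero_mem_setOf_sum_zsmul_abs_le {ι : Type*} [Fintype ι] [DecidableEq ι]
    [Nonempty ι] {b : ι → ι → ℝ} (hb : LinearIndependent ℝ b) :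
    ∃ x ∈ {x : ι → ℝ | ∃ z : ι → ℤ, x = ∑ i, z i • b i}, x ≠ 0 ∧
      ∀ i, |x i| ≤ |(Matrix.of b).det| ^ (Fintype.card ι : ℝ)⁻¹ := by
  have hcard : Fintype.card ι = Module.finrank ℝ (ι → ℝ) := by simp
  let B := basisOfLinearIndependentOfCardEqFinrank hb hcard
  have hB : ⇑B = b := coe_basisOfLinearIndependentOfCardEqFinrank hb hcard
  set r := |(Matrix.of b).det| ^ (Fintype.card ι : ℝ)⁻¹
  have hr : 0 ≤ r := by positivity
  have : Countable (span ℤ (Set.range B)).toAddSubgroup :=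
    inferInstanceAs (Countable (span ℤ (Set.range B)))
  have hvol : volume (ZSpan.fundamentalDomain B) * 2 ^ Module.finrank ℝ (ι → ℝ) ≤
      volume (Metric.closedBall (0 : ι → ℝ) r) := by
    rw [ZSpan.volume_fundamentalDomain, hB, Real.volume_pi_closedBall 0 hr, ← hcard, mul_pow,
      Real.rpow_inv_natCast_pow (abs_nonneg _) Fintype.card_ne_zero, ← ENNReal.ofReal_ofNat,
      ← ENNReal.ofReal_pow zero_le_two, ← ENNReal.ofReal_mul (abs_nonneg _), mul_comm]
  obtain ⟨⟨x, hxL⟩, hx0, hxr⟩ := exists_ne_zero_mem_lattice_of_measure_mul_two_pow_le_measure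
    (ZSpan.isAddFundamentalDomain' B volume) (fun x hx => by simpa using hx)
    (convex_closedBall 0 r) (isCompact_closedBall 0 r) hvol
  rw [mem_toAddSubgroup, hB, mem_span_range_iff_exists_fun] at hxL
  obtain ⟨z, rfl⟩ := hxL
  refine ⟨_, ⟨z, rfl⟩, fun h => hx0 (Subtype.ext h), fun i => ?_⟩
  rw [mem_closedBall_zero_iff, pi_norm_le_iff_of_nonneg hr] at hxr
  exact hxr i

theorem Matrix.sum_zsmul_row_eq_vecMul {m n R : Type*} [Fintype m] [Ring R] (z : m → ℤ)
    (M : Matrix m n R) : ∑ i, z i • M i = (fun i => (z i : R)) ᵥ* M := by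
  simp [vecMul_eq_sum, Int.cast_smul_eq_zsmul]

theorem dualLattice_setOf_sum_zsmul {n : ℕ} {b : Fin n → Fin n → ℝ}
    (hb : LinearIndependent ℝ b) :
    dualLattice n {x | ∃ z : Fin n → ℤ, x = ∑ i, z i • b i} =
      {y | ∃ z : Fin n → ℤ, y = ∑ i, z i • (Matrix.of b)⁻¹ᵀ i} := by
  set M := Matrix.of b
  have hM : IsUnit M.det := (isUnit_iff_isUnit_det M).mp (linearIndependent_rows_iff_isUnit.mp hb)
  ext y
  change (∀ x ∈ {x | ∃ z : Fin n → ℤ, x = ∑ i, z i • M i}, _) ↔ _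
  simp only [Set.mem_ofPred_eq, sum_zsmul_row_eq_vecMul, vecMul_transpose]
  trans ∃ k : Fin n → ℤ, M *ᵥ y = fun i => (k i : ℝ)
  · constructor
    · intro hy
      choose k hk using fun j =>
        hy (M j) ⟨Pi.single j 1, by ext; simp [vecMul, dotProduct, Pi.single_apply]⟩
      exact ⟨k, funext fun j => by simp [mulVec, dotProduct, ← hk j, mul_comm]⟩
    · rintro ⟨k, hk⟩ _ ⟨z, rfl⟩
      refine ⟨∑ i, k i * z i, ?_⟩
      change y ⬝ᵥ _ = _
      rw [dotProduct_comm, ← dotProduct_mulVec, hk]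
      simp [dotProduct, mul_comm]
  · refine exists_congr fun k => ⟨fun h => ?_, fun h => ?_⟩
    · rw [← h, mulVec_mulVec, nonsing_inv_mul _ hM, one_mulVec]
    · rw [h, mulVec_mulVec, mul_nonsing_inv _ hM, one_mulVec]

theorem zero_mem_dualLattice (n : ℕ) (L : Set (Fin n → ℝ)) : 0 ∈ dualLattice n L :=
  fun _ _ => ⟨0, by simp⟩

theorem exists_ne_zero_mem_dualLattice_abs_le {n : ℕ} [NeZero n] {b : Fin n → Fin n → ℝ}
    (hb : LinearIndependent ℝ b) :
    ∃ y ∈ dualLattice n {x | ∃ z : Fin n → ℤ, x = ∑ i, z i • b i}, y ≠ 0 ∧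
      ∀ i, |y i| ≤ (|(Matrix.of b).det| ^ (n : ℝ)⁻¹)⁻¹ := by
  have hM : IsUnit (Matrix.of b) := linearIndependent_rows_iff_isUnit.mp hb
  obtain ⟨y, hy, hy0, hyr⟩ := exists_ne_zero_mem_setOf_sum_zsmul_abs_le (b := (Matrix.of b)⁻¹ᵀ)
    (linearIndependent_cols_iff_isUnit.mpr (isUnit_nonsing_inv_iff.mpr hM))
  refine ⟨y, by rwa [dualLattice_setOf_sum_zsmul hb], hy0, fun i => ?_⟩
  rw [show Matrix.of (Matrix.of b)⁻¹ᵀ = (Matrix.of b)⁻¹ᵀ from rfl] at hyr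
  simpa [det_nonsing_inv, Real.inv_rpow] using hyr i

/-- For a full-rank lattice `Λ ⊆ ℝⁿ` and any `2 ≤ P < ∞`, as well as
`P = ∞`, one has `d_P(Λ) · d_P(Λ*) ≤ n`. -/
theorem transference_lp_ge_two (n : ℕ) (b : Fin n → Fin n → ℝ)
    (hb : LinearIndependent ℝ b) (Λ : Set (Fin n → ℝ))
    (hΛ : Λ = {x | ∃ z : Fin n → ℤ, x = ∑ i, z i • b i}) :
    (∀ P : ℝ, 2 ≤ P → lpDistR n P Λ * lpDistR n P (dualLattice n Λ) ≤ n) ∧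
    linfDistR n Λ * linfDistR n (dualLattice n Λ) ≤ n := by
  rcases Nat.eq_zero_or_pos n with rfl | hn
  · simp [lpDistR_zero_dim, linfDistR_zero_dim]
  have : NeZero n := ⟨hn.ne'⟩
  obtain ⟨x, hx, hx0, hxr⟩ := exists_ne_zero_mem_setOf_sum_zsmul_abs_le hb
  obtain ⟨y, hy, hy0, hyr⟩ := exists_ne_zero_mem_dualLattice_abs_le hb
  rw [← hΛ] at hx hy
  rw [Fintype.card_fin] at hxr
  have hΛ0 : 0 ∈ Λ := hΛ ▸ ⟨0, by simp⟩
  have hΛ0' := zero_mem_dualLattice n Λ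
  refine ⟨fun P hP => ?_, ?_⟩
  · exact lpDistR_mul_lpDistR_le_of_abs_le hP hΛ0 hx hx0 hxr hΛ0' hy hy0 hyr
  · calc _ ≤ 1 := linfDistR_mul_linfDistR_le_of_abs_le hΛ0 hx hx0 hxr hΛ0' hy hy0 hyr
      _ ≤ n := by exact_mod_cast hn
end

section
/- Let q ≥ 2, a ≥ 1, let C_a ⊆ … ⊆ C_1 ⊊ ℤ_qⁿ be nested q-ary linear codes (C_1 a proper subgroup, so C_1⊥ ≠ {0}), with integers 0 ≤ r_1 ≤ … ≤ r_a and h_1, …, h_{r_a} ∈ ℤ_qⁿ such that C_ℓ⊥ = ⟨h_1,…,h_{r_ℓ}⟩ for each ℓ, and let Λ_{D'} be the associated Construction D' lattice. Assume the dual chain C_1⊥ ⊆ C_2⊥ ⊆ … ⊆ C_a⊥ is closed under zero-one addition. Then for every real 1 ≤ P < ∞, the L_P minimum distance of the dual lattice of Λ_{D'} satisfies d_P(Λ_{D'}*) = min{1, q^{−1}d_P(C_a⊥), q^{−2}d_P(C_{a−1}⊥), …, q^{−a}d_P(C_1⊥)}, where d_P(C_ℓ⊥) is the P-Lee minimum distance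 of C_ℓ⊥. -/
/-- The dual code of a subset of `(ℤ/q)ⁿ`. -/
def dualCode (q n : ℕ) (C : Set (Fin n → ZMod q)) : Set (Fin n → ZMod q) :=
  {x | ∀ y ∈ C, ∑ i, x i * y i = 0}

/-- The Construction D' lattice: `x ∈ ℤⁿ` with `x · σ(h j) ≡ 0 (mod q^(i+1))`
for all `0 ≤ i < a` and `r (a-i-1) < j ≤ r (a-i)`. -/
def lambdaDprime (q a n : ℕ) (r : ℕ → ℕ) (h : ℕ → Fin n → ZMod q) :
    Set (Fin n → ℤ) :=
  {x | ∀ i < a, ∀ j, r (a - i - 1) < j → j ≤ r (a - i) →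
    ((q : ℤ) ^ (i + 1)) ∣ ∑ k, x k * (((h j) k).val : ℤ)}

section Representatives

variable {q n : ℕ}

def stdRep (c : Fin n → ZMod q) : Fin n → ℤ := fun i => (c i).val

noncomputable def leeNorm (P : ℝ) (c : Fin n → ZMod q) : ℝ :=
  (∑ i, ((min ((c i).val) (q - (c i).val) : ℕ) : ℝ) ^ P) ^ (1 / P)

@[simp]
lemma stdRep_zero : stdRep (0 : Fin n → ZMod q) = 0 := by
  ext; simp [stdRep]

@[simp]
lemma intCast_stdRep [NeZero q] (c : Fin n → ZMod q) (i : Fin n) :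
    ((stdRep c i : ℤ) : ZMod q) = c i := by
  simp [stdRep]

lemma stdRep_add [Fact (1 < q)] (c c' : Fin n → ZMod q) :
    stdRep (c + c') = stdRep c + stdRep c' - (q : ℤ) • stdRep (zeroOne q n c c') := by
  ext i
  have hc := (c i).val_lt
  have hc' := (c' i).val_lt
  simp only [stdRep, zeroOne, Pi.add_apply, Pi.sub_apply, Pi.smul_apply, smul_eq_mul,
    ZMod.val_add]
  split_ifs with h
  · rw [Nat.mod_eq_of_lt h]; simp
  · rw [Nat.mod_eq_sub_mod (by omega), Nat.mod_eq_of_lt (by omega), ZMod.val_one]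
    push_cast [Nat.cast_sub (not_lt.mp h)]
    ring

/-- The representative of `c` in `[-q/2, q/2)`. -/
def centeredRep (c : Fin n → ZMod q) : Fin n → ℤ :=
  stdRep c - (q : ℤ) • stdRep (zeroOne q n c c)

lemma abs_centeredRep [Fact (1 < q)] (c : Fin n → ZMod q) (i : Fin n) :
    |centeredRep c i| = ((min ((c i).val) (q - (c i).val) : ℕ) : ℤ) := by
  have hc := (c i).val_lt
  simp only [centeredRep, stdRep, zeroOne, Pi.sub_apply, Pi.smul_apply, smul_eq_mul]
  split_ifs with h
  · rw [ZMod.val_zero, min_eq_left (by omega), Nat.cast_zero, mul_zero, sub_zero,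
      abs_of_nonneg (Nat.cast_nonneg _)]
  · rw [min_eq_right (by omega), ZMod.val_one, abs_of_nonpos (by push_cast; omega)]
    push_cast [Nat.cast_sub hc.le]
    ring

@[simp]
lemma intCast_centeredRep [Fact (1 < q)] (c : Fin n → ZMod q) (i : Fin n) :
    ((centeredRep c i : ℤ) : ZMod q) = c i := by
  simp [centeredRep]

lemma centeredRep_ne_zero [Fact (1 < q)] {c : Fin n → ZMod q} (hc : c ≠ 0) : centeredRep c ≠ 0 :=
  fun h0 => hc (funext fun i => by simpa [h0] using (intCast_centeredRep c i).symm)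

lemma min_val_le_natAbs [NeZero q] {u : ZMod q} {m : ℤ} (hm : (m : ZMod q) = u) :
    min u.val (q - u.val) ≤ m.natAbs := by
  rw [← ZMod.valMinAbs_natAbs_eq_min]
  exact ZMod.natAbs_min_of_le_div_two q _ _ (by rw [ZMod.coe_valMinAbs, hm])
    (ZMod.natAbs_valMinAbs_le u)

end Representatives

section PNorm

variable {n : ℕ} {P : ℝ}

noncomputable def pNorm (P : ℝ) (v : Fin n → ℝ) : ℝ := (∑ i, |v i| ^ P) ^ (1 / P)

lemma pNorm_smul (hP : 0 < P) (s : ℝ) (v : Fin n → ℝ) : pNorm P (s • v) = |s| * pNorm P v := by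
  simp only [pNorm, Pi.smul_apply, smul_eq_mul, abs_mul,
    Real.mul_rpow (abs_nonneg s) (abs_nonneg _), ← Finset.mul_sum]
  rw [Real.mul_rpow (by positivity) (Finset.sum_nonneg fun _ _ => by positivity),
    ← Real.rpow_mul (abs_nonneg s), mul_one_div_cancel hP.ne', Real.rpow_one]

lemma pNorm_le_pNorm (hP : 0 < P) {u v : Fin n → ℝ} (h : ∀ i, |u i| ≤ |v i|) :
    pNorm P u ≤ pNorm P v :=
  Real.rpow_le_rpow (Finset.sum_nonneg fun _ _ => by positivity)
    (Finset.sum_le_sum fun i _ => Real.rpow_le_rpow (abs_nonneg _) (h i) hP.le) (by positivity)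

lemma abs_le_pNorm (hP : 0 < P) (v : Fin n → ℝ) (i : Fin n) : |v i| ≤ pNorm P v := by
  calc |v i| = (|v i| ^ P) ^ (1 / P) := by
        rw [← Real.rpow_mul (abs_nonneg _), mul_one_div_cancel hP.ne', Real.rpow_one]
    _ ≤ pNorm P v := Real.rpow_le_rpow (by positivity)
        (Finset.single_le_sum (f := fun j => |v j| ^ P) (fun j _ => by positivity)
          (Finset.mem_univ i)) (by positivity)

lemma one_le_pNorm_of_int (hP : 0 < P) {z : Fin n → ℤ} (hz : z ≠ 0) :
    1 ≤ pNorm P (fun i => (z i : ℝ)) := by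
  obtain ⟨i, hi⟩ := Function.ne_iff.mp hz
  calc (1 : ℝ) ≤ |(z i : ℝ)| := by exact_mod_cast Int.one_le_abs hi
    _ ≤ _ := abs_le_pNorm hP (fun i => (z i : ℝ)) i

variable {q : ℕ}

lemma leeNorm_eq_pNorm_centeredRep [Fact (1 < q)] (c : Fin n → ZMod q) :
    leeNorm P c = pNorm P (fun i => (centeredRep c i : ℝ)) := by
  simp only [leeNorm, pNorm, ← Int.cast_abs, abs_centeredRep, Int.cast_natCast]

lemma leeNorm_le_pNorm [Fact (1 < q)] (hP : 0 < P) {c : Fin n → ZMod q} {m : Fin n → ℤ}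
    (hm : ∀ i, (m i : ZMod q) = c i) : leeNorm P c ≤ pNorm P (fun i => (m i : ℝ)) := by
  rw [leeNorm_eq_pNorm_centeredRep]
  refine pNorm_le_pNorm hP fun i => ?_
  rw [← Int.cast_abs, ← Int.cast_abs, Int.cast_le, abs_centeredRep, Int.abs_eq_natAbs]
  exact_mod_cast min_val_le_natAbs (hm i)

end PNorm

section ConstructionD

variable {q n : ℕ}

/-- Construction D of the chain `B 1, …, B m`: the vectors
`σ(c₁) + q σ(c₂) + ⋯ + q^(m-1) σ(c_m) + q^m z` with `c_ℓ ∈ B ℓ` and `z ∈ ℤⁿ`,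
built from the lowest digit. -/
def constructionD (q n : ℕ) : ℕ → (ℕ → AddSubgroup (Fin n → ZMod q)) → Set (Fin n → ℤ)
  | 0, _ => Set.univ
  | m + 1, B => {w | ∃ c ∈ B 1, ∃ u ∈ constructionD q n m (fun ℓ => B (ℓ + 1)),
      w = stdRep c + (q : ℤ) • u}

def CarryClosed (q n m : ℕ) (B : ℕ → AddSubgroup (Fin n → ZMod q)) : Prop :=
  ∀ ℓ, 1 ≤ ℓ → ℓ < m → ∀ c ∈ B ℓ, ∀ c' ∈ B ℓ, zeroOne q n c c' ∈ B (ℓ + 1)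

lemma CarryClosed.shift {m : ℕ} {B : ℕ → AddSubgroup (Fin n → ZMod q)}
    (hB : CarryClosed q n (m + 1) B) : CarryClosed q n m (fun ℓ => B (ℓ + 1)) :=
  fun ℓ h1 h2 => hB (ℓ + 1) (by omega) (by omega)

namespace constructionD

variable {B : ℕ → AddSubgroup (Fin n → ZMod q)}

lemma pow_smul_mem (m : ℕ) (B : ℕ → AddSubgroup (Fin n → ZMod q)) (z : Fin n → ℤ) :
    (q : ℤ) ^ m • z ∈ constructionD q n m B := by
  induction m generalizing B with
  | zero => trivial
  | succ m ih => exact ⟨0, zero_mem _, _, ih _, by simp [pow_succ', mul_smul]⟩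

lemma zero_mem (m : ℕ) (B : ℕ → AddSubgroup (Fin n → ZMod q)) :
    (0 : Fin n → ℤ) ∈ constructionD q n m B := by
  simpa using pow_smul_mem m B 0

lemma pow_smul_stdRep_mem {m ℓ : ℕ} (hℓ : 1 ≤ ℓ) (hℓm : ℓ ≤ m) {c : Fin n → ZMod q}
    (hc : c ∈ B ℓ) : (q : ℤ) ^ (ℓ - 1) • stdRep c ∈ constructionD q n m B := by
  induction m generalizing B ℓ with
  | zero => omega
  | succ m ih =>
    obtain rfl | hℓ1 := eq_or_lt_of_le hℓ
    · exact ⟨c, hc, 0, zero_mem m _, by simp⟩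
    · obtain ⟨k, rfl⟩ : ∃ k, ℓ = k + 2 := ⟨ℓ - 2, by omega⟩
      refine ⟨0, AddSubgroup.zero_mem _, _, ih (ℓ := k + 1) (by omega) (by omega) hc, ?_⟩
      simp [pow_succ', mul_smul]

lemma add_mem [Fact (1 < q)] {m : ℕ} (hB : CarryClosed q n m B) {w w' : Fin n → ℤ}
    (hw : w ∈ constructionD q n m B) (hw' : w' ∈ constructionD q n m B) :
    w + w' ∈ constructionD q n m B := by
  induction m generalizing B w w' with
  | zero => trivial
  | succ m ih =>
    obtain ⟨c, hc, u, hu, rfl⟩ := hw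
    obtain ⟨c', hc', u', hu', rfl⟩ := hw'
    have hcarry : stdRep (zeroOne q n c c') ∈ constructionD q n m (fun ℓ => B (ℓ + 1)) := by
      cases m with
      | zero => trivial
      | succ m =>
        simpa using pow_smul_stdRep_mem (B := fun ℓ => B (ℓ + 1)) (m := m + 1) (ℓ := 1)
          le_rfl (by omega) (hB 1 le_rfl (by omega) c hc c' hc')
    refine ⟨c + c', AddSubgroup.add_mem _ hc hc', _,
      ih hB.shift (ih hB.shift hu hu') hcarry, ?_⟩
    rw [stdRep_add, smul_add, smul_add]
    abel

def addSubgroup [Fact (1 < q)] {m : ℕ} (hB : CarryClosed q n m B) :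
    AddSubgroup (Fin n → ℤ) :=
  let M : AddSubmonoid (Fin n → ℤ) := ⟨⟨constructionD q n m B, add_mem hB⟩, zero_mem m B⟩
  { M with
    -- `-w = (q^m - 1) • w + q^m • (-w)`
    neg_mem' := fun {w} hw => show -w ∈ M by
      have hq : 1 ≤ q ^ m := Nat.one_le_pow _ _ (by have := Fact.out (p := 1 < q); omega)
      convert M.add_mem (M.nsmul_mem hw (q ^ m - 1)) (pow_smul_mem m B (-w)) using 1
      rw [← natCast_zsmul, Nat.cast_sub hq]
      push_cast
      rw [sub_smul, smul_neg, one_smul]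
      abel }

lemma subset_of_generators_mem {m : ℕ} {M : AddSubmonoid (Fin n → ℤ)}
    (hz : ∀ z, (q : ℤ) ^ m • z ∈ M)
    (hc : ∀ ℓ, 1 ≤ ℓ → ℓ ≤ m → ∀ c ∈ B ℓ, (q : ℤ) ^ (ℓ - 1) • stdRep c ∈ M) :
    constructionD q n m B ⊆ M := by
  induction m generalizing B M with
  | zero => exact fun w _ => by simpa using hz w
  | succ m ih =>
    rintro _ ⟨c, hc1, u, hu, rfl⟩
    let M' := M.comap (DistribSMul.toAddMonoidHom (Fin n → ℤ) (q : ℤ))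
    have hu' : u ∈ M' := ih (M := M')
      (fun z => by simpa [M', pow_succ', mul_smul] using hz z)
      (fun ℓ h1 h2 c hc' => by
        have := hc (ℓ + 1) (by omega) (by omega) c hc'
        rw [Nat.add_sub_cancel] at this
        show (q : ℤ) • ((q : ℤ) ^ (ℓ - 1) • stdRep c) ∈ M
        rwa [← mul_smul, ← pow_succ', Nat.sub_add_cancel h1]) hu
    exact M.add_mem (by simpa using hc 1 le_rfl (by omega) c hc1) hu'

lemma eq_pow_smul_or_digit {m : ℕ} {w : Fin n → ℤ} (hw : w ∈ constructionD q n m B) :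
    (∃ z, w = (q : ℤ) ^ m • z) ∨ ∃ ℓ, 1 ≤ ℓ ∧ ℓ ≤ m ∧ ∃ c ∈ B ℓ, c ≠ 0 ∧
      ∃ y, w = (q : ℤ) ^ (ℓ - 1) • (stdRep c + (q : ℤ) • y) := by
  induction m generalizing B w with
  | zero => exact Or.inl ⟨w, by simp⟩
  | succ m ih =>
    obtain ⟨c, hc, u, hu, rfl⟩ := hw
    by_cases hc0 : c = 0
    · subst hc0
      rcases ih hu with ⟨z, rfl⟩ | ⟨ℓ, h1, h2, c', hc', hc'0, y, rfl⟩
      · exact Or.inl ⟨z, by simp [pow_succ', mul_smul]⟩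
      · obtain ⟨k, rfl⟩ := Nat.exists_eq_add_of_le' h1
        exact Or.inr ⟨k + 2, by omega, by omega, c', hc', hc'0, y, by simp [pow_succ', mul_smul]⟩
    · exact Or.inr ⟨1, le_rfl, by omega, c, hc, hc0, u, by simp⟩

end constructionD

end ConstructionD

section DoubleDual

lemma AddCircle.coe_intCast_div_eq_zero_iff {N : ℕ} (hN : N ≠ 0) (m : ℤ) :
    ((m / N : ℚ) : AddCircle (1 : ℚ)) = 0 ↔ (N : ℤ) ∣ m := by
  rw [AddCircle.coe_eq_zero_iff]
  constructor
  · rintro ⟨k, hk⟩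
    refine ⟨k, ?_⟩
    rw [zsmul_one, eq_div_iff (by positivity)] at hk
    exact_mod_cast (by linarith : (m : ℚ) = N * k)
  · rintro ⟨k, rfl⟩
    exact ⟨k, by rw [zsmul_one]; push_cast; field_simp⟩

lemma AddCircle.exists_eq_intCast_div_of_nsmul_eq_zero {N : ℕ} (hN : N ≠ 0)
    {x : AddCircle (1 : ℚ)} (hx : N • x = 0) : ∃ m : ℤ, x = ((m / N : ℚ) : AddCircle (1 : ℚ)) := by
  obtain ⟨r, rfl⟩ := QuotientAddGroup.mk_surjective x
  rw [← AddCircle.coe_nsmul, AddCircle.coe_eq_zero_iff] at hx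
  obtain ⟨m, hm⟩ := hx
  refine ⟨m, ?_⟩
  rw [zsmul_one, nsmul_eq_mul] at hm
  rw [hm, mul_div_cancel_left₀ _ (by positivity)]

theorem AddSubgroup.mem_of_forall_dvd_dotProduct {n N : ℕ} (hN : N ≠ 0)
    (L : AddSubgroup (Fin n → ℤ)) (hL : ∀ z, (N : ℤ) • z ∈ L) {w : Fin n → ℤ}
    (hw : ∀ x : Fin n → ℤ, (∀ g ∈ L, (N : ℤ) ∣ x ⬝ᵥ g) → (N : ℤ) ∣ x ⬝ᵥ w) : w ∈ L := by
  by_contra hwL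
  obtain ⟨χ, hχ⟩ := CharacterModule.exists_character_apply_ne_zero_of_ne_zero
    (a := (w : (Fin n → ℤ) ⧸ L)) (by rwa [Ne, QuotientAddGroup.eq_zero_iff])
  let ψ : (Fin n → ℤ) →+ AddCircle (1 : ℚ) := χ.comp (QuotientAddGroup.mk' L)
  have hψL : ∀ g ∈ L, ψ g = 0 := fun g hg => by
    change χ (g : (Fin n → ℤ) ⧸ L) = 0
    rw [(QuotientAddGroup.eq_zero_iff g).mpr hg, map_zero]
  -- every character of `ℤⁿ / L` is `y ↦ x ⬝ y / N` for some `x ∈ ℤⁿ`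
  obtain ⟨x, hx⟩ : ∃ x : Fin n → ℤ, ∀ k,
      ψ (fun j => if k = j then 1 else 0) = ((x k / N : ℚ) : AddCircle (1 : ℚ)) := by
    refine Classical.skolem.mp fun k => AddCircle.exists_eq_intCast_div_of_nsmul_eq_zero hN ?_
    rw [← map_nsmul, ← natCast_zsmul]
    exact hψL _ (hL _)
  have hψ : ∀ y, ψ y = (((x ⬝ᵥ y : ℤ) / N : ℚ) : AddCircle (1 : ℚ)) := fun y => by
    rw [show ψ y = ψ.toIntLinearMap y from rfl, LinearMap.pi_apply_eq_sum_univ]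
    simp only [AddMonoidHom.coe_toIntLinearMap, hx, dotProduct, Int.cast_sum, Int.cast_mul,
      Finset.sum_div, ← AddCircle.coe_zsmul]
    rw [← QuotientAddGroup.mk_sum]
    congr 1
    exact Finset.sum_congr rfl fun i _ => by rw [zsmul_eq_mul]; ring
  refine hχ ?_
  rw [show χ w = ψ w from rfl, hψ, AddCircle.coe_intCast_div_eq_zero_iff hN]
  exact hw x fun g hg => (AddCircle.coe_intCast_div_eq_zero_iff hN _).mp (hψ g ▸ hψL g hg)

end DoubleDual

section DualCodes

variable {q n : ℕ}

def dualCodeAddSubgroup (q n : ℕ) (S : Set (Fin n → ZMod q)) :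
    AddSubgroup (Fin n → ZMod q) where
  carrier := dualCode q n S
  add_mem' {x y} hx hy z hz := by
    simp only [Pi.add_apply, add_mul, Finset.sum_add_distrib, hx z hz, hy z hz, add_zero]
  zero_mem' z _ := by simp
  neg_mem' {x} hx z hz := by simp [neg_mul, hx z hz]

lemma dualCode_anti {S T : Set (Fin n → ZMod q)} (hST : S ⊆ T) : dualCode q n T ⊆ dualCode q n S :=
  fun _ hx y hy => hx y (hST hy)

lemma exists_ne_zero_mem_dualCode [NeZero q] {C : Submodule (ZMod q) (Fin n → ZMod q)}
    (hC : C ≠ ⊤) : ∃ c ∈ dualCode q n (C : Set (Fin n → ZMod q)), c ≠ 0 := by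
  -- double orthogonality modulo `q` for the preimage of `C` in `ℤⁿ`
  obtain ⟨u, hu⟩ : ∃ u, u ∉ C := by
    by_contra! h
    exact hC (Submodule.eq_top_iff'.mpr h)
  let π : (Fin n → ℤ) →+ (Fin n → ZMod q) := (Int.castAddHom (ZMod q)).compLeft (Fin n)
  let L := C.toAddSubgroup.comap π
  have hπ : ∀ x i, π x i = (x i : ZMod q) := fun _ _ => rfl
  have hπσ : ∀ y, π (stdRep y) = y := fun y => funext fun i => by simp [hπ]
  have huL : stdRep u ∉ L := fun h => hu (hπσ u ▸ h)
  by_contra! hall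
  refine huL (AddSubgroup.mem_of_forall_dvd_dotProduct (NeZero.ne q) L (fun z => ?_) fun x hx => ?_)
  · show π ((q : ℤ) • z) ∈ C
    convert C.zero_mem
    ext i
    simp [hπ]
  · have hx0 : π x = 0 := hall _ fun y hy => by
      have := (ZMod.intCast_zmod_eq_zero_iff_dvd _ _).mpr
        (hx (stdRep y) (show π (stdRep y) ∈ C from (hπσ y).symm ▸ hy))
      simpa [dotProduct, hπ] using this
    exact Finset.dvd_sum fun i _ => dvd_mul_of_dvd_left
      ((ZMod.intCast_zmod_eq_zero_iff_dvd _ _).mp (congrFun hx0 i)) _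

end DualCodes

section ConstructionDPrime

variable {q a n : ℕ}

lemma pow_smul_mem_lambdaDprime (r : ℕ → ℕ) (h : ℕ → Fin n → ZMod q) (z : Fin n → ℤ) :
    (q : ℤ) ^ a • z ∈ lambdaDprime q a n r h := by
  intro i hi j _ _
  simp only [Pi.smul_apply, smul_eq_mul, mul_assoc, ← Finset.mul_sum]
  exact (pow_dvd_pow _ hi).mul_right _

lemma exists_block {r : ℕ → ℕ} (hr0 : r 0 = 0) {j ℓ : ℕ} (hj : 1 ≤ j) (hjℓ : j ≤ r ℓ) :
    ∃ ℓ' ≤ ℓ, 1 ≤ ℓ' ∧ r (ℓ' - 1) < j ∧ j ≤ r ℓ' := by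
  classical
  have hex : ∃ k, j ≤ r k := ⟨ℓ, hjℓ⟩
  have hpos : Nat.find hex ≠ 0 := fun h0 => by
    have := Nat.find_spec hex
    rw [h0, hr0] at this
    omega
  exact ⟨Nat.find hex, Nat.find_min' hex hjℓ, by omega,
    not_le.mp (Nat.find_min hex (by omega)), Nat.find_spec hex⟩

lemma pow_dvd_dotProduct_stdRep_of_mem_span [Fact (1 < q)] {S : Set (Fin n → ZMod q)}
    {x : Fin n → ℤ} {k : ℕ} (hS : ∀ g ∈ S, (q : ℤ) ^ (k + 1) ∣ x ⬝ᵥ stdRep g)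
    (hcarry : ∀ c ∈ Submodule.span (ZMod q) S, ∀ c' ∈ Submodule.span (ZMod q) S,
      (q : ℤ) ^ k ∣ x ⬝ᵥ stdRep (zeroOne q n c c'))
    {c : Fin n → ZMod q} (hc : c ∈ Submodule.span (ZMod q) S) :
    (q : ℤ) ^ (k + 1) ∣ x ⬝ᵥ stdRep c := by
  have hadd : ∀ c ∈ Submodule.span (ZMod q) S, ∀ c' ∈ Submodule.span (ZMod q) S,
      (q : ℤ) ^ (k + 1) ∣ x ⬝ᵥ stdRep c → (q : ℤ) ^ (k + 1) ∣ x ⬝ᵥ stdRep c' →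
      (q : ℤ) ^ (k + 1) ∣ x ⬝ᵥ stdRep (c + c') := fun c hc c' hc' h h' => by
    have hq := mul_dvd_mul_left (q : ℤ) (hcarry c hc c' hc')
    rw [← pow_succ'] at hq
    rw [stdRep_add, dotProduct_sub, dotProduct_add, dotProduct_smul, smul_eq_mul]
    exact dvd_sub (dvd_add h h') hq
  induction hc using Submodule.span_induction with
  | mem g hg => exact hS g hg
  | zero => simp
  | add c c' hc hc' h h' => exact hadd c hc c' hc' h h'
  | smul α c hc h =>
    rw [← ZMod.natCast_zmod_val α, Nat.cast_smul_eq_nsmul]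
    induction α.val with
    | zero => simp
    | succ m ih =>
      rw [succ_nsmul]
      exact hadd _ (Submodule.smul_of_tower_mem _ m hc) c hc ih h

lemma pow_dvd_dotProduct_stdRep [Fact (1 < q)] (C : ℕ → Submodule (ZMod q) (Fin n → ZMod q))
    {r : ℕ → ℕ} (hr0 : r 0 = 0) {h : ℕ → Fin n → ZMod q}
    (hgen : ∀ ℓ, 1 ≤ ℓ → ℓ ≤ a →
      dualCode q n (C ℓ : Set (Fin n → ZMod q))
        = (Submodule.span (ZMod q) (h '' {j | 1 ≤ j ∧ j ≤ r ℓ}) : Set (Fin n → ZMod q)))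
    (hclosed : CarryClosed q n a fun ℓ => dualCodeAddSubgroup q n (C ℓ))
    {x : Fin n → ℤ} (hx : x ∈ lambdaDprime q a n r h) {ℓ : ℕ} (hℓ : 1 ≤ ℓ) (hℓa : ℓ ≤ a)
    {c : Fin n → ZMod q} (hc : c ∈ dualCode q n (C ℓ : Set (Fin n → ZMod q))) :
    (q : ℤ) ^ (a - ℓ + 1) ∣ x ⬝ᵥ stdRep c := by
  obtain ⟨k, hk⟩ : ∃ k, a - ℓ = k := ⟨_, rfl⟩
  induction k using Nat.strong_induction_on generalizing ℓ c with
  | _ k ih =>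
    have hspan := (hgen ℓ hℓ hℓa).symm.subset
    rw [hgen ℓ hℓ hℓa] at hc
    rw [hk]
    refine pow_dvd_dotProduct_stdRep_of_mem_span ?_ (fun c hc c' hc' => ?_) hc
    · rintro _ ⟨j, ⟨hj, hjr⟩, rfl⟩
      obtain ⟨ℓ', hℓ'ℓ, hℓ', hlt, hle⟩ := exists_block hr0 hj hjr
      have := hx (a - ℓ') (by omega) j (by rwa [show a - (a - ℓ') - 1 = ℓ' - 1 by omega])
        (by rwa [show a - (a - ℓ') = ℓ' by omega])
      exact (pow_dvd_pow _ (by omega)).trans this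
    · rcases k with _ | k
      · simp
      · simpa [show a - (ℓ + 1) + 1 = k + 1 by omega] using ih k (by omega) (ℓ := ℓ + 1)
          (by omega) (by omega) (hclosed ℓ hℓ (by omega) c (hspan hc) c' (hspan hc')) (by omega)

end ConstructionDPrime

section DualLattice

variable {q a n : ℕ}

lemma dvd_dotProduct_of_mem_constructionD [Fact (1 < q)]
    (C : ℕ → Submodule (ZMod q) (Fin n → ZMod q)) {r : ℕ → ℕ} (hr0 : r 0 = 0)
    {h : ℕ → Fin n → ZMod q}
    (hgen : ∀ ℓ, 1 ≤ ℓ → ℓ ≤ a →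
      dualCode q n (C ℓ : Set (Fin n → ZMod q))
        = (Submodule.span (ZMod q) (h '' {j | 1 ≤ j ∧ j ≤ r ℓ}) : Set (Fin n → ZMod q)))
    (hclosed : CarryClosed q n a fun ℓ => dualCodeAddSubgroup q n (C ℓ))
    {x : Fin n → ℤ} (hx : x ∈ lambdaDprime q a n r h) {w : Fin n → ℤ}
    (hw : w ∈ constructionD q n a fun ℓ => dualCodeAddSubgroup q n (C ℓ)) :
    (q : ℤ) ^ a ∣ x ⬝ᵥ w := by
  let M : AddSubmonoid (Fin n → ℤ) :=
    { carrier := {w | (q : ℤ) ^ a ∣ x ⬝ᵥ w}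
      add_mem' := fun {u v} hu hv => show _ ∣ x ⬝ᵥ (u + v) by
        rw [dotProduct_add]; exact dvd_add hu hv
      zero_mem' := by simp }
  refine constructionD.subset_of_generators_mem (M := M) (fun z => ?_) (fun ℓ hℓ hℓa c hc => ?_) hw
  · show (q : ℤ) ^ a ∣ x ⬝ᵥ ((q : ℤ) ^ a • z)
    rw [dotProduct_smul, smul_eq_mul]
    exact dvd_mul_right _ _
  · have := pow_dvd_dotProduct_stdRep C hr0 hgen hclosed hx hℓ hℓa hc
    show (q : ℤ) ^ a ∣ x ⬝ᵥ ((q : ℤ) ^ (ℓ - 1) • stdRep c)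
    rw [dotProduct_smul, smul_eq_mul, show a = ℓ - 1 + (a - ℓ + 1) by omega, pow_add]
    exact mul_dvd_mul_left _ this

lemma mem_lambdaDprime_of_forall_dvd_dotProduct [NeZero q]
    (C : ℕ → Submodule (ZMod q) (Fin n → ZMod q)) {r : ℕ → ℕ} {h : ℕ → Fin n → ZMod q}
    (hgen : ∀ ℓ, 1 ≤ ℓ → ℓ ≤ a →
      dualCode q n (C ℓ : Set (Fin n → ZMod q))
        = (Submodule.span (ZMod q) (h '' {j | 1 ≤ j ∧ j ≤ r ℓ}) : Set (Fin n → ZMod q)))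
    {x : Fin n → ℤ}
    (hx : ∀ g ∈ constructionD q n a (fun ℓ => dualCodeAddSubgroup q n (C ℓ)),
      (q : ℤ) ^ a ∣ x ⬝ᵥ g) :
    x ∈ lambdaDprime q a n r h := by
  intro i hi j hj1 hj2
  have hj : h j ∈ dualCode q n (C (a - i) : Set (Fin n → ZMod q)) := by
    rw [hgen (a - i) (by omega) (Nat.sub_le a i)]
    exact Submodule.subset_span ⟨j, ⟨by omega, hj2⟩, rfl⟩
  have := hx _ (constructionD.pow_smul_stdRep_mem (by omega) (Nat.sub_le a i) hj)
  have hsplit : (q : ℤ) ^ a = (q : ℤ) ^ (a - i - 1) * (q : ℤ) ^ (i + 1) := by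
    rw [← pow_add, Nat.sub_sub, Nat.sub_add_cancel hi]
  rw [dotProduct_smul, smul_eq_mul, hsplit] at this
  exact (mul_dvd_mul_iff_left (pow_ne_zero _ (Int.natCast_ne_zero.mpr (NeZero.ne q)))).mp this

def scaledCast (n : ℕ) (s : ℝ) : (Fin n → ℤ) →+ (Fin n → ℝ) where
  toFun w i := s * w i
  map_zero' := by ext; simp
  map_add' _ _ := by ext; simp [mul_add]

lemma sum_scaledCast_mul (s : ℝ) (w x : Fin n → ℤ) :
    ∑ i, scaledCast n s w i * (x i : ℝ) = s * ((x ⬝ᵥ w : ℤ) : ℝ) := by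
  simp [scaledCast, dotProduct, Finset.mul_sum, mul_comm, mul_assoc]

theorem dualLattice_lambdaDprime [Fact (1 < q)] (C : ℕ → Submodule (ZMod q) (Fin n → ZMod q))
    {r : ℕ → ℕ} (hr0 : r 0 = 0) {h : ℕ → Fin n → ZMod q}
    (hgen : ∀ ℓ, 1 ≤ ℓ → ℓ ≤ a →
      dualCode q n (C ℓ : Set (Fin n → ZMod q))
        = (Submodule.span (ZMod q) (h '' {j | 1 ≤ j ∧ j ≤ r ℓ}) : Set (Fin n → ZMod q)))
    (hclosed : CarryClosed q n a fun ℓ => dualCodeAddSubgroup q n (C ℓ)) :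
    dualLattice n ((fun v : Fin n → ℤ => fun i => (v i : ℝ)) '' lambdaDprime q a n r h)
      = scaledCast n ((q : ℝ) ^ a)⁻¹ ''
          constructionD q n a (fun ℓ => dualCodeAddSubgroup q n (C ℓ)) := by
  have hq0 : q ≠ 0 := by have := Fact.out (p := 1 < q); omega
  have hq : (q : ℝ) ^ a ≠ 0 := by positivity
  ext v
  constructor
  · intro hv
    obtain ⟨w, rfl⟩ : ∃ w, scaledCast n ((q : ℝ) ^ a)⁻¹ w = v := by
      choose w hw using fun i => hv _ ⟨(q : ℤ) ^ a • Pi.single i 1,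
        pow_smul_mem_lambdaDprime r h _, rfl⟩
      refine ⟨w, funext fun i => ?_⟩
      simp [scaledCast, ← hw i, Pi.single_apply]
      field_simp
    refine ⟨w, AddSubgroup.mem_of_forall_dvd_dotProduct (N := q ^ a) (pow_ne_zero _ hq0)
      (constructionD.addSubgroup hclosed) (fun z => by
        rw [Nat.cast_pow]; exact constructionD.pow_smul_mem a _ z) fun x hx => ?_, rfl⟩
    obtain ⟨m, hm⟩ := hv _ ⟨x, mem_lambdaDprime_of_forall_dvd_dotProduct C hgen hx, rfl⟩
    refine ⟨m, ?_⟩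
    rw [sum_scaledCast_mul, inv_mul_eq_iff_eq_mul₀ hq] at hm
    exact_mod_cast hm
  · rintro ⟨w, hw, rfl⟩ _ ⟨x, hx, rfl⟩
    obtain ⟨m, hm⟩ := dvd_dotProduct_of_mem_constructionD C hr0 hgen hclosed hx hw
    exact ⟨m, by rw [sum_scaledCast_mul, hm]; push_cast; field_simp⟩

end DualLattice

section Distance

variable {q n : ℕ} {P : ℝ}

lemma lpDistR_eq_sInf_pNorm (G : AddSubgroup (Fin n → ℝ)) :
    lpDistR n P G = sInf {d | ∃ v ∈ G, v ≠ 0 ∧ d = pNorm P v} := by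
  unfold lpDistR
  congr 1
  ext d
  constructor
  · rintro ⟨x, hx, y, hy, hxy, rfl⟩
    exact ⟨x - y, G.sub_mem hx hy, sub_ne_zero.mpr hxy, rfl⟩
  · rintro ⟨v, hv, hv0, rfl⟩
    exact ⟨v, hv, 0, G.zero_mem, hv0, by simp [pNorm]⟩

lemma leeNorm_nonneg (c : Fin n → ZMod q) : 0 ≤ leeNorm P c :=
  Real.rpow_nonneg (Finset.sum_nonneg fun _ _ => by positivity) _

lemma codeDistP_le_leeNorm (B : AddSubgroup (Fin n → ZMod q)) {c : Fin n → ZMod q}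
    (hc : c ∈ B) (hc0 : c ≠ 0) : codeDistP q n P B ≤ leeNorm P c :=
  csInf_le ⟨0, by rintro _ ⟨x, -, y, -, -, rfl⟩; exact leeNorm_nonneg (x - y)⟩
    ⟨c, hc, 0, B.zero_mem, hc0, by simp [leeNorm]⟩

lemma exists_leeNorm_eq_codeDistP [NeZero q] (B : AddSubgroup (Fin n → ZMod q))
    (hB : ∃ c ∈ B, c ≠ 0) : ∃ c ∈ B, c ≠ 0 ∧ leeNorm P c = codeDistP q n P B := by
  obtain ⟨c, hc, hc0⟩ := hB
  set S := {d : ℝ | ∃ x ∈ (B : Set (Fin n → ZMod q)), ∃ y ∈ (B : Set (Fin n → ZMod q)),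
      x ≠ y ∧ d = leeNorm P (x - y)}
  have hfin : S.Finite :=
    (Set.finite_range fun p : (Fin n → ZMod q) × (Fin n → ZMod q) => leeNorm P (p.1 - p.2)).subset
      (by rintro _ ⟨x, -, y, -, -, rfl⟩; exact ⟨(x, y), rfl⟩)
  obtain ⟨x, hx, y, hy, hxy, hd⟩ :=
    Set.Nonempty.csInf_mem (s := S) ⟨_, c, hc, 0, B.zero_mem, hc0, rfl⟩ hfin
  exact ⟨x - y, B.sub_mem hx hy, sub_ne_zero.mpr hxy, hd.symm⟩

lemma scaledCast_pow_smul [NeZero q] {a k : ℕ} (hk : k ≤ a) (m : Fin n → ℤ) :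
    scaledCast n ((q : ℝ) ^ a)⁻¹ ((q : ℤ) ^ k • m)
      = ((q : ℝ) ^ (a - k))⁻¹ • fun i => (m i : ℝ) := by
  have hq : (q : ℝ) ≠ 0 := Nat.cast_ne_zero.mpr (NeZero.ne q)
  ext i
  simp only [scaledCast, AddMonoidHom.coe_mk, ZeroHom.coe_mk, Pi.smul_apply, smul_eq_mul]
  push_cast
  rw [← Nat.sub_add_cancel hk, pow_add, Nat.add_sub_cancel]
  field_simp

lemma exists_pNorm_scaledCast_eq_codeDistP [Fact (1 < q)] (hP : 0 < P) {a ℓ : ℕ}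
    {B : ℕ → AddSubgroup (Fin n → ZMod q)} (hB : CarryClosed q n a B) (hℓ : 1 ≤ ℓ) (hℓa : ℓ ≤ a)
    (hne : ∃ c ∈ B ℓ, c ≠ 0) :
    ∃ w ∈ constructionD q n a B, scaledCast n ((q : ℝ) ^ a)⁻¹ w ≠ 0 ∧
      pNorm P (scaledCast n ((q : ℝ) ^ a)⁻¹ w)
        = ((q : ℝ) ^ (a - ℓ + 1))⁻¹ * codeDistP q n P (B ℓ) := by
  have hq : (0 : ℝ) < q := by have := Fact.out (p := 1 < q); positivity
  obtain ⟨c, hc, hc0, hcd⟩ := exists_leeNorm_eq_codeDistP (P := P) (B ℓ) hne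
  have hw : (q : ℤ) ^ (ℓ - 1) • centeredRep c ∈ constructionD.addSubgroup hB := by
    rw [centeredRep, smul_sub, smul_smul, ← pow_succ, Nat.sub_add_cancel hℓ]
    refine sub_mem (constructionD.pow_smul_stdRep_mem hℓ hℓa hc) ?_
    rcases hℓa.lt_or_eq with hlt | rfl
    · have := constructionD.pow_smul_stdRep_mem (ℓ := ℓ + 1) (by omega) hlt
        (hB ℓ hℓ hlt c hc c hc)
      rwa [Nat.add_sub_cancel] at this
    · exact constructionD.pow_smul_mem _ _ _
  refine ⟨_, hw, ?_⟩
  rw [scaledCast_pow_smul (by omega), show a - (ℓ - 1) = a - ℓ + 1 by omega,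
    pNorm_smul hP, abs_of_pos (by positivity), ← leeNorm_eq_pNorm_centeredRep, hcd]
  exact ⟨smul_ne_zero (by positivity) fun h0 => centeredRep_ne_zero hc0
    (funext fun i => by simpa using congrFun h0 i), rfl⟩

theorem lpDistR_scaledCast_constructionD [Fact (1 < q)] (hP : 0 < P) {a : ℕ}
    {B : ℕ → AddSubgroup (Fin n → ZMod q)} (hB : CarryClosed q n a B)
    (hne : ∀ ℓ, 1 ≤ ℓ → ℓ ≤ a → ∃ c ∈ B ℓ, c ≠ 0) (i₀ : Fin n) :
    lpDistR n P (scaledCast n ((q : ℝ) ^ a)⁻¹ '' constructionD q n a B)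
      = sInf (insert (1 : ℝ) {d : ℝ | ∃ ℓ ∈ Finset.Icc 1 a,
          d = ((q : ℝ) ^ (a - ℓ + 1))⁻¹ * codeDistP q n P (B ℓ)}) := by
  have hq : (0 : ℝ) < q := by have := Fact.out (p := 1 < q); positivity
  rw [show scaledCast n ((q : ℝ) ^ a)⁻¹ '' constructionD q n a B
      = (constructionD.addSubgroup hB).map (scaledCast n ((q : ℝ) ^ a)⁻¹) from rfl,
    lpDistR_eq_sInf_pNorm]
  apply csInf_eq_csInf_of_forall_exists_le
  · rintro _ ⟨_, ⟨w, hw, rfl⟩, hv0, rfl⟩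
    rcases constructionD.eq_pow_smul_or_digit hw with ⟨z, rfl⟩ | ⟨ℓ, hℓ, hℓa, c, hc, hc0, y, rfl⟩
    · rw [scaledCast_pow_smul le_rfl, Nat.sub_self, pow_zero, inv_one, one_smul] at hv0 ⊢
      refine ⟨1, Set.mem_insert _ _, one_le_pNorm_of_int hP fun hz => hv0 ?_⟩
      ext
      simp [hz]
    · refine ⟨_, Set.mem_insert_of_mem _ ⟨ℓ, Finset.mem_Icc.mpr ⟨hℓ, hℓa⟩, rfl⟩, ?_⟩
      rw [scaledCast_pow_smul (by omega), pNorm_smul hP, abs_of_pos (by positivity),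
        show a - (ℓ - 1) = a - ℓ + 1 by omega]
      gcongr
      exact (codeDistP_le_leeNorm _ hc hc0).trans (leeNorm_le_pNorm hP fun i => by simp)
  · rintro _ (rfl | ⟨ℓ, hℓ, rfl⟩)
    · refine ⟨_, ⟨_, ⟨(q : ℤ) ^ a • Pi.single i₀ 1, constructionD.pow_smul_mem a B _, rfl⟩,
        ?_, rfl⟩, ?_⟩
      all_goals rw [scaledCast_pow_smul le_rfl, Nat.sub_self, pow_zero, inv_one, one_smul]
      · exact fun h0 => by simpa using congrFun h0 i₀
      · simp [pNorm, Pi.single_apply, apply_ite, Real.zero_rpow hP.ne']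
    · obtain ⟨hℓ1, hℓa⟩ := Finset.mem_Icc.mp hℓ
      obtain ⟨w, hw, hv0, hv⟩ :=
        exists_pNorm_scaledCast_eq_codeDistP hP hB hℓ1 hℓa (hne ℓ hℓ1 hℓa)
      exact ⟨_, ⟨_, ⟨w, hw, rfl⟩, hv0, rfl⟩, hv.le⟩

end Distance

theorem lpDist_dual_lambdaDprime_general (q a n : ℕ) (hq : 2 ≤ q)
    (C : ℕ → Submodule (ZMod q) (Fin n → ZMod q))
    (hnested : ∀ ℓ, 1 ≤ ℓ → ℓ < a → C (ℓ + 1) ≤ C ℓ)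
    (hproper : C 1 ≠ ⊤)
    (r : ℕ → ℕ) (hr0 : r 0 = 0)
    (h : ℕ → Fin n → ZMod q)
    (hgen : ∀ ℓ, 1 ≤ ℓ → ℓ ≤ a →
      dualCode q n (C ℓ : Set (Fin n → ZMod q))
        = (Submodule.span (ZMod q) (h '' {j | 1 ≤ j ∧ j ≤ r ℓ}) : Set (Fin n → ZMod q)))
    (hclosed : ∀ m, 1 ≤ m → m < a →
      ∀ c ∈ dualCode q n (C m : Set (Fin n → ZMod q)),
      ∀ c' ∈ dualCode q n (C m : Set (Fin n → ZMod q)),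
        zeroOne q n c c' ∈ dualCode q n (C (m + 1) : Set (Fin n → ZMod q)))
    (P : ℝ) (hP : 1 ≤ P) :
    lpDistR n P (dualLattice n
        ((fun v : Fin n → ℤ => fun i => (v i : ℝ)) '' lambdaDprime q a n r h))
      = sInf (insert (1 : ℝ)
          {d : ℝ | ∃ ℓ ∈ Finset.Icc 1 a,
            d = ((q : ℝ) ^ (a - ℓ + 1))⁻¹
              * codeDistP q n P (dualCode q n (C ℓ : Set (Fin n → ZMod q)))}) := by
  have : Fact (1 < q) := ⟨hq⟩
  obtain ⟨c, hc, hc0⟩ := exists_ne_zero_mem_dualCode hproper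
  obtain ⟨i₀, -⟩ := Function.ne_iff.mp hc0
  have hle : ∀ ℓ, 1 ≤ ℓ → ℓ ≤ a → C ℓ ≤ C 1 := by
    intro ℓ hℓ
    induction ℓ, hℓ using Nat.le_induction with
    | base => exact fun _ => le_rfl
    | succ ℓ hℓ ih => exact fun hℓa => (hnested ℓ hℓ hℓa).trans (ih (by omega))
  rw [dualLattice_lambdaDprime C hr0 hgen hclosed]
  exact lpDistR_scaledCast_constructionD (by linarith) hclosed
    (fun ℓ h1 h2 => ⟨c, dualCode_anti (hle ℓ h1 h2) hc, hc0⟩) i₀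

/-- If the dual chain `C_1⊥ ⊆ ⋯ ⊆ C_a⊥` is closed under zero-one addition,
then `d_P(Λ_{D'}*) = min {1, q⁻¹ d_P(C_a⊥), …, q^{-a} d_P(C_1⊥)}`. -/
theorem lpDist_dual_lambdaDprime (q a n : ℕ) (hq : 2 ≤ q) (ha : 1 ≤ a)
    (C : ℕ → Submodule (ZMod q) (Fin n → ZMod q))
    (hnested : ∀ ℓ, 1 ≤ ℓ → ℓ < a → C (ℓ + 1) ≤ C ℓ)
    (hproper : C 1 ≠ ⊤)
    (r : ℕ → ℕ) (hr0 : r 0 = 0) (hrmono : ∀ ℓ < a, r ℓ ≤ r (ℓ + 1))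
    (h : ℕ → Fin n → ZMod q)
    (hgen : ∀ ℓ, 1 ≤ ℓ → ℓ ≤ a →
      dualCode q n (C ℓ : Set (Fin n → ZMod q))
        = (Submodule.span (ZMod q) (h '' {j | 1 ≤ j ∧ j ≤ r ℓ}) : Set (Fin n → ZMod q)))
    (hclosed : ∀ m, 1 ≤ m → m < a →
      ∀ c ∈ dualCode q n (C m : Set (Fin n → ZMod q)),
      ∀ c' ∈ dualCode q n (C m : Set (Fin n → ZMod q)),
        zeroOne q n c c' ∈ dualCode q n (C (m + 1) : Set (Fin n → ZMod q)))
    (P : ℝ) (hP : 1 ≤ P) :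
    lpDistR n P (dualLattice n
        ((fun v : Fin n → ℤ => fun i => (v i : ℝ)) '' lambdaDprime q a n r h))
      = sInf (insert (1 : ℝ)
          {d : ℝ | ∃ ℓ ∈ Finset.Icc 1 a,
            d = ((q : ℝ) ^ (a - ℓ + 1))⁻¹
              * codeDistP q n P (dualCode q n (C ℓ : Set (Fin n → ZMod q)))}) :=
  lpDist_dual_lambdaDprime_general q a n hq C hnested hproper r hr0 h hgen hclosed P hP
end

section
/- Let q ≥ 2, a ≥ 1, 0 ≤ r_1 ≤ … ≤ r_a, h_1,…,h_{r_a} ∈ ℤ_qⁿ, and let Λ_{D'} = {x ∈ ℤⁿ : Hx ≡ 0 (mod q^a)}, where H is the r_a × n integer matrix whose j-th row equals q^i·σ(h_j) for r_i < j ≤ r_{i+1} (0 ≤ i ≤ a−1, r_0 := 0). Let C ⊆ (ℤ/q^aℤ)ⁿ be the submodule generated by the reductions modulo q^a of the rows of H. Then Λ_{D'} = q^a · Λ_A(C)*, where Λ_A(C) ⊆ ℤⁿ is the preimage of C under componentwise reduction ℤⁿ → (ℤ/q^aℤ)ⁿ and * denotes the dual lattice. -/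
open scoped Pointwise

/-- The Construction D' lattice, given by the check matrix `H` whose `j`-th row is
`q^i · σ(h j)` for `r i < j ≤ r (i+1)`: the set of `x ∈ ℤⁿ` with `Hx ≡ 0 (mod q^a)`. -/
def lambdaDprimeH (q a n : ℕ) (r : ℕ → ℕ) (h : ℕ → Fin n → ZMod q) :
    Set (Fin n → ℤ) :=
  {x | ∀ i < a, ∀ j, r i < j → j ≤ r (i + 1) →
    ((q : ℤ) ^ a) ∣ (q : ℤ) ^ i * ∑ k, (((h j) k).val : ℤ) * x k}

/-- The set of rows of `H` reduced modulo `q^a`. -/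
def rowSet (q a n : ℕ) (r : ℕ → ℕ) (h : ℕ → Fin n → ZMod q) :
    Set (Fin n → ZMod (q ^ a)) :=
  {v | ∃ i < a, ∃ j, r i < j ∧ j ≤ r (i + 1) ∧
    v = fun k => (q : ZMod (q ^ a)) ^ i * ((((h j) k).val : ℕ) : ZMod (q ^ a))}

lemma keydvd (q a n : ℕ) (r : ℕ → ℕ) (h : ℕ → Fin n → ZMod q)
    (x : Fin n → ℤ) (hx : x ∈ lambdaDprimeH q a n r h)
    (v : Fin n → ℤ)
    (hv : (fun k => ((v k : ℤ) : ZMod (q ^ a))) ∈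
      Submodule.span (ZMod (q ^ a)) (rowSet q a n r h)) :
    ((q : ℤ)) ^ a ∣ ∑ k, v k * x k := by
  let φ : (Fin n → ZMod (q ^ a)) →ₗ[ZMod (q ^ a)] ZMod (q ^ a) :=
    { toFun := fun w => ∑ k, w k * ((x k : ℤ) : ZMod (q ^ a))
      map_add' := by intro w w'; simp [add_mul, Finset.sum_add_distrib]
      map_smul' := by intro c w; simp [Finset.mul_sum, mul_assoc]
    }
  have hspan : Submodule.span (ZMod (q ^ a)) (rowSet q a n r h) ≤ LinearMap.ker φ := by
    rw [Submodule.span_le]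
    rintro w ⟨i, hia, j, hj1, hj2, rfl⟩
    obtain ⟨m, hm⟩ := hx i hia j hj1 hj2
    have key : (∑ k, ((q : ZMod (q ^ a)) ^ i * ((((h j) k).val : ℕ) : ZMod (q ^ a)))
        * ((x k : ℤ) : ZMod (q ^ a)))
        = (((q : ℤ) ^ i * ∑ k, (((h j) k).val : ℤ) * x k : ℤ) : ZMod (q ^ a)) := by
      push_cast
      rw [Finset.mul_sum]
      congr 1; funext k; ring
    simp only [SetLike.mem_coe, LinearMap.mem_ker, φ, LinearMap.coe_mk, AddHom.coe_mk]
    rw [key, hm, ZMod.intCast_zmod_eq_zero_iff_dvd]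
    exact ⟨m, by push_cast; ring⟩
  have h0 : φ (fun k => ((v k : ℤ) : ZMod (q ^ a))) = 0 := hspan hv
  have hc : (((∑ k, v k * x k : ℤ)) : ZMod (q ^ a)) = 0 := by
    rw [← h0]
    simp only [φ, LinearMap.coe_mk, AddHom.coe_mk]
    push_cast
    rfl
  have hd := (ZMod.intCast_zmod_eq_zero_iff_dvd _ _).mp hc
  have hq' : (((q ^ a : ℕ)) : ℤ) = (q : ℤ) ^ a := by push_cast; ring
  rwa [hq'] at hd

/-- `Λ_{D'} = q^a · Λ_A(C)*`, where `C ⊆ (ℤ/q^a)ⁿ` is the submodule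
generated by the rows of `H` modulo `q^a`, and `Λ_A(C)` is its Construction A lattice. -/
theorem lambdaDprime_eq_qa_smul_dual_constructionA
    (q a n : ℕ) (hq : 2 ≤ q) (ha : 1 ≤ a)
    (r : ℕ → ℕ) (hr0 : r 0 = 0) (hrmono : ∀ i < a, r i ≤ r (i + 1))
    (h : ℕ → Fin n → ZMod q) :
    (fun v : Fin n → ℤ => fun i => (v i : ℝ)) '' lambdaDprimeH q a n r h
      = ((q : ℝ) ^ a) • {y : Fin n → ℝ |
          ∀ x ∈ {x : Fin n → ℝ | ∃ v : Fin n → ℤ,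
              (fun k => ((v k : ℤ) : ZMod (q ^ a)))
                ∈ Submodule.span (ZMod (q ^ a)) (rowSet q a n r h) ∧
              x = fun k => (v k : ℝ)},
            ∃ m : ℤ, ∑ i, y i * x i = (m : ℝ)} := by
  have hqR : ((q : ℝ)) ^ a ≠ 0 := by positivity
  have hq0 : ((q : ZMod (q ^ a))) ^ a = 0 := by rw [← Nat.cast_pow, ZMod.natCast_self]
  ext y
  constructor
  · rintro ⟨x, hx, rfl⟩
    refine ⟨fun k => (x k : ℝ) / (q : ℝ) ^ a, ?_, ?_⟩
    · rintro x' ⟨v, hv, rfl⟩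
      obtain ⟨m, hm⟩ := keydvd q a n r h x hx v hv
      refine ⟨m, ?_⟩
      have hre : (∑ k, (v k : ℝ) * (x k : ℝ)) = (q : ℝ) ^ a * m := by
        exact_mod_cast congrArg (fun t : ℤ => (t : ℝ)) hm
      have hsum : ∑ k, ((x k : ℝ) / (q : ℝ) ^ a) * (v k : ℝ)
          = (∑ k, (v k : ℝ) * (x k : ℝ)) / (q : ℝ) ^ a := by
        rw [Finset.sum_div]; congr 1; funext k; ring
      rw [hsum, hre, mul_div_cancel_left₀ _ hqR]
    · funext k
      simp only [Pi.smul_apply, smul_eq_mul]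
      field_simp
  · rintro ⟨z, hz, rfl⟩
    have hmk : ∀ k : Fin n, ∃ m : ℤ, (q : ℝ) ^ a * z k = m := by
      intro k
      have hzero : (fun l => (((if l = k then ((q : ℤ)) ^ a else 0 : ℤ) : ZMod (q ^ a))))
          = (0 : Fin n → ZMod (q ^ a)) := by
        funext l
        by_cases hl : l = k
        · simp only [hl, if_pos rfl, Pi.zero_apply]
          exact_mod_cast hq0
        · simp [hl]
      have hmem : (fun l => (((if l = k then ((q : ℤ)) ^ a else 0 : ℤ) : ZMod (q ^ a)))) ∈
          Submodule.span (ZMod (q ^ a)) (rowSet q a n r h) := by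
        rw [hzero]; exact Submodule.zero_mem _
      obtain ⟨m, hm⟩ := hz _ ⟨_, hmem, rfl⟩
      refine ⟨m, ?_⟩
      rw [← hm, Finset.sum_eq_single k]
      · simp [mul_comm]
      · intro l _ hl; simp [hl]
      · simp
    choose x hxm using hmk
    refine ⟨x, ?_, ?_⟩
    · intro i hia j hj1 hj2
      set v : Fin n → ℤ := fun k => (q : ℤ) ^ i * (((h j) k).val : ℤ) with hv
      have hmem : (fun k => ((v k : ℤ) : ZMod (q ^ a))) ∈
          Submodule.span (ZMod (q ^ a)) (rowSet q a n r h) := by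
        apply Submodule.subset_span
        refine ⟨i, hia, j, hj1, hj2, ?_⟩
        funext k
        simp only [hv]
        push_cast
        ring
      obtain ⟨m, hm⟩ := hz _ ⟨v, hmem, rfl⟩
      have hre : ((q : ℝ) ^ i * ∑ k, (((h j) k).val : ℤ) * (x k : ℝ)) = (q : ℝ) ^ a * m := by
        have h1 : (q : ℝ) ^ a * (∑ k, z k * (v k : ℝ)) = (q : ℝ) ^ a * m := by rw [hm]
        rw [Finset.mul_sum] at h1
        calc (q : ℝ) ^ i * ∑ k, (((h j) k).val : ℤ) * (x k : ℝ)
            = ∑ k, (q : ℝ) ^ a * (z k * (v k : ℝ)) := by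
              rw [Finset.mul_sum]
              congr 1; funext k
              rw [← hxm k]
              simp only [hv]
              push_cast
              ring
          _ = (q : ℝ) ^ a * m := h1
      have hZ : ((q : ℤ) ^ i * ∑ k, (((h j) k).val : ℤ) * x k) = (q : ℤ) ^ a * m := by
        have : (((q : ℤ) ^ i * ∑ k, (((h j) k).val : ℤ) * x k : ℤ) : ℝ)
            = (((q : ℤ) ^ a * m : ℤ) : ℝ) := by push_cast; push_cast at hre; exact hre
        exact_mod_cast this
      exact ⟨m, hZ⟩
    · funext k
      simp only [Pi.smul_apply, smul_eq_mul]
      exact (hxm k).symm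
end

section
/- Let q ≥ 2, a ≥ 1, 0 ≤ r_1 ≤ … ≤ r_a, h_1,…,h_{r_a} ∈ ℤ_qⁿ, and let Λ_{D'} = {x ∈ ℤⁿ : Hx ≡ 0 (mod q^a)}, where H is the r_a × n integer matrix whose j-th row equals q^i·σ(h_j) for r_i < j ≤ r_{i+1} (0 ≤ i ≤ a−1, r_0 := 0). Let K = {c ∈ (ℤ/q^aℤ)ⁿ : (H mod q^a)·c = 0}. Then for every real 1 ≤ P < ∞, the L_P minimum distance of Λ_{D'} satisfies d_P(Λ_{D'}) = min{d_P(K), q^a}, where d_P(K) is the P-Lee minimum distance of the code K ⊆ (ℤ/q^aℤ)ⁿ. -/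
open scoped ENNReal

/-- The `L_P` minimum distance of a subset of `ℤⁿ`, valued in `ℝ≥0∞`
(it is `∞` when the set has no two distinct points). -/
noncomputable def lpDistE (n : ℕ) (P : ℝ) (S : Set (Fin n → ℤ)) : ℝ≥0∞ :=
  sInf {d : ℝ≥0∞ | ∃ x ∈ S, ∃ y ∈ S, x ≠ y ∧
    d = ENNReal.ofReal ((∑ i, |((x i - y i : ℤ) : ℝ)| ^ P) ^ (1 / P))}

/-- The `P`-Lee minimum distance of a code `K ⊆ (ℤ/M)ⁿ`, valued in `ℝ≥0∞`
(it is `∞` when the code has no two distinct codewords). -/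
noncomputable def codeDistE (M n : ℕ) (P : ℝ) (K : Set (Fin n → ZMod M)) : ℝ≥0∞ :=
  sInf {d : ℝ≥0∞ | ∃ x ∈ K, ∃ y ∈ K, x ≠ y ∧
    d = ENNReal.ofReal
      ((∑ i, ((min ((x i - y i).val) (M - (x i - y i).val) : ℕ) : ℝ) ^ P) ^ (1 / P))}

/-- The Lee weight of a residue class is at most the absolute value of any
integer representative. -/
lemma lee_le_abs_s12 {M : ℕ} (hM : 0 < M) (z : ℤ) :
    min (((z : ZMod M).val : ℤ)) ((M : ℤ) - ((z : ZMod M).val : ℤ)) ≤ |z| := by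
  haveI : NeZero M := ⟨hM.ne'⟩
  have hv : ((z : ZMod M).val : ℤ) = z % M := ZMod.val_intCast z
  have h0 : 0 ≤ z % M := Int.emod_nonneg z (by exact_mod_cast hM.ne')
  have h1 : z % M < M := Int.emod_lt_of_pos z (by exact_mod_cast hM)
  have hz : (M : ℤ) * (z / M) + z % M = z := Int.mul_ediv_add_emod z M
  rw [hv]
  rcases lt_trichotomy (z / M) 0 with ht | ht | ht
  · have hMt : (M : ℤ) * (z / M) ≤ -M := by
      have : z / M ≤ -1 := by omega
      nlinarith [(by exact_mod_cast hM : (0:ℤ) < M)]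
    have : z ≤ -(M - z % M) := by omega
    calc min (z % M) ((M:ℤ) - z % M) ≤ (M:ℤ) - z % M := min_le_right _ _
      _ ≤ -z := by omega
      _ ≤ |z| := neg_le_abs z
  · rw [ht, mul_zero, zero_add] at hz
    calc min (z % M) ((M:ℤ) - z % M) ≤ z % M := min_le_left _ _
      _ = z := hz
      _ ≤ |z| := le_abs_self z
  · have hMt : (M : ℤ) ≤ (M : ℤ) * (z / M) := by
      have : 1 ≤ z / M := by omega
      nlinarith [(by exact_mod_cast hM : (0:ℤ) < M)]
    calc min (z % M) ((M:ℤ) - z % M) ≤ (M:ℤ) - z % M := min_le_right _ _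
      _ ≤ z := by omega
      _ ≤ |z| := le_abs_self z

/-- Every residue class has an integer representative whose absolute value
equals the Lee weight. -/
lemma exists_lee_lift {M : ℕ} (hM : 0 < M) (c : ZMod M) :
    ∃ z : ℤ, (z : ZMod M) = c ∧ |z| = min ((c.val : ℤ)) ((M : ℤ) - (c.val : ℤ)) := by
  haveI : NeZero M := ⟨hM.ne'⟩
  have hvlt : c.val < M := ZMod.val_lt c
  by_cases hc : 2 * c.val ≤ M
  · refine ⟨(c.val : ℤ), by simp [ZMod.natCast_val, ZMod.intCast_cast, ZMod.cast_id], ?_⟩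
    rw [abs_of_nonneg (by positivity)]
    omega
  · refine ⟨(c.val : ℤ) - M, ?_, ?_⟩
    · push_cast
      simp [ZMod.natCast_val, ZMod.cast_id, ZMod.natCast_self]
    · rw [abs_of_nonpos (by omega)]
      omega

/-- `d_P(Λ_{D'}) = min {d_P(K), q^a}`, where `K` is the kernel of `H`
over `ℤ/q^aℤ`, viewed as a code in `(ℤ/q^a)ⁿ` with its `P`-Lee minimum distance. -/
theorem lpDist_lambdaDprime_eq_min
    (q a n : ℕ) (hq : 2 ≤ q) (ha : 1 ≤ a) (hn : 0 < n)
    (r : ℕ → ℕ) (hr0 : r 0 = 0) (hrmono : ∀ i < a, r i ≤ r (i + 1))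
    (h : ℕ → Fin n → ZMod q) (P : ℝ) (hP : 1 ≤ P) :
    lpDistE n P (lambdaDprimeH q a n r h)
      = min (codeDistE (q ^ a) n P {c : Fin n → ZMod (q ^ a) |
              ∀ i < a, ∀ j, r i < j → j ≤ r (i + 1) →
                ∑ k, (q : ZMod (q ^ a)) ^ i * ((((h j) k).val : ℕ) : ZMod (q ^ a)) * c k = 0})
            ((q : ℝ≥0∞) ^ a) := by
  have hq0 : 0 < q := by omega
  have hM : 0 < q ^ a := pow_pos hq0 a
  haveI : NeZero (q ^ a) := ⟨hM.ne'⟩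
  have hP0 : P ≠ 0 := by linarith
  have hPpos : 0 < P := by linarith
  set K : Set (Fin n → ZMod (q ^ a)) := {c : Fin n → ZMod (q ^ a) |
      ∀ i < a, ∀ j, r i < j → j ≤ r (i + 1) →
        ∑ k, (q : ZMod (q ^ a)) ^ i * ((((h j) k).val : ℕ) : ZMod (q ^ a)) * c k = 0} with hKdef
  -- per-condition equivalence
  have hcond : ∀ (j i : ℕ) (x : Fin n → ℤ),
      ((q : ℤ) ^ a ∣ (q : ℤ) ^ i * ∑ k, (((h j) k).val : ℤ) * x k) ↔
        ∑ k, (q : ZMod (q ^ a)) ^ i * ((((h j) k).val : ℕ) : ZMod (q ^ a))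
          * ((x k : ℤ) : ZMod (q ^ a)) = 0 := by
    intro j i x
    have hcast : (((q : ℤ) ^ i * ∑ k, (((h j) k).val : ℤ) * x k : ℤ) : ZMod (q ^ a))
        = ∑ k, (q : ZMod (q ^ a)) ^ i * ((((h j) k).val : ℕ) : ZMod (q ^ a))
            * ((x k : ℤ) : ZMod (q ^ a)) := by
      push_cast
      rw [Finset.mul_sum]
      exact Finset.sum_congr rfl fun k _ => by ring
    rw [show ((q : ℤ) ^ a) = ((q ^ a : ℕ) : ℤ) by push_cast; ring,
      ← ZMod.intCast_zmod_eq_zero_iff_dvd, hcast]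
  -- membership equivalence
  have hmem : ∀ x : Fin n → ℤ, x ∈ lambdaDprimeH q a n r h ↔
      (fun k => ((x k : ℤ) : ZMod (q ^ a))) ∈ K := by
    intro x
    simp only [lambdaDprimeH, Set.mem_setOf_eq, hKdef, hcond]
  have hMreal : ((q : ℝ≥0∞)) ^ a = ENNReal.ofReal (((q ^ a : ℕ)) : ℝ) := by
    rw [ENNReal.ofReal_natCast, Nat.cast_pow]
  refine le_antisymm (le_min ?_ ?_) ?_
  · -- lpDistE ≤ codeDistE
    refine sInf_le_sInf ?_
    rintro d ⟨c, hc, c', hc', hne, rfl⟩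
    choose z hz1 hz2 using fun k => exists_lee_lift hM (c k - c' k)
    set y : Fin n → ℤ := fun k => (((c' k).val : ℕ) : ℤ) with hydef
    set x : Fin n → ℤ := fun k => y k + z k with hxdef
    have hyc : ∀ k, ((y k : ℤ) : ZMod (q ^ a)) = c' k := by
      intro k
      simp [hydef, ZMod.natCast_val, ZMod.intCast_cast, ZMod.cast_id]
    have hxc : ∀ k, ((x k : ℤ) : ZMod (q ^ a)) = c k := by
      intro k
      show ((y k + z k : ℤ) : ZMod (q ^ a)) = c k
      rw [Int.cast_add, hyc k, hz1 k]; ring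
    refine ⟨x, ?_, y, ?_, ?_, ?_⟩
    · rw [hmem]; rw [show (fun k => ((x k : ℤ) : ZMod (q ^ a))) = c from funext hxc]; exact hc
    · rw [hmem]; rw [show (fun k => ((y k : ℤ) : ZMod (q ^ a))) = c' from funext hyc]; exact hc'
    · obtain ⟨k0, hk0⟩ := Function.ne_iff.mp hne
      intro hxy
      exact hk0 (by rw [← hxc k0, ← hyc k0, hxy])
    · congr 1
      congr 1
      refine Finset.sum_congr rfl fun i _ => ?_
      congr 1
      have hsub : x i - y i = z i := by simp [hxdef]
      have hvle : (c i - c' i).val ≤ q ^ a := (ZMod.val_lt _).le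
      have h2 : ((x i - y i : ℤ) : ℝ) = ((z i : ℤ) : ℝ) := by rw [hsub]
      rw [h2, ← Int.cast_abs, hz2 i]
      push_cast [Nat.cast_sub hvle]
      rfl
  · -- lpDistE ≤ q^a
    apply sInf_le
    set i0 : Fin n := ⟨0, hn⟩ with hi0
    set x0 : Fin n → ℤ := fun k => if k = i0 then ((q ^ a : ℕ) : ℤ) else 0 with hx0
    refine ⟨x0, ?_, 0, ?_, ?_, ?_⟩
    · intro i hi j hj1 hj2
      have hsum0 : ∑ k, (((h j) k).val : ℤ) * x0 k
          = (((h j) i0).val : ℤ) * ((q ^ a : ℕ) : ℤ) := by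
        simp [hx0, mul_ite, Finset.sum_ite_eq']
      rw [hsum0]
      exact ⟨(q : ℤ) ^ i * (((h j) i0).val : ℤ), by push_cast; ring⟩
    · intro i hi j hj1 hj2
      simp
    · intro heq
      have := congrFun heq i0
      simp [hx0] at this
      omega
    · simp only [Pi.zero_apply, sub_zero]
      have hsum : ∑ i, |((x0 i : ℤ) : ℝ)| ^ P = ((q ^ a : ℕ) : ℝ) ^ P := by
        rw [Finset.sum_eq_single_of_mem i0 (Finset.mem_univ _)]
        · simp [hx0]
        · intro b _ hb
          simp [hx0, hb, Real.zero_rpow hP0]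
      have hpow : (((q ^ a : ℕ) : ℝ) ^ P) ^ (1 / P) = ((q ^ a : ℕ) : ℝ) := by
        rw [← Real.rpow_mul (by positivity), mul_one_div_cancel hP0, Real.rpow_one]
      rw [hsum, hpow]
      exact hMreal
  · -- min ≤ lpDistE
    refine le_sInf ?_
    rintro d ⟨x, hx, y, hy, hxy, rfl⟩
    by_cases hcc : (fun k => ((x k : ℤ) : ZMod (q ^ a))) = (fun k => ((y k : ℤ) : ZMod (q ^ a)))
    · refine le_trans (min_le_right _ _) ?_
      obtain ⟨k0, hk0⟩ := Function.ne_iff.mp hxy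
      have hdvd : ((q ^ a : ℕ) : ℤ) ∣ (x k0 - y k0) := by
        rw [← ZMod.intCast_zmod_eq_zero_iff_dvd]
        push_cast
        rw [sub_eq_zero]
        exact congrFun hcc k0
      have habs : ((q ^ a : ℕ) : ℤ) ≤ |x k0 - y k0| :=
        Int.le_of_dvd (abs_pos.mpr (sub_ne_zero.mpr hk0)) ((dvd_abs _ _).mpr hdvd)
      have hre : ((q ^ a : ℕ) : ℝ) ≤ |((x k0 - y k0 : ℤ) : ℝ)| := by
        rw [← Int.cast_abs]
        exact_mod_cast habs
      have hsum : ((q ^ a : ℕ) : ℝ) ^ P ≤ ∑ i, |((x i - y i : ℤ) : ℝ)| ^ P := by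
        refine le_trans (Real.rpow_le_rpow (by positivity) hre hPpos.le) ?_
        exact Finset.single_le_sum (f := fun i => |((x i - y i : ℤ) : ℝ)| ^ P)
          (fun i _ => Real.rpow_nonneg (abs_nonneg _) P) (Finset.mem_univ k0)
      have hfin : ((q ^ a : ℕ) : ℝ) ≤ (∑ i, |((x i - y i : ℤ) : ℝ)| ^ P) ^ (1 / P) := by
        have h1 : ((q ^ a : ℕ) : ℝ) = (((q ^ a : ℕ) : ℝ) ^ P) ^ (1 / P) := by
          rw [← Real.rpow_mul (by positivity), mul_one_div_cancel hP0, Real.rpow_one]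
        rw [h1]
        exact Real.rpow_le_rpow (by positivity) hsum (by positivity)
      rw [hMreal]
      exact le_trans (ENNReal.ofReal_le_ofReal hfin) (le_of_eq rfl)
    · refine le_trans (min_le_left _ _) ?_
      have hcK := (hmem x).mp hx
      have hc'K := (hmem y).mp hy
      refine le_trans (sInf_le ⟨_, hcK, _, hc'K, hcc, rfl⟩) (ENNReal.ofReal_le_ofReal ?_)
      refine Real.rpow_le_rpow (Finset.sum_nonneg fun i _ =>
        Real.rpow_nonneg (Nat.cast_nonneg _) P) (Finset.sum_le_sum fun i _ => ?_) (by positivity)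
      refine Real.rpow_le_rpow (Nat.cast_nonneg _) ?_ hPpos.le
      have hzz : ((x i - y i : ℤ) : ZMod (q ^ a))
          = ((x i : ℤ) : ZMod (q ^ a)) - ((y i : ℤ) : ZMod (q ^ a)) := by push_cast; ring
      have hlee := lee_le_abs_s12 hM (x i - y i)
      rw [hzz] at hlee
      have hvle : (((x i : ℤ) : ZMod (q ^ a)) - ((y i : ℤ) : ZMod (q ^ a))).val ≤ q ^ a :=
        (ZMod.val_lt _).le
      have h2 := (Int.cast_le (R := ℝ)).mpr hlee
      rw [Int.cast_abs] at h2
      refine le_trans (le_of_eq ?_) h2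
      push_cast [Nat.cast_min, Int.cast_min, Nat.cast_sub hvle]
      rfl
end

section
/- Let q ≥ 2, a ≥ 1, 0 ≤ r_1 ≤ … ≤ r_a = n, and h_1,…,h_n ∈ ℤ_qⁿ such that the integer matrix H_a with rows σ(h_1),…,σ(h_n) satisfies det(H_a) = ±1 (H_a is unimodular). Let H be the n × n integer matrix whose j-th row equals q^i·σ(h_j) for r_i < j ≤ r_{i+1} (0 ≤ i ≤ a−1, r_0 := 0), and Λ_{D'} = {x ∈ ℤⁿ : Hx ≡ 0 (mod q^a)}. Then q^a·H^{−1} has all entries in ℤ and is a generator matrix of Λ_{D'}, and the index of Λ_{D'} in ℤⁿ equals q^{r_1 + r_2 + … + r_a}. -/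
/-- The lattice `{x ∈ ℤⁿ : Hx ≡ 0 (mod q^a)}` as an additive subgroup of `ℤⁿ`. -/
def latticeOfCheck (q a n : ℕ) (H : Matrix (Fin n) (Fin n) ℤ) :
    AddSubgroup (Fin n → ℤ) where
  carrier := {x | ∀ j, ((q : ℤ) ^ a) ∣ ∑ k, H j k * x k}
  zero_mem' := by
    intro j
    simp
  add_mem' := by
    intro x y hx hy j
    have hsum : (∑ k, H j k * (x + y) k)
        = (∑ k, H j k * x k) + (∑ k, H j k * y k) := by
      simp only [Pi.add_apply, mul_add, Finset.sum_add_distrib]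
    rw [hsum]
    exact dvd_add (hx j) (hy j)
  neg_mem' := by
    intro x hx j
    have hsum : (∑ k, H j k * (-x) k) = -(∑ k, H j k * x k) := by
      simp only [Pi.neg_apply, mul_neg, Finset.sum_neg_distrib]
    rw [hsum]
    exact dvd_neg.mpr (hx j)

lemma aux_sum_card (a n : ℕ) (r : ℕ → ℕ)
    (hmono : ∀ ⦃i j⦄, i ≤ j → j ≤ a → r i ≤ r j) (hra : r a = n)
    (e : Fin n → ℕ)
    (he : ∀ j : Fin n, e j < a ∧ r (e j) ≤ (j : ℕ) ∧ (j : ℕ) < r (e j + 1)) :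
    ∑ j : Fin n, (a - e j) = ∑ ℓ ∈ Finset.Icc 1 a, r ℓ := by
  classical
  have key : ∀ j : Fin n,
      (Finset.Icc 1 a).filter (fun ℓ => (j : ℕ) < r ℓ) = Finset.Icc (e j + 1) a := by
    intro j
    obtain ⟨hea, hle, hlt⟩ := he j
    ext ℓ
    simp only [Finset.mem_filter, Finset.mem_Icc]
    constructor
    · rintro ⟨⟨h1, h2⟩, h3⟩
      refine ⟨?_, h2⟩
      by_contra hc
      push_neg at hc
      have : r ℓ ≤ r (e j) := hmono (by omega) (by omega)
      omega
    · rintro ⟨h1, h2⟩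
      exact ⟨⟨by omega, h2⟩, lt_of_lt_of_le hlt (hmono h1 h2)⟩
  have step : ∀ j : Fin n, a - e j = ((Finset.Icc 1 a).filter (fun ℓ => (j : ℕ) < r ℓ)).card := by
    intro j
    rw [key j, Nat.card_Icc]
    omega
  calc ∑ j : Fin n, (a - e j)
      = ∑ j : Fin n, ∑ ℓ ∈ Finset.Icc 1 a, (if (j : ℕ) < r ℓ then 1 else 0) := by
        refine Finset.sum_congr rfl fun j _ => ?_
        rw [step j, Finset.card_filter]
    _ = ∑ ℓ ∈ Finset.Icc 1 a, ∑ j : Fin n, (if (j : ℕ) < r ℓ then 1 else 0) :=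
        Finset.sum_comm
    _ = ∑ ℓ ∈ Finset.Icc 1 a, r ℓ := by
        refine Finset.sum_congr rfl fun ℓ hℓ => ?_
        rw [Finset.mem_Icc] at hℓ
        have hrl : r ℓ ≤ n := hra ▸ hmono hℓ.2 le_rfl
        rw [← Finset.card_filter, Finset.card_filter,
          Fin.sum_univ_eq_sum_range (fun i => if i < r ℓ then 1 else 0) n,
          ← Finset.card_filter]
        rw [show (Finset.range n).filter (fun i => i < r ℓ) = Finset.range (r ℓ) by
          ext i; simp only [Finset.mem_filter, Finset.mem_range]; omega]
        exact Finset.card_range (r ℓ)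

/-- If `H_a` (the matrix with rows `σ(h_1), …, σ(h_n)`) is unimodular,
then `q^a · H⁻¹` has integer entries, is a generator matrix of `Λ_{D'}`, and the index
of `Λ_{D'}` in `ℤⁿ` equals `q^(r_1 + r_2 + ⋯ + r_a)`. -/
theorem unimodular_generator_and_index
    (q a n : ℕ) (hq : 2 ≤ q) (ha : 1 ≤ a)
    (r : ℕ → ℕ) (hr0 : r 0 = 0) (hrmono : ∀ i < a, r i ≤ r (i + 1)) (hra : r a = n)
    (h : Fin n → Fin n → ZMod q)
    (hHa : (Matrix.of fun j k : Fin n => (((h j) k).val : ℤ)).det = 1 ∨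
           (Matrix.of fun j k : Fin n => (((h j) k).val : ℤ)).det = -1)
    (H : Matrix (Fin n) (Fin n) ℤ)
    (hH : ∀ i < a, ∀ j : Fin n, r i < (j : ℕ) + 1 → (j : ℕ) + 1 ≤ r (i + 1) →
      ∀ k, H j k = (q : ℤ) ^ i * (((h j) k).val : ℤ)) :
    (∀ j k : Fin n,
        ∃ m : ℤ, (((q : ℚ) ^ a • (H.map (fun z : ℤ => (z : ℚ)))⁻¹) : Matrix (Fin n) (Fin n) ℚ) j k
          = (m : ℚ)) ∧
    ((latticeOfCheck q a n H : Set (Fin n → ℤ))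
      = {x : Fin n → ℤ | ∃ z : Fin n → ℤ, ∀ k : Fin n,
          (x k : ℚ) = ∑ l, (((q : ℚ) ^ a • (H.map (fun z : ℤ => (z : ℚ)))⁻¹)
            : Matrix (Fin n) (Fin n) ℚ) k l * (z l : ℚ)}) ∧
    (latticeOfCheck q a n H).index = q ^ (∑ ℓ ∈ Finset.Icc 1 a, r ℓ) := by
  classical
  have hq0 : (q : ℤ) ≠ 0 := by positivity
  -- the unimodular matrix and its integer inverse
  set Ha : Matrix (Fin n) (Fin n) ℤ := Matrix.of fun j k : Fin n => (((h j) k).val : ℤ) with hHadef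
  have hdu : IsUnit Ha.det := by
    rcases hHa with h1 | h1 <;> rw [hHadef, h1]
    · exact isUnit_one
    · exact isUnit_one.neg
  set A : Matrix (Fin n) (Fin n) ℤ := Ha⁻¹ with hAdef
  have hAHa : A * Ha = 1 := Matrix.nonsing_inv_mul Ha hdu
  have hHaA : Ha * A = 1 := Matrix.mul_nonsing_inv Ha hdu
  -- monotonicity of r on [0, a]
  have hmono : ∀ ⦃i j⦄, i ≤ j → j ≤ a → r i ≤ r j := by
    intro i j hij hja
    induction j with
    | zero =>
      have : i = 0 := by omega
      rw [this]
    | succ m ih =>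
      rcases Nat.lt_or_ge i (m + 1) with hm | hm
      · exact le_trans (ih (by omega) (by omega)) (hrmono m (by omega))
      · have : i = m + 1 := by omega
        rw [this]
  -- the exponent function
  set e : Fin n → ℕ := fun j => Nat.findGreatest (fun i => r i ≤ (j : ℕ)) (a - 1) with hedef
  have he : ∀ j : Fin n, e j < a ∧ r (e j) ≤ (j : ℕ) ∧ (j : ℕ) < r (e j + 1) := by
    intro j
    have h0 : r 0 ≤ (j : ℕ) := by rw [hr0]; exact Nat.zero_le _
    have hspec : r (e j) ≤ (j : ℕ) :=
      Nat.findGreatest_spec (P := fun i => r i ≤ (j : ℕ)) (Nat.zero_le (a - 1)) h0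
    have hlea : e j ≤ a - 1 := Nat.findGreatest_le _
    refine ⟨by omega, hspec, ?_⟩
    by_cases hc : e j = a - 1
    · have hca : e j + 1 = a := by omega
      rw [hca, hra]
      exact j.isLt
    · have h2 : e j + 1 ≤ a - 1 := by omega
      have := Nat.findGreatest_is_greatest (P := fun i => r i ≤ (j : ℕ))
        (Nat.lt_succ_self (e j)) h2
      simp only [Nat.succ_eq_add_one] at this
      omega
  have hpow : ∀ j : Fin n, (q : ℤ) ^ (e j) * (q : ℤ) ^ (a - e j) = (q : ℤ) ^ a := by
    intro j
    rw [← pow_add]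
    congr 1
    have := (he j).1
    omega
  have hrow : ∀ j k, H j k = (q : ℤ) ^ (e j) * Ha j k := by
    intro j k
    obtain ⟨h1, h2, h3⟩ := he j
    exact hH (e j) h1 j (by omega) h3 k
  -- diagonal decomposition
  set D : Matrix (Fin n) (Fin n) ℤ := Matrix.diagonal fun j => (q : ℤ) ^ (e j) with hDdef
  set D2 : Matrix (Fin n) (Fin n) ℤ := Matrix.diagonal fun j => (q : ℤ) ^ (a - e j) with hD2def
  have hHdec : H = D * Ha := by
    ext j k
    rw [hDdef, Matrix.diagonal_mul]
    exact hrow j k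
  set B : Matrix (Fin n) (Fin n) ℤ := A * D2 with hBdef
  have hDD2 : D * D2 = ((q : ℤ) ^ a) • (1 : Matrix (Fin n) (Fin n) ℤ) := by
    rw [hDdef, hD2def, Matrix.diagonal_mul_diagonal]
    ext j k
    by_cases hjk : j = k
    · subst hjk
      simp [Matrix.diagonal_apply_eq, hpow j]
    · simp [Matrix.diagonal_apply_ne _ hjk, Matrix.one_apply_ne hjk]
  have hD2D : D2 * D = ((q : ℤ) ^ a) • (1 : Matrix (Fin n) (Fin n) ℤ) := by
    rw [hD2def, hDdef, Matrix.diagonal_mul_diagonal]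
    ext j k
    by_cases hjk : j = k
    · subst hjk
      simp [Matrix.diagonal_apply_eq, mul_comm, hpow j]
    · simp [Matrix.diagonal_apply_ne _ hjk, Matrix.one_apply_ne hjk]
  have hHB : H * B = ((q : ℤ) ^ a) • (1 : Matrix (Fin n) (Fin n) ℤ) := by
    rw [hHdec, hBdef, mul_assoc, ← mul_assoc Ha A D2, hHaA, one_mul, hDD2]
  have hBH : B * H = ((q : ℤ) ^ a) • (1 : Matrix (Fin n) (Fin n) ℤ) := by
    rw [hHdec, hBdef, mul_assoc, ← mul_assoc D2 D Ha, hD2D, Matrix.smul_mul, one_mul,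
      Matrix.mul_smul, hAHa]
  -- over ℚ
  have hq0Q : ((q : ℚ) ^ a) ≠ 0 := by positivity
  have hmapmul : (H.map (fun z : ℤ => (z : ℚ))) * (B.map (fun z : ℤ => (z : ℚ)))
      = ((q : ℚ) ^ a) • (1 : Matrix (Fin n) (Fin n) ℚ) := by
    have h2 : (H * B).map (fun z : ℤ => (z : ℚ))
        = (H.map (fun z : ℤ => (z : ℚ))) * (B.map (fun z : ℤ => (z : ℚ))) :=
      Matrix.map_mul (f := Int.castRingHom ℚ)
    rw [← h2, hHB]
    ext j k
    simp only [Matrix.map_apply, Matrix.smul_apply, Matrix.one_apply, smul_eq_mul]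
    split_ifs <;> push_cast <;> ring
  have hkey : ((q : ℚ) ^ a) • (H.map (fun z : ℤ => (z : ℚ)))⁻¹
      = B.map (fun z : ℤ => (z : ℚ)) := by
    have hinv : (H.map (fun z : ℤ => (z : ℚ)))⁻¹
        = ((q : ℚ) ^ a)⁻¹ • (B.map (fun z : ℤ => (z : ℚ))) := by
      apply Matrix.inv_eq_right_inv
      rw [Matrix.mul_smul, hmapmul, smul_smul, inv_mul_cancel₀ hq0Q, one_smul]
    rw [hinv, smul_smul, mul_inv_cancel₀ hq0Q, one_smul]
  refine ⟨?_, ?_, ?_⟩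
  · intro j k
    exact ⟨B j k, by rw [hkey]; rfl⟩
  · -- the set equality
    ext x
    simp only [SetLike.mem_coe, Set.mem_setOf_eq]
    have hmem : x ∈ latticeOfCheck q a n H ↔ ∀ j, ((q : ℤ) ^ a) ∣ ∑ k, H j k * x k :=
      Iff.rfl
    rw [hmem]
    constructor
    · intro hx
      choose z hz using hx
      have hHx : H.mulVec x = ((q : ℤ) ^ a) • z := by
        funext j
        simp only [Matrix.mulVec, dotProduct, Pi.smul_apply, smul_eq_mul]
        exact hz j
      have h1 : ((q : ℤ) ^ a) • B.mulVec z = ((q : ℤ) ^ a) • x := by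
        have : B.mulVec (H.mulVec x) = ((q : ℤ) ^ a) • x := by
          rw [Matrix.mulVec_mulVec, hBH, Matrix.smul_mulVec, Matrix.one_mulVec]
        rw [hHx, Matrix.mulVec_smul] at this
        exact this
      have hx2 : x = B.mulVec z := by
        funext k
        have := congrFun h1 k
        simp only [Pi.smul_apply, smul_eq_mul] at this
        exact (mul_left_cancel₀ (pow_ne_zero a hq0) this).symm
      refine ⟨z, fun k => ?_⟩
      rw [hkey]
      have : (x k : ℚ) = ((B.mulVec z k : ℤ) : ℚ) := by rw [← hx2]
      rw [this]
      simp only [Matrix.mulVec, dotProduct, Matrix.map_apply]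
      push_cast
      rfl
    · rintro ⟨z, hz⟩ j
      have hx2 : x = B.mulVec z := by
        funext k
        have hzk := hz k
        rw [hkey] at hzk
        have : (x k : ℚ) = ((B.mulVec z k : ℤ) : ℚ) := by
          rw [hzk]
          simp only [Matrix.mulVec, dotProduct, Matrix.map_apply]
          push_cast
          rfl
        exact_mod_cast this
      have : (∑ k, H j k * x k) = ((q : ℤ) ^ a) * z j := by
        have h3 : H.mulVec x j = ((q : ℤ) ^ a) * z j := by
          rw [hx2, Matrix.mulVec_mulVec, hHB, Matrix.smul_mulVec, Matrix.one_mulVec]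
          simp
        simpa only [Matrix.mulVec, dotProduct] using h3
      rw [this]
      exact Dvd.intro _ rfl
  · -- the index
    set u : (Fin n → ℤ) →+ (Fin n → ℤ) := (Matrix.mulVecLin Ha).toAddMonoidHom with hudef
    have hu : ∀ x, u x = Ha.mulVec x := fun x => rfl
    have hsurj : Function.Surjective u := by
      intro y
      refine ⟨A.mulVec y, ?_⟩
      rw [hu, Matrix.mulVec_mulVec, hHaA, Matrix.one_mulVec]
    set P : AddSubgroup (Fin n → ℤ) :=
      AddSubgroup.pi Set.univ fun j => AddSubgroup.zmultiples ((q : ℤ) ^ (a - e j)) with hPdef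
    have hcomap : latticeOfCheck q a n H = P.comap u := by
      ext x
      have hmem : x ∈ latticeOfCheck q a n H ↔ ∀ j, ((q : ℤ) ^ a) ∣ ∑ k, H j k * x k :=
        Iff.rfl
      rw [hmem, AddSubgroup.mem_comap, hPdef, AddSubgroup.mem_pi]
      have hsplit : ∀ j, (∑ k, H j k * x k) = (q : ℤ) ^ (e j) * (Ha.mulVec x j) := by
        intro j
        simp only [Matrix.mulVec, dotProduct, Finset.mul_sum]
        refine Finset.sum_congr rfl fun k _ => ?_
        rw [hrow j k, mul_assoc]
      constructor
      · intro hx j _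
        rw [Int.mem_zmultiples_iff]
        have := hx j
        rw [hsplit j, ← hpow j] at this
        exact (mul_dvd_mul_iff_left (pow_ne_zero (e j) hq0)).mp this
      · intro hx j
        have := hx j (Set.mem_univ j)
        rw [Int.mem_zmultiples_iff] at this
        rw [hsplit j, ← hpow j]
        exact mul_dvd_mul_left _ this
    rw [hcomap, AddSubgroup.index_comap_of_surjective _ hsurj, hPdef, AddSubgroup.index_pi]
    have hidx : ∀ j : Fin n, (AddSubgroup.zmultiples ((q : ℤ) ^ (a - e j))).index
        = q ^ (a - e j) := by
      intro j
      rw [Int.index_zmultiples, Int.natAbs_pow]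
      simp
    rw [Finset.prod_congr rfl fun j _ => hidx j, Finset.prod_pow_eq_pow_sum]
    congr 1
    exact aux_sum_card a n r hmono hra e he
end

section
/- Let q ≥ 2, a ≥ 1, integers k_1 ≥ k_2 ≥ … ≥ k_a ≥ 0 =: k_{a+1}, and vectors b_1,…,b_{k_1} ∈ ℤ_qⁿ, and let Λ_D be the associated Construction D set. Then the number of points of Λ_D inside the box [0, q^a)ⁿ satisfies |Λ_D ∩ [0,q^a)ⁿ| ≤ ∏_{s=1}^{a} ∏_{i=k_{s+1}+1}^{k_s} O(b_i)·q^{s−1} = q^{k_2 + k_3 + … + k_a} · ∏_{i=1}^{k_1} O(b_i), where O(b_i) is the order of b_i in ℤ_qⁿ. -/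
/-- The Construction D set associated to `q`, `a`, parameters `k` (with `k (a+1) = 0`)
and vectors `b 1, …, b (k 1)` in `ℤ_qⁿ`. -/
def lambdaD (q a n : ℕ) (k : ℕ → ℕ) (b : ℕ → Fin n → ZMod q) : Set (Fin n → ℤ) :=
  {v | ∃ z : Fin n → ℤ, ∃ α : ℕ → ℕ → ℕ,
    (∀ s, 1 ≤ s → s ≤ a → ∀ i, k (s + 1) < i → i ≤ k s →
      α s i < addOrderOf (b i) * q ^ (s - 1)) ∧
    v = fun t => (q : ℤ) ^ a * z t
      + ∑ s ∈ Finset.Icc 1 a, ∑ i ∈ Finset.Ioc (k (s + 1)) (k s),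
          (α s i : ℤ) * (q : ℤ) ^ (a - s) * (((b i) t).val : ℤ)}

/-!
A point of `Λ_D` in the box `[0, q^a)ⁿ` equals its offset `Σ α_i^{(s)} q^{a-s} σ(b_i)` reduced
mod `q^a`, so it is determined by the coefficient family `α`, which ranges over a set of size
`∏ O(b_i) q^{s-1}`. The product identity comes from the intervals `(k_{s+1}, k_s]` tiling
`(0, k_1]`, together with the summation by parts `Σ_s (s-1)(k_s - k_{s+1}) = k_2 + ⋯ + k_a`.
-/

open Finset

theorem Set.ncard_le_prod_of_bounded_coeffs {β ι : Type*} [DecidableEq ι] {s : Set β}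
    (I : Finset ι) (N : ι → ℕ) (c : β → ι → ℕ) (hc : ∀ v ∈ s, ∀ i ∈ I, c v i < N i)
    (hinj : ∀ v ∈ s, ∀ w ∈ s, (∀ i ∈ I, c v i = c w i) → v = w) :
    s.ncard ≤ ∏ i ∈ I, N i := by
  let box : Finset (∀ i ∈ I, ℕ) := I.pi fun i => Finset.range (N i)
  calc s.ncard ≤ (box : Set (∀ i ∈ I, ℕ)).ncard :=
        Set.ncard_le_ncard_of_injOn (fun v i _ => c v i)
          (fun v hv => by simpa [box] using hc v hv)
          (fun v hv w hw h => hinj v hv w hw fun i hi => congrFun₂ h i hi)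
    _ = ∏ i ∈ I, N i := by simp [box, card_pi]

theorem Finset.prod_Icc_prod_Ioc_eq_prod_Ioc {M : Type*} [CommMonoid M] (f : ℕ → M) (k : ℕ → ℕ)
    (a : ℕ) (hk : ∀ s, 1 ≤ s → s ≤ a → k (s + 1) ≤ k s) :
    ∏ s ∈ Icc 1 a, ∏ i ∈ Ioc (k (s + 1)) (k s), f i = ∏ i ∈ Ioc (k (a + 1)) (k 1), f i := by
  induction a with
  | zero => simp
  | succ m ih =>
    have hanti : AntitoneOn k (Set.Icc 1 (m + 1)) :=
      antitoneOn_of_add_one_le Set.ordConnected_Icc fun s _ hs hs' => hk s hs.1 (by grind)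
    rw [prod_Icc_succ_top (by omega), ih fun s hs hs' => hk s hs (by omega), mul_comm]
    exact prod_Ioc_consecutive f (hk (m + 1) (by omega) le_rfl)
      (hanti (by simp) (by simp) (by omega))

theorem Finset.sum_Icc_pred_mul_sub_succ (k : ℕ → ℕ) (a : ℕ)
    (hk : ∀ s, 1 ≤ s → s ≤ a → k (s + 1) ≤ k s) :
    ∑ s ∈ Icc 1 a, (s - 1) * (k s - k (s + 1)) + (a - 1) * k (a + 1) = ∑ ℓ ∈ Icc 2 a, k ℓ := by
  induction a with
  | zero => simp
  | succ m ih =>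
    rcases Nat.eq_zero_or_pos m with rfl | hm
    · simp
    rw [sum_Icc_succ_top (by omega), sum_Icc_succ_top (by omega),
      ← ih fun s hs hs' => hk s hs (by omega)]
    have hle := hk (m + 1) (by omega) le_rfl
    obtain ⟨j, rfl⟩ : ∃ j, m = j + 1 := ⟨m - 1, by omega⟩
    zify [hle]
    push_cast
    ring

section ConstructionD

variable {q a n : ℕ} {k : ℕ → ℕ} {b : ℕ → Fin n → ZMod q}

def lambdaDOffset (q a n : ℕ) (k : ℕ → ℕ) (b : ℕ → Fin n → ZMod q) (α : ℕ → ℕ → ℕ) :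
    Fin n → ℤ := fun t =>
  ∑ s ∈ Icc 1 a, ∑ i ∈ Ioc (k (s + 1)) (k s), (α s i : ℤ) * (q : ℤ) ^ (a - s) * ((b i t).val : ℤ)

theorem lambdaDOffset_congr {α β : ℕ → ℕ → ℕ}
    (h : ∀ s ∈ Icc 1 a, ∀ i ∈ Ioc (k (s + 1)) (k s), α s i = β s i) :
    lambdaDOffset q a n k b α = lambdaDOffset q a n k b β :=
  funext fun _ => sum_congr rfl fun s hs => sum_congr rfl fun i hi => by rw [h s hs i hi]

theorem exists_eq_lambdaDOffset_emod_of_mem_box {v : Fin n → ℤ}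
    (hv : v ∈ lambdaD q a n k b ∩ {v | ∀ t, 0 ≤ v t ∧ v t < (q : ℤ) ^ a}) :
    ∃ α : ℕ → ℕ → ℕ, (∀ s, 1 ≤ s → s ≤ a → ∀ i, k (s + 1) < i → i ≤ k s →
      α s i < addOrderOf (b i) * q ^ (s - 1)) ∧
      v = fun t => lambdaDOffset q a n k b α t % (q : ℤ) ^ a := by
  obtain ⟨⟨z, α, hα, rfl⟩, hbox⟩ := hv
  simp only [Set.mem_ofPred_eq] at hbox
  refine ⟨α, hα, funext fun t => ?_⟩
  rw [← Int.emod_eq_of_lt (hbox t).1 (hbox t).2, Int.mul_add_emod_self_left]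
  rfl

theorem ncard_lambdaD_box_le :
    Set.ncard (lambdaD q a n k b ∩ {v : Fin n → ℤ | ∀ t, 0 ≤ v t ∧ v t < (q : ℤ) ^ a})
      ≤ ∏ s ∈ Icc 1 a, ∏ i ∈ Ioc (k (s + 1)) (k s), addOrderOf (b i) * q ^ (s - 1) := by
  choose! α hα hv using fun v (h : v ∈ lambdaD q a n k b ∩
    {v : Fin n → ℤ | ∀ t, 0 ≤ v t ∧ v t < (q : ℤ) ^ a}) =>
    exists_eq_lambdaDOffset_emod_of_mem_box h
  refine (Set.ncard_le_prod_of_bounded_coeffs ((Icc 1 a).sigma fun s => Ioc (k (s + 1)) (k s))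
    (fun p => addOrderOf (b p.2) * q ^ (p.1 - 1)) (fun v p => α v p.1 p.2) ?_ ?_).trans_eq
    (prod_sigma _ _ _)
  · intro v h p hp
    simp only [mem_sigma, mem_Icc, mem_Ioc] at hp
    exact hα v h p.1 hp.1.1 hp.1.2 p.2 hp.2.1 hp.2.2
  · intro v hv' w hw' hvw
    rw [hv v hv', hv w hw', lambdaDOffset_congr fun s hs i hi => hvw ⟨s, i⟩ (mem_sigma.2 ⟨hs, hi⟩)]

theorem prod_addOrderOf_mul_pow_eq (hk : ∀ s, 1 ≤ s → s ≤ a → k (s + 1) ≤ k s)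
    (hka : k (a + 1) = 0) :
    ∏ s ∈ Icc 1 a, ∏ i ∈ Ioc (k (s + 1)) (k s), addOrderOf (b i) * q ^ (s - 1)
      = q ^ (∑ ℓ ∈ Icc 2 a, k ℓ) * ∏ i ∈ Icc 1 (k 1), addOrderOf (b i) := by
  have hexp : ∑ s ∈ Icc 1 a, (s - 1) * (k s - k (s + 1)) = ∑ ℓ ∈ Icc 2 a, k ℓ := by
    simpa [hka] using sum_Icc_pred_mul_sub_succ k a hk
  simp_rw [prod_mul_distrib, prod_Icc_prod_Ioc_eq_prod_Ioc _ k a hk, hka, prod_const,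
    Nat.card_Ioc, ← pow_mul, prod_pow_eq_pow_sum, hexp, mul_comm, ← Icc_add_one_left_eq_Ioc,
    zero_add]

end ConstructionD

theorem card_lambdaD_box_le_general
    (q a n : ℕ)
    (k : ℕ → ℕ) (hk : ∀ s, 1 ≤ s → s ≤ a → k (s + 1) ≤ k s) (hka : k (a + 1) = 0)
    (b : ℕ → Fin n → ZMod q) :
    Set.ncard (lambdaD q a n k b ∩ {v : Fin n → ℤ | ∀ t, 0 ≤ v t ∧ v t < (q : ℤ) ^ a})
      ≤ ∏ s ∈ Finset.Icc 1 a, ∏ i ∈ Finset.Ioc (k (s + 1)) (k s),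
          addOrderOf (b i) * q ^ (s - 1) ∧
    ∏ s ∈ Finset.Icc 1 a, ∏ i ∈ Finset.Ioc (k (s + 1)) (k s),
        addOrderOf (b i) * q ^ (s - 1)
      = q ^ (∑ ℓ ∈ Finset.Icc 2 a, k ℓ) * ∏ i ∈ Finset.Icc 1 (k 1), addOrderOf (b i) :=
  ⟨ncard_lambdaD_box_le, prod_addOrderOf_mul_pow_eq hk hka⟩

/-- The number of points of the Construction D set in `[0, q^a)ⁿ` is at
most `∏_{s=1}^{a} ∏_{i=k_{s+1}+1}^{k_s} O(b_i)·q^{s-1}`, and this product equals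
`q^{k_2 + ⋯ + k_a} · ∏_{i=1}^{k_1} O(b_i)`. -/
theorem card_lambdaD_box_le
    (q a n : ℕ) (hq : 2 ≤ q) (ha : 1 ≤ a)
    (k : ℕ → ℕ) (hk : ∀ s, 1 ≤ s → s ≤ a → k (s + 1) ≤ k s) (hka : k (a + 1) = 0)
    (b : ℕ → Fin n → ZMod q) :
    Set.ncard (lambdaD q a n k b ∩ {v : Fin n → ℤ | ∀ t, 0 ≤ v t ∧ v t < (q : ℤ) ^ a})
      ≤ ∏ s ∈ Finset.Icc 1 a, ∏ i ∈ Finset.Ioc (k (s + 1)) (k s),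
          addOrderOf (b i) * q ^ (s - 1) ∧
    ∏ s ∈ Finset.Icc 1 a, ∏ i ∈ Finset.Ioc (k (s + 1)) (k s),
        addOrderOf (b i) * q ^ (s - 1)
      = q ^ (∑ ℓ ∈ Finset.Icc 2 a, k ℓ) * ∏ i ∈ Finset.Icc 1 (k 1), addOrderOf (b i) :=
  card_lambdaD_box_le_general q a n k hk hka b
end
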